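/- arXiv:2409.16240 — 9 statements merged into one kernel-verified Lean document; each statement's English description precedes it below -/
import Mathlib

section
/- Let (S,⊕) be an Abelian semigroup, and let A and B be disjoint subsemigroups of S such that core(A) ≠ ∅ and core(B) ≠ ∅. Then there exists a homomorphism F : S → ℝ (i.e., F(s₁ ⊕ s₂) = F(s₁) + F(s₂) for all s₁, s₂ ∈ S) such that F(a) ≥ 0 ≥ F(b) for all a ∈ A and b ∈ B, and F(a) > 0 > F(b) for all a ∈ core(A) and b ∈ core(B). -/
/-- `nmul n a = (n+1)·a`, i.e. the sum `a + ⋯ + a` with `n+1` terms in an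
additive semigroup; thus every positive number of summands is represented. -/
def nmul {S : Type*} [AddSemigroup S] : ℕ → S → S
  | 0, a => a
  | n + 1, a => nmul n a + a

/-- The (algebraic) core of a subsemigroup `A` of an Abelian semigroup `S`:
all `a ∈ A` such that for every `s ∈ S` some positive multiple of `a` plus `s`
lies in `A`. -/
def semigroupCore {S : Type*} [AddCommSemigroup S] (A : Set S) : Set S :=
  {a ∈ A | ∀ s : S, ∃ n : ℕ, nmul n a + s ∈ A}

namespace SemigroupSep

variable {S : Type*} [AddCommSemigroup S]

lemma nmul_succ (n : ℕ) (a : S) : nmul (n+1) a = nmul n a + a := rfl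

lemma nmul_add_dist (n : ℕ) (x y : S) : nmul n (x + y) = nmul n x + nmul n y := by
  induction n with
  | zero => rfl
  | succ n ih =>
    show nmul n (x+y) + (x+y) = (nmul n x + x) + (nmul n y + y)
    rw [ih]; ac_rfl

lemma nmul_mem {A : Set S} (hA : ∀ a ∈ A, ∀ b ∈ A, a + b ∈ A) {a : S} (ha : a ∈ A) (n : ℕ) :
    nmul n a ∈ A := by
  induction n with
  | zero => exact ha
  | succ n ih => exact hA _ ih _ ha

lemma core_subset {A : Set S} : semigroupCore A ⊆ A := fun _ h => h.1

lemma core_add {A : Set S} (hA : ∀ a ∈ A, ∀ b ∈ A, a + b ∈ A) {a c : S}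
    (ha : a ∈ A) (hc : c ∈ semigroupCore A) : a + c ∈ semigroupCore A := by
  refine ⟨hA _ ha _ hc.1, fun s => ?_⟩
  obtain ⟨n, hn⟩ := hc.2 s
  refine ⟨n, ?_⟩
  rw [nmul_add_dist]
  have : nmul n a + nmul n c + s = nmul n a + (nmul n c + s) := by ac_rfl
  rw [this]
  exact hA _ (nmul_mem hA ha n) _ hn

lemma core_nmul {A : Set S} (hA : ∀ a ∈ A, ∀ b ∈ A, a + b ∈ A) {c : S}
    (hc : c ∈ semigroupCore A) (n : ℕ) : nmul n c ∈ semigroupCore A := by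
  induction n with
  | zero => exact hc
  | succ n ih => exact core_add hA ih.1 hc

/-- iterate an absorption equation -/
lemma nmul_eq_iterate {c x u : S} (h : c + u = x + u) (n : ℕ) :
    nmul n c + u = nmul n x + u := by
  induction n with
  | zero => exact h
  | succ n ih =>
    have h1 : nmul n c + c + u = c + (nmul n c + u) := by ac_rfl
    have h2 : c + (nmul n x + u) = nmul n x + (c + u) := by ac_rfl
    have h3 : nmul n x + (x + u) = nmul n x + x + u := by ac_rfl
    rw [nmul_succ, nmul_succ, h1, ih, h2, h, h3]

lemma nmul_eq_iterate0 {c u : S} (h : c + u = u) (n : ℕ) :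
    nmul n c + u = u := by
  induction n with
  | zero => exact h
  | succ n ih =>
    have h1 : nmul n c + c + u = nmul n c + (c + u) := by ac_rfl
    rw [nmul_succ, h1, h, ih]

/-- Key lemma: a core element of `A` cannot be identified with an element of `B`
after adding `u`. -/
lemma key_lemma {A B : Set S}
    (hB : ∀ a ∈ B, ∀ b ∈ B, a + b ∈ B) (hAB : Disjoint A B)
    (hcB : (semigroupCore B).Nonempty) {c x u : S}
    (hc : c ∈ semigroupCore A) (hx : x ∈ B) (h : c + u = x + u) : False := by
  obtain ⟨b₀, hb₀⟩ := hcB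
  obtain ⟨m, hm⟩ := hb₀.2 u
  obtain ⟨j, hj⟩ := hc.2 (nmul m b₀ + u)
  have e1 : nmul j c + (nmul m b₀ + u) = nmul m b₀ + (nmul j c + u) := by ac_rfl
  have e2 : nmul m b₀ + (nmul j x + u) = nmul j x + (nmul m b₀ + u) := by ac_rfl
  have hBmem : nmul j c + (nmul m b₀ + u) ∈ B := by
    rw [e1, nmul_eq_iterate h, e2]
    exact hB _ (nmul_mem hB hx j) _ hm
  exact Set.disjoint_left.mp hAB hj hBmem

lemma key_lemma0 {A B : Set S}
    (hB : ∀ a ∈ B, ∀ b ∈ B, a + b ∈ B) (hAB : Disjoint A B)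
    (hcB : (semigroupCore B).Nonempty) {c u : S}
    (hc : c ∈ semigroupCore A) (h : c + u = u) : False := by
  obtain ⟨b₀, hb₀⟩ := hcB
  obtain ⟨m, hm⟩ := hb₀.2 u
  obtain ⟨j, hj⟩ := hc.2 (nmul m b₀ + u)
  have e1 : nmul j c + (nmul m b₀ + u) = nmul m b₀ + (nmul j c + u) := by ac_rfl
  rw [e1, nmul_eq_iterate0 h] at hj
  exact Set.disjoint_left.mp hAB hj hm


set_option linter.unusedSectionVars false
set_option linter.unusedVariables false




def grel (p q : S × S) : Prop := ∃ u, p.1 + q.2 + u = q.1 + p.2 + u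

lemma grel_refl (p : S × S) : grel p p := ⟨p.1, rfl⟩

lemma grel_symm {p q : S × S} : grel p q → grel q p := fun ⟨u, h⟩ => ⟨u, h.symm⟩

lemma grel_trans {p q r : S × S} : grel p q → grel q r → grel p r := by
  rintro ⟨u, h1⟩ ⟨v, h2⟩
  refine ⟨q.1 + q.2 + u + v, ?_⟩
  have e1 : p.1 + r.2 + (q.1 + q.2 + u + v) = (q.1 + r.2 + v) + (p.1 + q.2 + u) := by ac_rfl
  have e2 : (r.1 + q.2 + v) + (q.1 + p.2 + u) = r.1 + p.2 + (q.1 + q.2 + u + v) := by ac_rfl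
  rw [e1, h1, h2, ← e2]

def grelSetoid (S : Type*) [AddCommSemigroup S] : Setoid (S × S) :=
  ⟨grel, grel_refl, grel_symm, grel_trans⟩

def UU (S : Type*) [AddCommSemigroup S] := Quotient (grelSetoid S)

def UU.mk (p : S × S) : UU S := Quotient.mk (grelSetoid S) p

lemma UU.exact {p q : S × S} (h : UU.mk p = UU.mk q) : grel p q :=
  Quotient.exact h

lemma UU.sound {p q : S × S} (h : grel p q) : UU.mk p = UU.mk q :=
  Quotient.sound h

lemma UU.ind {motive : UU S → Prop} (h : ∀ p, motive (UU.mk p)) : ∀ x, motive x :=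
  Quotient.ind h

instance : Add (UU S) :=
  ⟨fun x y => Quotient.liftOn₂ x y (fun p q => UU.mk (p.1 + q.1, p.2 + q.2))
    (by
      rintro p q p' q' ⟨u, hu⟩ ⟨v, hv⟩
      refine UU.sound ⟨u + v, ?_⟩
      dsimp only
      have e1 : p.1 + q.1 + (p'.2 + q'.2) + (u + v) =
          (p.1 + p'.2 + u) + (q.1 + q'.2 + v) := by ac_rfl
      have e2 : (p'.1 + p.2 + u) + (q'.1 + q.2 + v) =
          p'.1 + q'.1 + (p.2 + q.2) + (u + v) := by ac_rfl
      rw [e1, hu, hv, e2])⟩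

lemma UU.add_mk (p q : S × S) : UU.mk p + UU.mk q = UU.mk (p.1 + q.1, p.2 + q.2) := rfl

variable [Inhabited S]

instance : Zero (UU S) := ⟨UU.mk (default, default)⟩

lemma UU.zero_def : (0 : UU S) = UU.mk (default, default) := rfl

instance : Neg (UU S) :=
  ⟨fun x => Quotient.liftOn x (fun p => UU.mk (p.2, p.1))
    (by
      rintro p q ⟨u, hu⟩
      refine UU.sound ⟨u, ?_⟩
      dsimp only
      rw [show p.2 + q.1 + u = q.1 + p.2 + u by ac_rfl, ← hu]
      ac_rfl)⟩

lemma UU.neg_mk (p : S × S) : -(UU.mk p) = UU.mk (p.2, p.1) := rfl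

noncomputable instance : AddCommGroup (UU S) where
  add_assoc x y z := by
    induction x using UU.ind; induction y using UU.ind; induction z using UU.ind
    rw [UU.add_mk, UU.add_mk, UU.add_mk, UU.add_mk]
    exact UU.sound ⟨default, by dsimp only; ac_rfl⟩
  zero_add x := by
    induction x using UU.ind
    rw [UU.zero_def, UU.add_mk]
    exact UU.sound ⟨default, by dsimp only; ac_rfl⟩
  add_zero x := by
    induction x using UU.ind
    rw [UU.zero_def, UU.add_mk]
    exact UU.sound ⟨default, by dsimp only; ac_rfl⟩
  add_comm x y := by
    induction x using UU.ind; induction y using UU.ind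
    rw [UU.add_mk, UU.add_mk]
    exact UU.sound ⟨default, by dsimp only; ac_rfl⟩
  neg_add_cancel x := by
    induction x using UU.ind
    rw [UU.neg_mk, UU.add_mk, UU.zero_def]
    exact UU.sound ⟨default, by dsimp only; ac_rfl⟩
  nsmul := nsmulRec
  zsmul := zsmulRec

def phi (s : S) : UU S := UU.mk (s + s, s)

lemma phi_add (s t : S) : phi (s + t) = phi s + phi t := by
  rw [phi, phi, phi, UU.add_mk]
  exact UU.sound ⟨default, by dsimp only; ac_rfl⟩

lemma phi_eq {z w : S} (h : (phi z : UU S) = phi w) : ∃ u, z + u = w + u := by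
  obtain ⟨u, hu⟩ := UU.exact h
  dsimp only at hu
  refine ⟨z + w + u, ?_⟩
  have e1 : z + (z + w + u) = z + z + w + u := by ac_rfl
  have e2 : w + w + z + u = w + (z + w + u) := by ac_rfl
  rw [e1, hu, e2]

lemma phi_eq_zero {z : S} (h : (phi z : UU S) = 0) : ∃ u, z + u = u := by
  obtain ⟨u, hu⟩ := UU.exact h
  dsimp only at hu
  refine ⟨z + default + u, ?_⟩
  have e1 : z + (z + default + u) = z + z + default + u := by ac_rfl
  have e2 : default + z + u = z + default + u := by ac_rfl
  rw [e1, hu, e2]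

noncomputable def Phi : (S →₀ ℤ) →+ UU S :=
  Finsupp.liftAddHom fun s => (zmultiplesHom (UU S)) (phi s)

lemma Phi_single (s : S) (k : ℤ) : Phi (Finsupp.single s k) = k • phi s := by
  rw [Phi, Finsupp.liftAddHom_apply_single]
  rfl

lemma phi_nmul (n : ℕ) (c : S) : (phi (nmul n c) : UU S) = ((n : ℤ) + 1) • phi c := by
  induction n with
  | zero => simp [nmul]
  | succ n ih =>
    have h2 : ((n+1 : ℕ) : ℤ) + 1 = ((n:ℤ) + 1) + 1 := by push_cast; ring
    rw [show nmul (n+1) c = nmul n c + c from rfl, phi_add, ih, h2, add_smul, one_smul]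
    rw [add_smul, add_smul, one_smul]


/-- canonical generator -/
noncomputable def el (s : S) : S →₀ ℤ := Finsupp.single s 1

def RelSet : Set (S →₀ ℤ) := {x | ∃ s t : S, x = el (s+t) - el s - el t}

noncomputable def GR : AddSubgroup (S →₀ ℤ) := AddSubgroup.closure (RelSet (S := S))

noncomputable def CC (A B : Set S) : AddSubmonoid (S →₀ ℤ) :=
  AddSubmonoid.closure ((el '' A) ∪ ((fun b => -el b) '' B) ∪ (GR (S := S) : Set (S →₀ ℤ)))

lemma rel_mem (s t : S) : el (s+t) - el s - el t ∈ GR (S := S) :=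
  AddSubgroup.subset_closure ⟨s, t, rfl⟩

lemma fold_mem (s t : S) : el s + el t - el (s+t) ∈ GR (S := S) := by
  have := (GR (S := S)).neg_mem (rel_mem s t)
  convert this using 1
  abel

lemma nmul_el_mem (n : ℕ) (c : S) : el (nmul n c) - ((n:ℤ)+1) • el c ∈ GR (S := S) := by
  induction n with
  | zero => simpa [nmul] using (GR (S := S)).zero_mem
  | succ n ih =>
    have h1 := rel_mem (nmul n c) c
    have h2 := (GR (S := S)).add_mem h1 ih
    convert h2 using 1
    push_cast
    rw [show nmul (n+1) c = nmul n c + c from rfl]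
    module

lemma GR_subset_CC {A B : Set S} : (GR (S := S) : Set (S →₀ ℤ)) ⊆ CC A B :=
  fun x hx => AddSubmonoid.subset_closure (Or.inr hx)

lemma elA_mem_CC {A B : Set S} {a : S} (ha : a ∈ A) : el a ∈ CC A B :=
  AddSubmonoid.subset_closure (Or.inl (Or.inl ⟨a, ha, rfl⟩))

lemma elB_mem_CC {A B : Set S} {b : S} (hb : b ∈ B) : -el b ∈ CC A B :=
  AddSubmonoid.subset_closure (Or.inl (Or.inr ⟨b, hb, rfl⟩))

/-- the decomposition monoid -/
noncomputable def DD (A B : Set S) (hA : ∀ a ∈ A, ∀ b ∈ A, a + b ∈ A)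
    (hB : ∀ a ∈ B, ∀ b ∈ B, a + b ∈ B) : AddSubmonoid (S →₀ ℤ) where
  carrier := {x | ∃ d ∈ GR (S := S), x = d ∨ (∃ a ∈ A, x = el a + d) ∨ (∃ b ∈ B, x = -el b + d)
      ∨ (∃ a ∈ A, ∃ b ∈ B, x = el a - el b + d)}
  zero_mem' := ⟨0, (GR (S := S)).zero_mem, Or.inl rfl⟩
  add_mem' := by
    rintro x y ⟨d, hd, hx⟩ ⟨d', hd', hy⟩
    rcases hx with rfl | ⟨a, ha, rfl⟩ | ⟨b, hb, rfl⟩ | ⟨a, ha, b, hb, rfl⟩ <;>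
      rcases hy with rfl | ⟨a', ha', rfl⟩ | ⟨b', hb', rfl⟩ | ⟨a', ha', b', hb', rfl⟩
    · exact ⟨x + y, add_mem hd hd', Or.inl rfl⟩
    · exact ⟨x + d', add_mem hd hd', Or.inr (Or.inl ⟨a', ha', by abel⟩)⟩
    · exact ⟨x + d', add_mem hd hd', Or.inr (Or.inr (Or.inl ⟨b', hb', by abel⟩))⟩
    · exact ⟨x + d', add_mem hd hd', Or.inr (Or.inr (Or.inr ⟨a', ha', b', hb', by abel⟩))⟩
    · exact ⟨d + y, add_mem hd hd', Or.inr (Or.inl ⟨a, ha, by abel⟩)⟩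
    · exact ⟨el a + el a' - el (a+a') + d + d',
        add_mem (add_mem (fold_mem a a') hd) hd',
        Or.inr (Or.inl ⟨a + a', hA _ ha _ ha', by abel⟩)⟩
    · exact ⟨d + d', add_mem hd hd',
        Or.inr (Or.inr (Or.inr ⟨a, ha, b', hb', by abel⟩))⟩
    · exact ⟨el a + el a' - el (a+a') + d + d',
        add_mem (add_mem (fold_mem a a') hd) hd',
        Or.inr (Or.inr (Or.inr ⟨a + a', hA _ ha _ ha', b', hb', by abel⟩))⟩
    · exact ⟨d + y, add_mem hd hd', Or.inr (Or.inr (Or.inl ⟨b, hb, by abel⟩))⟩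
    · exact ⟨d + d', add_mem hd hd',
        Or.inr (Or.inr (Or.inr ⟨a', ha', b, hb, by abel⟩))⟩
    · exact ⟨el (b+b') - el b - el b' + d + d',
        add_mem (add_mem (rel_mem b b') hd) hd',
        Or.inr (Or.inr (Or.inl ⟨b + b', hB _ hb _ hb', by abel⟩))⟩
    · exact ⟨el (b+b') - el b - el b' + d + d',
        add_mem (add_mem (rel_mem b b') hd) hd',
        Or.inr (Or.inr (Or.inr ⟨a', ha', b + b', hB _ hb _ hb', by abel⟩))⟩
    · exact ⟨d + y, add_mem hd hd',
        Or.inr (Or.inr (Or.inr ⟨a, ha, b, hb, by abel⟩))⟩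
    · exact ⟨el a + el a' - el (a+a') + d + d',
        add_mem (add_mem (fold_mem a a') hd) hd',
        Or.inr (Or.inr (Or.inr ⟨a + a', hA _ ha _ ha', b, hb, by abel⟩))⟩
    · exact ⟨el (b+b') - el b - el b' + d + d',
        add_mem (add_mem (rel_mem b b') hd) hd',
        Or.inr (Or.inr (Or.inr ⟨a, ha, b + b', hB _ hb _ hb', by abel⟩))⟩
    · exact ⟨el a + el a' - el (a+a') + (el (b+b') - el b - el b') + d + d',
        add_mem (add_mem (add_mem (fold_mem a a') (rel_mem b b')) hd) hd',
        Or.inr (Or.inr (Or.inr ⟨a + a', hA _ ha _ ha', b + b', hB _ hb _ hb', by abel⟩))⟩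

lemma CC_le_DD {A B : Set S} (hA : ∀ a ∈ A, ∀ b ∈ A, a + b ∈ A)
    (hB : ∀ a ∈ B, ∀ b ∈ B, a + b ∈ B) : CC A B ≤ DD A B hA hB := by
  rw [CC]
  apply AddSubmonoid.closure_le.mpr
  rintro x ((⟨a, ha, rfl⟩ | ⟨b, hb, rfl⟩) | hx)
  · exact ⟨0, (GR (S := S)).zero_mem, Or.inr (Or.inl ⟨a, ha, by abel⟩)⟩
  · exact ⟨0, (GR (S := S)).zero_mem, Or.inr (Or.inr (Or.inl ⟨b, hb, by abel⟩))⟩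
  · exact ⟨x, hx, Or.inl rfl⟩

lemma Phi_el (s : S) : Phi (el s) = phi s := by
  rw [el, Phi_single, one_smul]

lemma Phi_GR {d : S →₀ ℤ} (hd : d ∈ GR (S := S)) : Phi d = 0 := by
  have hle : GR (S := S) ≤ (Phi (S := S)).ker := by
    rw [GR]
    apply (AddSubgroup.closure_le _).mpr
    rintro x ⟨s, t, rfl⟩
    simp only [SetLike.mem_coe, AddMonoidHom.mem_ker, map_sub, Phi_el, phi_add]
    abel
  exact AddMonoidHom.mem_ker.mp (hle hd)

lemma nonneg_key {A B : Set S} (hA : ∀ a ∈ A, ∀ b ∈ A, a + b ∈ A)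
    (hB : ∀ a ∈ B, ∀ b ∈ B, a + b ∈ B) (hAB : Disjoint A B)
    {a₀ : S} (ha₀ : a₀ ∈ semigroupCore A) (hcB : (semigroupCore B).Nonempty) :
    ∀ k : ℤ, k • el a₀ ∈ CC A B → 0 ≤ k := by
  intro k hk
  by_contra hneg
  have hklt : k < 0 := lt_of_not_ge hneg
  obtain ⟨m, hm⟩ : ∃ m : ℕ, k = -((m:ℤ)+1) := ⟨(-k-1).toNat, by omega⟩
  letI : Inhabited S := ⟨a₀⟩
  obtain ⟨d, hd, hcase⟩ := CC_le_DD hA hB hk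
  have hL : Phi (k • el a₀) = k • phi a₀ := by rw [map_zsmul, Phi_el]
  rcases hcase with hceq | ⟨a, ha, hceq⟩ | ⟨b, hb, hceq⟩ | ⟨a, ha, b, hb, hceq⟩
  · have h0 : k • phi a₀ = 0 := by rw [← hL, hceq, Phi_GR hd]
    have : phi (nmul m a₀) = (0 : UU S) := by
      rw [phi_nmul, show ((m:ℤ)+1) = -k by rw [hm]; ring, neg_smul, h0, neg_zero]
    obtain ⟨u, hu⟩ := phi_eq_zero this
    exact key_lemma0 hB hAB hcB (core_nmul hA ha₀ m) hu
  · have h0 : k • phi a₀ = phi a := by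
      rw [← hL, hceq, map_add, Phi_el, Phi_GR hd, add_zero]
    have : phi (a + nmul m a₀) = (0 : UU S) := by
      rw [phi_add, phi_nmul, ← h0, show ((m:ℤ)+1) = -k by rw [hm]; ring, neg_smul,
        add_neg_cancel]
    obtain ⟨u, hu⟩ := phi_eq_zero this
    exact key_lemma0 hB hAB hcB (core_add hA ha (core_nmul hA ha₀ m)) hu
  · have h0 : k • phi a₀ = -phi b := by
      rw [← hL, hceq, map_add, map_neg, Phi_el, Phi_GR hd, add_zero]
    have : phi (nmul m a₀) = phi b := by
      rw [phi_nmul, show ((m:ℤ)+1) = -k by rw [hm]; ring, neg_smul, h0, neg_neg]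
    obtain ⟨u, hu⟩ := phi_eq this
    exact key_lemma hB hAB hcB (core_nmul hA ha₀ m) hb hu
  · have h0 : k • phi a₀ = phi a - phi b := by
      rw [← hL, hceq, map_add, map_sub, Phi_el, Phi_el, Phi_GR hd, add_zero]
    have : phi (a + nmul m a₀) = phi b := by
      rw [phi_add, phi_nmul, show ((m:ℤ)+1) = -k by rw [hm]; ring, neg_smul, h0]
      abel
    obtain ⟨u, hu⟩ := phi_eq this
    exact key_lemma hB hAB hcB (core_add hA ha (core_nmul hA ha₀ m)) hb hu

lemma density_e1 {A B : Set S} {a₀ : S} (ha₀ : a₀ ∈ semigroupCore A) (s : S) :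
    ∃ k : ℕ, (k:ℤ) • el a₀ + el s ∈ CC A B := by
  obtain ⟨n, hn⟩ := ha₀.2 s
  refine ⟨n+1, ?_⟩
  have h1 := rel_mem (nmul n a₀) s
  have h2 := nmul_el_mem n a₀
  have hmem := (CC A B).add_mem (elA_mem_CC hn)
    (GR_subset_CC ((GR (S := S)).neg_mem (add_mem h1 h2)))
  convert hmem using 1
  push_cast
  module

lemma density_e2 {A B : Set S} {a₀ : S} (ha₀ : a₀ ∈ semigroupCore A)
    (hcB : (semigroupCore B).Nonempty) (s : S) :
    ∃ k : ℕ, (k:ℤ) • el a₀ - el s ∈ CC A B := by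
  obtain ⟨b₀, hb₀⟩ := hcB
  obtain ⟨m, hm⟩ := hb₀.2 s
  obtain ⟨n, hn⟩ := ha₀.2 b₀
  refine ⟨(m+1)*(n+1), ?_⟩
  have hP : el (nmul n a₀ + b₀) - ((n:ℤ)+1) • el a₀ - el b₀ ∈ GR (S := S) := by
    have := add_mem (rel_mem (nmul n a₀) b₀) (nmul_el_mem n a₀)
    convert this using 1
    abel
  have hQ : el (nmul m b₀ + s) - ((m:ℤ)+1) • el b₀ - el s ∈ GR (S := S) := by
    have := add_mem (rel_mem (nmul m b₀) s) (nmul_el_mem m b₀)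
    convert this using 1
    abel
  have hd := add_mem hQ ((GR (S := S)).neg_mem (zsmul_mem hP ((m:ℤ)+1)))
  have hmem := (CC A B).add_mem ((CC A B).add_mem
    ((CC A B).nsmul_mem (elA_mem_CC hn) (m+1)) (elB_mem_CC hm)) (GR_subset_CC hd)
  convert hmem using 1
  push_cast
  module

lemma density {A B : Set S} {a₀ : S} (ha₀ : a₀ ∈ semigroupCore A)
    (hcB : (semigroupCore B).Nonempty) :
    ∀ x : S →₀ ℤ, ∃ k : ℕ, (k:ℤ) • el a₀ + x ∈ CC A B := by
  intro x
  induction x using Finsupp.induction with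
  | zero => exact ⟨0, by simpa using (CC A B).zero_mem⟩
  | single_add s b f hs hb ih =>
    obtain ⟨k₁, h1⟩ := ih
    have hsingle : ∃ k : ℕ, (k:ℤ) • el a₀ + Finsupp.single s b ∈ CC A B := by
      rcases le_or_gt 0 b with hb0 | hb0
      · obtain ⟨j, rfl⟩ : ∃ j : ℕ, b = (j:ℤ) := ⟨b.toNat, (Int.toNat_of_nonneg hb0).symm⟩
        obtain ⟨k₂, h2⟩ := density_e1 (B := B) ha₀ s
        refine ⟨j * k₂, ?_⟩
        have hmem := (CC A B).nsmul_mem h2 j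
        convert hmem using 1
        have hsb : (Finsupp.single s ((j:ℤ)) : S →₀ ℤ) = (j:ℤ) • el s := by
          rw [el, Finsupp.smul_single, smul_eq_mul, mul_one]
        rw [hsb]
        push_cast
        module
      · obtain ⟨j, rfl⟩ : ∃ j : ℕ, b = -(j:ℤ) := ⟨(-b).toNat, by omega⟩
        obtain ⟨k₂, h2⟩ := density_e2 (B := B) ha₀ hcB s
        refine ⟨j * k₂, ?_⟩
        have hmem := (CC A B).nsmul_mem h2 j
        convert hmem using 1
        have hsb : (Finsupp.single s (-(j:ℤ)) : S →₀ ℤ) = -((j:ℤ) • el s) := by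
          rw [el, Finsupp.smul_single, smul_eq_mul, mul_one, Finsupp.single_neg]
        rw [hsb]
        push_cast
        module
    obtain ⟨k₂, h2⟩ := hsingle
    refine ⟨k₂ + k₁, ?_⟩
    have hmem := (CC A B).add_mem h2 h1
    convert hmem using 1
    push_cast
    module


lemma exists_extension {E : Type*} [AddCommGroup E] (C : AddSubmonoid E) (x₀ : E)
    (hx₀ : ∀ k : ℤ, k • x₀ ∈ C → 0 ≤ k)
    (hdense : ∀ x : E, ∃ k : ℕ, (k:ℤ) • x₀ + x ∈ C) :
    ∃ g : E → ℝ, (∀ x y, g (x + y) = g x + g y) ∧ (∀ x ∈ C, 0 ≤ g x) ∧ g x₀ = 1 := by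
  classical
  have hCz : ∀ (l : ℤ), 0 < l → ∀ v ∈ C, l • v ∈ C := by
    intro l hl v hv
    lift l to ℕ using hl.le
    rw [natCast_zsmul]
    exact AddSubmonoid.nsmul_mem C hv l
  set P : Set (AddSubgroup (E × ℝ)) :=
    {Γ | AddSubgroup.zmultiples (x₀, (1:ℝ)) ≤ Γ ∧ ∀ z ∈ Γ, z.1 ∈ C → 0 ≤ z.2} with hP
  have hΓ₀ : AddSubgroup.zmultiples (x₀, (1:ℝ)) ∈ P := by
    refine ⟨le_refl _, ?_⟩
    rintro z hz hzC
    obtain ⟨k, rfl⟩ := AddSubgroup.mem_zmultiples_iff.mp hz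
    have h1 : (k • (x₀, (1:ℝ))).1 = k • x₀ := rfl
    have h2 : (k • (x₀, (1:ℝ))).2 = (k:ℝ) := by simp
    rw [h2]
    rw [h1] at hzC
    exact_mod_cast hx₀ k hzC
  have hchain : ∀ c ⊆ P, IsChain (· ≤ ·) c → ∀ y ∈ c, ∃ ub ∈ P, ∀ z ∈ c, z ≤ ub := by
    intro c hcP hch Γ₁ hΓ₁
    refine ⟨sSup c, ⟨?_, ?_⟩, fun Γ₂ h2 => le_sSup h2⟩
    · exact le_trans (hcP hΓ₁).1 (le_sSup hΓ₁)
    · intro z hz hzC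
      obtain ⟨Γ₂, h2c, h2⟩ :=
        (AddSubgroup.mem_sSup_of_directedOn ⟨Γ₁, hΓ₁⟩ hch.directedOn).mp hz
      exact (hcP h2c).2 z h2 hzC
  obtain ⟨Γ, hle0, hΓmax⟩ := zorn_le_nonempty₀ P hchain _ hΓ₀
  have hΓP : Γ ∈ P := hΓmax.1
  have hmemΓ0 : ∀ m : ℕ, ((m:ℤ) • x₀, (m:ℝ)) ∈ Γ := by
    intro m
    have h : (m:ℤ) • (x₀, (1:ℝ)) ∈ AddSubgroup.zmultiples (x₀, (1:ℝ)) :=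
      AddSubgroup.zsmul_mem_zmultiples _ _
    have he : (m:ℤ) • (x₀, (1:ℝ)) = ((m:ℤ) • x₀, (m:ℝ)) := by
      ext <;> simp
    rw [he] at h
    exact hle0 h
  -- totality of the maximal graph
  have htot : ∀ x : E, ∃ r : ℝ, (x, r) ∈ Γ := by
    intro x
    by_contra hnone
    push_neg at hnone
    set L : Set ℝ :=
      {q | ∃ (k : ℤ) (z : E × ℝ), 0 < k ∧ z ∈ Γ ∧ z.1 + k • x ∈ C ∧ q = -z.2 / k} with hLdef
    have hLne : L.Nonempty := by
      obtain ⟨k₀, hk₀⟩ := hdense x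
      refine ⟨-((k₀:ℝ)) / ((1:ℤ):ℝ), 1, ((k₀:ℤ) • x₀, (k₀:ℝ)), one_pos, hmemΓ0 k₀, ?_, rfl⟩
      simpa using hk₀
    have hub : ∀ (z w : E × ℝ) (k l : ℤ), z ∈ Γ → w ∈ Γ → 0 < k → 0 < l →
        z.1 + k • x ∈ C → w.1 - l • x ∈ C → -z.2 / (k:ℝ) ≤ w.2 / (l:ℝ) := by
      intro z w k l hzΓ hwΓ hk hl hzC hwC
      have hsum : l • (z.1 + k • x) + k • (w.1 - l • x) = (l • z + k • w).1 := by
        show _ = l • z.1 + k • w.1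
        rw [smul_add, smul_sub, smul_smul, smul_smul, mul_comm]
        abel
      have hmemC : (l • z + k • w).1 ∈ C := by
        rw [← hsum]
        exact C.add_mem (hCz l hl _ hzC) (hCz k hk _ hwC)
      have hmemΓ : l • z + k • w ∈ Γ :=
        Γ.add_mem (Γ.zsmul_mem hzΓ l) (Γ.zsmul_mem hwΓ k)
      have h0 := hΓP.2 _ hmemΓ hmemC
      have h2 : (l • z + k • w).2 = (l:ℝ) * z.2 + (k:ℝ) * w.2 := by
        simp [Prod.snd_add, smul_eq_mul]
      rw [h2] at h0
      have hkR : (0:ℝ) < (k:ℝ) := by exact_mod_cast hk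
      have hlR : (0:ℝ) < (l:ℝ) := by exact_mod_cast hl
      rw [div_le_div_iff₀ hkR hlR]
      nlinarith
    have hLbdd : BddAbove L := by
      obtain ⟨k₁, hk₁⟩ := hdense (-x)
      refine ⟨(k₁:ℝ) / ((1:ℤ):ℝ), ?_⟩
      rintro q ⟨k, z, hk, hzΓ, hzC, rfl⟩
      refine hub z ((k₁:ℤ) • x₀, (k₁:ℝ)) k 1 hzΓ (hmemΓ0 k₁) hk one_pos hzC ?_
      simpa [sub_eq_add_neg] using hk₁
    set c := sSup L with hcdef
    have hc_low : ∀ z ∈ Γ, ∀ k : ℤ, 0 < k → z.1 + k • x ∈ C → -z.2 / (k:ℝ) ≤ c := by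
      intro z hz k hk hzC
      exact le_csSup hLbdd ⟨k, z, hk, hz, hzC, rfl⟩
    have hc_high : ∀ w ∈ Γ, ∀ l : ℤ, 0 < l → w.1 - l • x ∈ C → c ≤ w.2 / (l:ℝ) := by
      intro w hw l hl hwC
      refine csSup_le hLne ?_
      rintro q ⟨k, z, hk, hzΓ, hzC, rfl⟩
      exact hub z w k l hzΓ hw hk hl hzC hwC
    -- the extended graph
    set Γ' := Γ ⊔ AddSubgroup.zmultiples (x, c) with hΓ'def
    have hΓ'P : Γ' ∈ P := by
      refine ⟨le_trans hle0 le_sup_left, ?_⟩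
      intro z hz hzC
      obtain ⟨g, hg, h, hh, rfl⟩ := AddSubgroup.mem_sup.mp hz
      obtain ⟨k, rfl⟩ := AddSubgroup.mem_zmultiples_iff.mp hh
      have hz1 : (g + k • (x, c)).1 = g.1 + k • x := by simp
      have hz2 : (g + k • (x, c)).2 = g.2 + (k:ℝ) * c := by
        simp [smul_eq_mul]
      rw [hz2]
      rw [hz1] at hzC
      rcases lt_trichotomy k 0 with hk | rfl | hk
      · have hl : (0:ℤ) < -k := by omega
        have hwC : g.1 - (-k) • x ∈ C := by
          simpa [sub_eq_add_neg] using hzC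
        have := hc_high g hg (-k) hl hwC
        have hlR : (0:ℝ) < ((-k:ℤ):ℝ) := by exact_mod_cast hl
        rw [le_div_iff₀ hlR] at this
        push_cast at this ⊢
        nlinarith
      · have : g.1 ∈ C := by simpa using hzC
        have := hΓP.2 g hg this
        simpa using this
      · have := hc_low g hg k hk hzC
        have hkR : (0:ℝ) < ((k:ℤ):ℝ) := by exact_mod_cast hk
        rw [div_le_iff₀ hkR] at this
        push_cast at this ⊢
        nlinarith
    have hle' : Γ' ≤ Γ := hΓmax.2 hΓ'P (le_sup_left)
    have : (x, c) ∈ Γ := hle' (le_sup_right (α := AddSubgroup (E × ℝ))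
      (AddSubgroup.mem_zmultiples _))
    exact hnone c this
  -- build the function
  have huniq : ∀ (x : E) (r r' : ℝ), (x, r) ∈ Γ → (x, r') ∈ Γ → r = r' := by
    intro x r r' h1 h2
    have hsub : ((0:E), r - r') ∈ Γ := by
      have := Γ.sub_mem h1 h2
      simpa using this
    have hsub' : ((0:E), r' - r) ∈ Γ := by
      have := Γ.sub_mem h2 h1
      simpa using this
    have p1 := hΓP.2 _ hsub (C.zero_mem)
    have p2 := hΓP.2 _ hsub' (C.zero_mem)
    simp only at p1 p2
    linarith
  choose g hg using htot
  refine ⟨g, ?_, ?_, ?_⟩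
  · intro x y
    have h1 : (x + y, g x + g y) ∈ Γ := by
      have := Γ.add_mem (hg x) (hg y)
      simpa using this
    exact huniq _ _ _ (hg (x + y)) h1
  · intro x hx
    exact hΓP.2 _ (hg x) hx
  · have h1 : (x₀, (1:ℝ)) ∈ Γ := hle0 (AddSubgroup.mem_zmultiples _)
    exact huniq _ _ _ (hg x₀) h1

end SemigroupSep

open SemigroupSep in
/-- Separation theorem for Abelian subsemigroups (Pálés, 1989). -/
theorem semigroup_separation {S : Type*} [AddCommSemigroup S] (A B : Set S)
    (hA : ∀ a ∈ A, ∀ b ∈ A, a + b ∈ A) (hB : ∀ a ∈ B, ∀ b ∈ B, a + b ∈ B)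
    (hAB : Disjoint A B)
    (hcA : (semigroupCore A).Nonempty) (hcB : (semigroupCore B).Nonempty) :
    ∃ F : S → ℝ, (∀ s₁ s₂ : S, F (s₁ + s₂) = F s₁ + F s₂) ∧
      (∀ a ∈ A, 0 ≤ F a) ∧ (∀ b ∈ B, F b ≤ 0) ∧
      (∀ a ∈ semigroupCore A, 0 < F a) ∧ (∀ b ∈ semigroupCore B, F b < 0) := by
  obtain ⟨a₀, ha₀⟩ := hcA
  obtain ⟨b₀, hb₀⟩ := hcB
  letI : Inhabited S := ⟨a₀⟩
  have hnn : ∀ k : ℤ, k • el a₀ ∈ CC A B → 0 ≤ k := nonneg_key hA hB hAB ha₀ ⟨b₀, hb₀⟩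
  have hden : ∀ x : S →₀ ℤ, ∃ k : ℕ, (k:ℤ) • el a₀ + x ∈ CC A B :=
    density ha₀ ⟨b₀, hb₀⟩
  obtain ⟨g, hgadd, hgC, hg1⟩ := exists_extension (CC A B) (el a₀) hnn hden
  have hg0 : g 0 = 0 := by
    have := hgadd 0 0
    simp only [add_zero] at this
    linarith
  have hgneg : ∀ x, g (-x) = -g x := by
    intro x
    have := hgadd x (-x)
    simp only [add_neg_cancel, hg0] at this
    linarith
  have hgGR : ∀ d ∈ GR (S := S), g d = 0 := by
    intro d hd
    have h1 : 0 ≤ g d := hgC d (GR_subset_CC hd)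
    have h2 : 0 ≤ g (-d) := hgC (-d) (GR_subset_CC ((GR (S := S)).neg_mem hd))
    rw [hgneg] at h2
    linarith
  set F : S → ℝ := fun s => g (el s) with hFdef
  have hFadd : ∀ s t : S, F (s + t) = F s + F t := by
    intro s t
    have key := hgadd (el s + el t) (el (s+t) - el s - el t)
    rw [show el s + el t + (el (s+t) - el s - el t) = el (s+t) by abel] at key
    show g (el (s+t)) = g (el s) + g (el t)
    rw [key, hgGR _ (rel_mem s t), add_zero, hgadd]
  have hFA : ∀ a ∈ A, 0 ≤ F a := fun a ha => hgC _ (elA_mem_CC ha)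
  have hFB : ∀ b ∈ B, F b ≤ 0 := by
    intro b hb
    have := hgC _ (elB_mem_CC (A := A) hb)
    rw [hgneg] at this
    linarith
  have hFa₀ : F a₀ = 1 := hg1
  have hFnmul : ∀ (n : ℕ) (s : S), F (nmul n s) = (n + 1 : ℝ) * F s := by
    intro n s
    induction n with
    | zero => show F s = _ * F s; norm_num
    | succ n ih =>
      rw [show nmul (n+1) s = nmul n s + s from rfl, hFadd, ih]
      push_cast
      ring
  have hFb₀ : F b₀ < 0 := by
    obtain ⟨n, hn⟩ := hb₀.2 a₀
    have h1 : F (nmul n b₀ + a₀) ≤ 0 := hFB _ hn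
    rw [hFadd, hFnmul, hFa₀] at h1
    nlinarith [Nat.cast_nonneg (α := ℝ) n]
  refine ⟨F, hFadd, hFA, hFB, ?_, ?_⟩
  · intro a ha
    obtain ⟨n, hn⟩ := ha.2 b₀
    have h1 : 0 ≤ F (nmul n a + b₀) := hFA _ hn
    rw [hFadd, hFnmul] at h1
    nlinarith [Nat.cast_nonneg (α := ℝ) n]
  · intro b hb
    obtain ⟨n, hn⟩ := hb.2 a₀
    have h1 : F (nmul n b + a₀) ≤ 0 := hFB _ hn
    rw [hFadd, hFnmul, hFa₀] at h1
    nlinarith [Nat.cast_nonneg (α := ℝ) n]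
end

section
/- Let X be a nonempty set, Θ a nondegenerate open interval of ℝ, and M : ⋃_{n≥1} Xⁿ → Θ a function that is symmetric, internal, and asymptotically idempotent. Let S(X) be the free Abelian semigroup generated by X, and μ : S(X) → Θ the induced map μ(x₁ ⊕ ⋯ ⊕ xₙ) := M_n(x₁,…,xₙ). For t ∈ Θ, set A_t := {s ∈ S(X) : μ(s) < t} and B_t := {s ∈ S(X) : μ(s) > t}. Then A_t and B_t are disjoint subsemigroups of S(X), and core(A_t) = A_t and core(B_t) = B_t. -/
open Filter Topology

/-- `ψ ∈ Ψ(X,Θ)`: for every `x ∈ X` there exist `t₊ < t₋` in `Θ` with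
`ψ x t₊ > 0 > ψ x t₋`. -/
def PsiClass {X : Type*} (Θ : Set ℝ) (ψ : X → ℝ → ℝ) : Prop :=
  ∀ x : X, ∃ tp ∈ Θ, ∃ tm ∈ Θ, tp < tm ∧ 0 < ψ x tp ∧ ψ x tm < 0

/-- `ϑ` is a generalized `ψ`-estimator on `n`-tuples: for every tuple `x`,
`ϑ x ∈ Θ` and `ϑ x` is a point of sign change (of decreasing type) of the map
`t ↦ ∑ i, ψ (x i) t` on `Θ`. -/
def IsThetaEst {X : Type*} (Θ : Set ℝ) (ψ : X → ℝ → ℝ) (n : ℕ)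
    (ϑ : (Fin n → X) → ℝ) : Prop :=
  ∀ x : Fin n → X, ϑ x ∈ Θ ∧
    (∀ t ∈ Θ, t < ϑ x → 0 < ∑ i, ψ (x i) t) ∧
    (∀ t ∈ Θ, ϑ x < t → ∑ i, ψ (x i) t < 0)

/-- The `k*n`-tuple in which each entry `x i` of the `k`-tuple `x` is repeated
`n` times. -/
def repBlock {X : Type*} {k : ℕ} (n : ℕ) (x : Fin k → X) (i : Fin (k * n)) : X :=
  x ⟨i.val / n, by
    have h := i.isLt
    rcases Nat.eq_zero_or_pos n with hn | hn
    · subst hn; simp at h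
    · exact (Nat.div_lt_iff_lt_mul hn).mpr h⟩

/-- The (algebraic) core of a subsemigroup `A` of the free Abelian semigroup
`S(X)` of nonempty strings (nonzero multisets): all `a ∈ A` such that for
every nonempty string `s` some positive multiple of `a` plus `s` lies in `A`. -/
def coreNZ {X : Type*} (A : Set (Multiset X)) : Set (Multiset X) :=
  {a ∈ A | ∀ s : Multiset X, s ≠ 0 → ∃ n : ℕ, nmul n a + s ∈ A}


section Helpers

variable {X : Type*}

lemma myOfFn_cast {m m' : ℕ} (h : m = m') (f : Fin m' → X) :
    List.ofFn (f ∘ Fin.cast h) = List.ofFn f := by subst h; rfl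

lemma exists_rep (s : Multiset X) (hs : s ≠ 0) :
    ∃ n : ℕ, 0 < n ∧ ∃ x : Fin n → X, s = ↑(List.ofFn x) := by
  refine ⟨s.toList.length, ?_, fun i => s.toList.get i, ?_⟩
  · rw [Multiset.length_toList]
    exact Multiset.card_pos.mpr hs
  · rw [List.ofFn_get, Multiset.coe_toList]

lemma coe_ofFn_append {m n : ℕ} (x : Fin m → X) (y : Fin n → X) :
    (↑(List.ofFn (Fin.append x y)) : Multiset X)
      = ↑(List.ofFn x) + ↑(List.ofFn y) := by
  rw [List.ofFn_fin_append]
  exact (Multiset.coe_add _ _)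

lemma repBlock_coe {k : ℕ} (n : ℕ) (x : Fin k → X) :
    (↑(List.ofFn (repBlock n x)) : Multiset X) = n • ↑(List.ofFn x) := by
  induction k with
  | zero =>
      have h1 : List.ofFn (repBlock n x) = [] := by
        apply List.eq_nil_of_length_eq_zero; simp
      have h2 : List.ofFn x = [] := by
        apply List.eq_nil_of_length_eq_zero; simp
      simp [h1, h2]
  | succ k ih =>
      have h : (k + 1) * n = k * n + n := Nat.succ_mul k n
      have e1 : List.ofFn (repBlock n x)
          = List.ofFn ((repBlock n x) ∘ Fin.cast h.symm) :=
        (myOfFn_cast h.symm _).symm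
      rw [e1, List.ofFn_add]
      have e2 : (fun i : Fin (k * n) =>
            ((repBlock n x) ∘ Fin.cast h.symm) (Fin.castLE (Nat.le_add_right _ _) i))
          = repBlock n (x ∘ Fin.castSucc) := by
        funext i
        simp only [Function.comp, repBlock]
        congr 1
      have e3 : (fun j : Fin n =>
            ((repBlock n x) ∘ Fin.cast h.symm) (Fin.natAdd (k * n) j))
          = fun _ : Fin n => x (Fin.last k) := by
        funext j
        have hn : 0 < n := j.pos
        simp only [Function.comp, repBlock]
        congr 1
        apply Fin.ext
        simp only [Fin.val_last, Fin.coe_cast, Fin.coe_natAdd]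
        rw [mul_comm k n, Nat.mul_add_div hn, Nat.div_eq_of_lt j.isLt, add_zero]
      rw [e2, e3, List.ofFn_const]
      have e4 : List.ofFn x
          = (List.ofFn (x ∘ Fin.castSucc)).concat (x (Fin.last k)) :=
        List.ofFn_succ' x
      rw [e4]
      simp only [List.concat_eq_append, ← Multiset.coe_add, ih, Multiset.coe_singleton,
        Multiset.coe_replicate, smul_add, Multiset.nsmul_singleton]

lemma nmul_multiset (n : ℕ) (a : Multiset X) : nmul n a = (n + 1) • a := by
  induction n with
  | zero => simp [nmul]
  | succ n ih => rw [nmul, ih]; simp [succ_nsmul]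

end Helpers


/-- For symmetric, internal, asymptotically idempotent `M` with induced map `μ`
on the free Abelian semigroup `S(X)` and `t ∈ Θ`, the sets
`A_t = {s : μ s < t}` and `B_t = {s : μ s > t}` are disjoint subsemigroups of
`S(X)` that coincide with their cores. -/
theorem At_Bt_subsemigroups_eq_core {X : Type*} [Nonempty X] (Θ : Set ℝ)
    (hΘo : IsOpen Θ) (hΘc : Θ.OrdConnected) (hΘnd : ∃ s ∈ Θ, ∃ t ∈ Θ, s < t)
    (M : ∀ n : ℕ, (Fin n → X) → ℝ)
    (hMΘ : ∀ n : ℕ, 0 < n → ∀ x : Fin n → X, M n x ∈ Θ)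
    (hsym : ∀ n : ℕ, 0 < n → ∀ (x : Fin n → X) (π : Equiv.Perm (Fin n)),
      M n (x ∘ π) = M n x)
    (hint : ∀ n k : ℕ, 0 < n → 0 < k → ∀ (x : Fin n → X) (y : Fin k → X),
      min (M n x) (M k y) ≤ M (n + k) (Fin.append x y) ∧
      M (n + k) (Fin.append x y) ≤ max (M n x) (M k y))
    (hai : ∀ k : ℕ, 0 < k → ∀ (x : Fin k → X) (y : X),
      Tendsto (fun n : ℕ =>
          M (k * n + 1) (Fin.append (repBlock n x) (fun _ : Fin 1 => y)))
        atTop (𝓝 (M k x)))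
    (μ : Multiset X → ℝ)
    (hμ : ∀ n : ℕ, 0 < n → ∀ x : Fin n → X, μ ↑(List.ofFn x) = M n x)
    (t : ℝ) (ht : t ∈ Θ) :
    (∀ r ∈ {s : Multiset X | s ≠ 0 ∧ μ s < t}, ∀ r' ∈ {s : Multiset X | s ≠ 0 ∧ μ s < t},
        r + r' ∈ {s : Multiset X | s ≠ 0 ∧ μ s < t}) ∧
    (∀ r ∈ {s : Multiset X | s ≠ 0 ∧ t < μ s}, ∀ r' ∈ {s : Multiset X | s ≠ 0 ∧ t < μ s},
        r + r' ∈ {s : Multiset X | s ≠ 0 ∧ t < μ s}) ∧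
    Disjoint {s : Multiset X | s ≠ 0 ∧ μ s < t} {s : Multiset X | s ≠ 0 ∧ t < μ s} ∧
    coreNZ {s : Multiset X | s ≠ 0 ∧ μ s < t} = {s : Multiset X | s ≠ 0 ∧ μ s < t} ∧
    coreNZ {s : Multiset X | s ≠ 0 ∧ t < μ s} = {s : Multiset X | s ≠ 0 ∧ t < μ s} := by
  have addne : ∀ (u v : Multiset X), u ≠ 0 → u + v ≠ 0 := by
    intro u v hu h
    exact hu (Multiset.le_zero.mp (h ▸ Multiset.le_add_right u v))
  have addne' : ∀ (u v : Multiset X), v ≠ 0 → u + v ≠ 0 := by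
    intro u v hv h
    exact hv (Multiset.le_zero.mp (h ▸ Multiset.le_add_left v u))
  -- internality of μ
  have key : ∀ u v : Multiset X, u ≠ 0 → v ≠ 0 →
      min (μ u) (μ v) ≤ μ (u + v) ∧ μ (u + v) ≤ max (μ u) (μ v) := by
    intro u v hu hv
    obtain ⟨n, hn, x, rfl⟩ := exists_rep u hu
    obtain ⟨m, hm, y, rfl⟩ := exists_rep v hv
    have h3 := hμ (n + m) (by omega) (Fin.append x y)
    rw [coe_ofFn_append] at h3
    rw [hμ n hn x, hμ m hm y, h3]
    exact hint n m hn hm x y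
  -- generic core lemma
  have main : ∀ (P : ℝ → Prop), IsOpen {r : ℝ | P r} →
      (∀ u v : Multiset X, u ≠ 0 → v ≠ 0 → P (μ u) → P (μ v) → P (μ (u + v))) →
      ∀ a : Multiset X, a ≠ 0 → P (μ a) →
      ∀ s : Multiset X, s ≠ 0 → ∃ n : ℕ,
        nmul n a + s ≠ 0 ∧ P (μ (nmul n a + s)) := by
    intro P hPo hPadd a ha0 haP
    obtain ⟨k, hk, x, rfl⟩ := exists_rep a ha0
    set a : Multiset X := ↑(List.ofFn x) with ha
    -- single-element case via asymptotic idempotency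
    have single : ∀ y : X, ∃ N : ℕ, ∀ q ≥ N, P (μ (q • a + {y})) := by
      intro y
      have hPM : M k x ∈ {r : ℝ | P r} := by
        rw [← hμ k hk x]; exact haP
      have hev := (hai k hk x y).eventually_mem (hPo.mem_nhds hPM)
      obtain ⟨N, hN⟩ := eventually_atTop.mp hev
      refine ⟨N, fun q hq => ?_⟩
      have h1 := hμ (k * q + 1) (by omega) (Fin.append (repBlock q x) (fun _ : Fin 1 => y))
      rw [coe_ofFn_append, repBlock_coe] at h1
      have h2 : (↑(List.ofFn (fun _ : Fin 1 => y)) : Multiset X) = {y} := by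
        rw [List.ofFn_const]; rfl
      rw [h2] at h1
      rw [← ha] at h1
      rw [h1]
      exact hN q hq
    have claim : ∀ s : Multiset X, s ≠ 0 → ∃ N : ℕ, ∀ q ≥ N,
        P (μ ((Multiset.card s * q) • a + s)) := by
      intro s
      induction s using Multiset.induction_on with
      | empty => intro h; exact absurd rfl h
      | cons y s' ih =>
        intro _
        rcases eq_or_ne s' 0 with rfl | hs'
        · obtain ⟨N, hN⟩ := single y
          refine ⟨N, fun q hq => ?_⟩
          have hc : Multiset.card (y ::ₘ (0 : Multiset X)) * q = q := by simp
          rw [hc]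
          have hsing : (y ::ₘ (0 : Multiset X)) = ({y} : Multiset X) := by simp
          rw [hsing]
          exact hN q hq
        · obtain ⟨N1, hN1⟩ := single y
          obtain ⟨N2, hN2⟩ := ih hs'
          refine ⟨max N1 N2, fun q hq => ?_⟩
          have h1 := hN1 q (le_trans (le_max_left _ _) hq)
          have h2 := hN2 q (le_trans (le_max_right _ _) hq)
          have hrw : (Multiset.card (y ::ₘ s') * q) • a + (y ::ₘ s')
              = (q • a + {y}) + ((Multiset.card s' * q) • a + s') := by
            rw [Multiset.card_cons, add_mul, one_mul, add_nsmul, ← Multiset.singleton_add]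
            abel
          rw [hrw]
          exact hPadd _ _ (addne' _ _ (by simp)) (addne' _ _ hs') h1 h2
    intro s hs0
    obtain ⟨N, hN⟩ := claim s hs0
    have hcard : 1 ≤ Multiset.card s := Multiset.card_pos.mpr hs0
    refine ⟨Multiset.card s * (N + 1) - 1, ?_, ?_⟩
    · exact addne' _ _ hs0
    · have hnm : nmul (Multiset.card s * (N + 1) - 1) a
          = (Multiset.card s * (N + 1)) • a := by
        rw [nmul_multiset]
        congr 1
        have : 1 ≤ Multiset.card s * (N + 1) := Nat.one_le_iff_ne_zero.mpr (by positivity)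
        omega
      rw [hnm]
      exact hN (N + 1) (Nat.le_succ N)
  -- assemble
  have hAadd : ∀ u v : Multiset X, u ≠ 0 → v ≠ 0 → μ u < t → μ v < t → μ (u + v) < t :=
    fun u v hu hv h1 h2 => lt_of_le_of_lt (key u v hu hv).2 (max_lt h1 h2)
  have hBadd : ∀ u v : Multiset X, u ≠ 0 → v ≠ 0 → t < μ u → t < μ v → t < μ (u + v) :=
    fun u v hu hv h1 h2 => lt_of_lt_of_le (lt_min h1 h2) (key u v hu hv).1
  refine ⟨?_, ?_, ?_, ?_, ?_⟩
  · rintro r ⟨hr0, hr⟩ r' ⟨hr'0, hr'⟩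
    exact ⟨addne _ _ hr0, hAadd _ _ hr0 hr'0 hr hr'⟩
  · rintro r ⟨hr0, hr⟩ r' ⟨hr'0, hr'⟩
    exact ⟨addne _ _ hr0, hBadd _ _ hr0 hr'0 hr hr'⟩
  · rw [Set.disjoint_left]
    rintro s ⟨_, h1⟩ ⟨_, h2⟩
    exact lt_asymm h1 h2
  · ext s
    constructor
    · exact fun h => h.1
    · rintro ⟨hs0, hst⟩
      refine ⟨⟨hs0, hst⟩, fun s' hs' => ?_⟩
      obtain ⟨n, hne, hP⟩ := main (fun r => r < t) isOpen_Iio hAadd s hs0 hst s' hs'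
      exact ⟨n, hne, hP⟩
  · ext s
    constructor
    · exact fun h => h.1
    · rintro ⟨hs0, hst⟩
      refine ⟨⟨hs0, hst⟩, fun s' hs' => ?_⟩
      obtain ⟨n, hne, hP⟩ := main (fun r => t < r) isOpen_Ioi hBadd s hs0 hst s' hs'
      exact ⟨n, hne, hP⟩
end

section
/- Let X be a nonempty set, Θ a nondegenerate open interval of ℝ, and ψ ∈ Ψ(X,Θ) with property [T]. Let k, ℓ ∈ ℕ, x = (x₁,…,x_k) ∈ X^k and y = (y₁,…,y_ℓ) ∈ X^ℓ with ϑ_{k,ψ}(x) < ϑ_{ℓ,ψ}(y), and define f_{x,y}(t) := −(ψ(x₁,t) + ⋯ + ψ(x_k,t)) / (ψ(y₁,t) + ⋯ + ψ(y_ℓ,t)) for t ∈ Θ \ {ϑ_{ℓ,ψ}(y)} (the denominator is nonzero there). Then f_{x,y} is positive and increasing (monotone nondecreasing) on the open interval (ϑ_{k,ψ}(x), ϑ_{ℓ,ψ}(y)). -/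
open Filter Topology

/-- Summing a `k`-periodic-style family over `Fin (m*k)` gives `m` copies. -/
lemma sum_repeat {X : Type*} (g : X → ℝ) (m k : ℕ) (x : Fin k → X) :
    ∑ p : Fin (m * k), g (x (finProdFinEquiv.symm p).2) = m * ∑ i, g (x i) := by
  rw [← Equiv.sum_comp finProdFinEquiv (fun p => g (x (finProdFinEquiv.symm p).2))]
  simp [Fintype.sum_prod_type, Finset.sum_const, mul_comm]

/-- Step 2 (positivity and monotonicity): for `ϑ_k(x) < ϑ_ℓ(y)`, the ratio
`f_{x,y}(t) = -(∑ ψ(xᵢ,t)) / (∑ ψ(yⱼ,t))` has nonvanishing denominator off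
`ϑ_ℓ(y)`, and is positive and increasing on `(ϑ_k(x), ϑ_ℓ(y))`. -/
theorem ratio_pos_monotone {X : Type*} [Nonempty X] (Θ : Set ℝ)
    (hΘo : IsOpen Θ) (hΘc : Θ.OrdConnected) (hΘnd : ∃ s ∈ Θ, ∃ t ∈ Θ, s < t)
    (ψ : X → ℝ → ℝ) (hψ : PsiClass Θ ψ)
    (ϑ : ∀ n : ℕ, (Fin n → X) → ℝ)
    (hϑ : ∀ n : ℕ, 0 < n → IsThetaEst Θ ψ n (ϑ n))
    (k l : ℕ) (hk : 0 < k) (hl : 0 < l)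
    (x : Fin k → X) (y : Fin l → X) (hxy : ϑ k x < ϑ l y) :
    (∀ t ∈ Θ, t ≠ ϑ l y → (∑ j, ψ (y j) t) ≠ 0) ∧
    (∀ t ∈ Set.Ioo (ϑ k x) (ϑ l y),
      0 < -(∑ i, ψ (x i) t) / (∑ j, ψ (y j) t)) ∧
    MonotoneOn (fun t => -(∑ i, ψ (x i) t) / (∑ j, ψ (y j) t))
      (Set.Ioo (ϑ k x) (ϑ l y)) := by
  obtain ⟨hxΘ, hxpos, hxneg⟩ := hϑ k hk x
  obtain ⟨hyΘ, hypos, hyneg⟩ := hϑ l hl y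
  have hsub : Set.Ioo (ϑ k x) (ϑ l y) ⊆ Θ := fun t ht =>
    hΘc.out hxΘ hyΘ ⟨ht.1.le, ht.2.le⟩
  have hA : ∀ t ∈ Set.Ioo (ϑ k x) (ϑ l y), (∑ i, ψ (x i) t) < 0 :=
    fun t ht => hxneg t (hsub ht) ht.1
  have hB : ∀ t ∈ Set.Ioo (ϑ k x) (ϑ l y), 0 < (∑ j, ψ (y j) t) :=
    fun t ht => hypos t (hsub ht) ht.2
  refine ⟨?_, ?_, ?_⟩
  · intro t htΘ hne
    rcases lt_or_gt_of_ne hne with h | h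
    · exact (hypos t htΘ h).ne'
    · exact (hyneg t htΘ h).ne
  · intro t ht
    exact div_pos (by linarith [hA t ht]) (hB t ht)
  · intro s hs t ht hst
    rcases eq_or_lt_of_le hst with rfl | hst
    · exact le_refl _
    by_contra hcon
    push_neg at hcon
    -- f t < f s; find rational n/m in between
    obtain ⟨q, hq1, hq2⟩ := exists_rat_btwn hcon
    have hft : 0 < -(∑ i, ψ (x i) t) / (∑ j, ψ (y j) t) :=
      div_pos (by linarith [hA t ht]) (hB t ht)
    have hq0 : 0 < (q : ℝ) := lt_trans hft hq1
    set m : ℕ := q.den with hm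
    set n : ℕ := q.num.toNat with hn
    have hm0 : 0 < m := q.pos
    have hnum : 0 < q.num := by exact_mod_cast (Rat.num_pos).mpr (by exact_mod_cast hq0)
    have hn0 : 0 < n := by omega
    have hqval : (q : ℝ) = (n : ℝ) / (m : ℝ) := by
      rw [hn, hm, Rat.cast_def]
      congr 1
      exact_mod_cast (Int.toNat_of_nonneg hnum.le).symm
    have hN : 0 < m * k + n * l := by positivity
    set z : Fin (m * k + n * l) → X :=
      Fin.append (fun p : Fin (m * k) => x (finProdFinEquiv.symm p).2)
        (fun p : Fin (n * l) => y (finProdFinEquiv.symm p).2) with hz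
    have hsum : ∀ u : ℝ, (∑ i, ψ (z i) u)
        = m * (∑ i, ψ (x i) u) + n * (∑ j, ψ (y j) u) := by
      intro u
      rw [hz, Fin.sum_univ_add]
      simp only [Fin.append_left, Fin.append_right]
      rw [sum_repeat (fun a => ψ a u) m k x, sum_repeat (fun a => ψ a u) n l y]
    obtain ⟨hzΘ, hzpos, hzneg⟩ := hϑ _ hN z
    -- at t: m*A t + n*B t > 0
    have hBt := hB t ht
    have hBs := hB s hs
    have htpos : 0 < (m : ℝ) * (∑ i, ψ (x i) t) + n * (∑ j, ψ (y j) t) := by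
      rw [hqval] at hq1
      rw [div_lt_div_iff₀ hBt (by exact_mod_cast hm0)] at hq1
      nlinarith
    have hsneg : (m : ℝ) * (∑ i, ψ (x i) s) + n * (∑ j, ψ (y j) s) < 0 := by
      rw [hqval] at hq2
      rw [div_lt_div_iff₀ (by exact_mod_cast hm0) hBs] at hq2
      nlinarith
    have h1 : t ≤ ϑ _ z := by
      by_contra h
      push_neg at h
      have := hzneg t (hsub ht) h
      rw [hsum] at this; linarith
    have h2 : ϑ _ z ≤ s := by
      by_contra h
      push_neg at h
      have := hzpos s (hsub hs) h
      rw [hsum] at this; linarith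
    linarith
end

section
/- Let X be a nonempty set, Θ a nondegenerate open interval of ℝ, and ψ ∈ Ψ(X,Θ) with property [T] such that the estimator family (ϑ_{n,ψ})_{n∈ℕ} is strictly internal, i.e., min(ϑ_{n,ψ}(x), ϑ_{k,ψ}(y)) ≤ ϑ_{n+k,ψ}(x,y) ≤ max(ϑ_{n,ψ}(x), ϑ_{k,ψ}(y)) for all n, k, x ∈ Xⁿ, y ∈ X^k, with both inequalities strict whenever ϑ_{n,ψ}(x) ≠ ϑ_{k,ψ}(y). Let k, ℓ ∈ ℕ, x = (x₁,…,x_k) ∈ X^k and y = (y₁,…,y_ℓ) ∈ X^ℓ with ϑ_{k,ψ}(x) < ϑ_{ℓ,ψ}(y), and define f_{x,y}(t) := −(ψ(x₁,t) + ⋯ + ψ(x_k,t)) / (ψ(y₁,t) + ⋯ + ψ(y_ℓ,t)) for t ∈ Θ \ {ϑ_{ℓ,ψ}(y)}. Then f_{x,y} is continuous on the open interval (ϑ_{k,ψ}(x), ϑ_{ℓ,ψ}(y)). -/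
open Filter Topology

/-- The sum of `ψ`-values over an appended tuple splits. -/
lemma psi_sum_append {X : Type*} (ψ : X → ℝ → ℝ) (n m : ℕ) (u : Fin n → X)
    (v : Fin m → X) (t : ℝ) :
    ∑ i, ψ (Fin.append u v i) t = (∑ i, ψ (u i) t) + ∑ j, ψ (v j) t := by
  rw [Fin.sum_univ_add]
  simp [Fin.append_left, Fin.append_right]

/-- Comparison of sign-change points of `q·Sx + p·Sy` and `q'·Sx + p'·Sy`
when `p/q ≤ p'/q'`. -/
lemma sign_le_aux (Θ : Set ℝ) (hΘc : Θ.OrdConnected) (Sx Sy : ℝ → ℝ) (b : ℝ)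
    (hSy : ∀ t ∈ Θ, t < b → 0 < Sy t)
    (p q p' q' : ℕ) (α β : ℝ) (hq : 0 < q) (hq' : 0 < q')
    (hαΘ : α ∈ Θ) (hβΘ : β ∈ Θ) (hαb : α ≤ b)
    (h1 : ∀ t ∈ Θ, t < α → 0 < (q:ℝ) * Sx t + (p:ℝ) * Sy t)
    (h2 : ∀ t ∈ Θ, β < t → (q':ℝ) * Sx t + (p':ℝ) * Sy t < 0)
    (hpq : p * q' ≤ p' * q) : α ≤ β := by
  by_contra hc
  push_neg at hc
  set t := (β + α) / 2 with ht
  have htΘ : t ∈ Θ := hΘc.out hβΘ hαΘ ⟨by simp [ht]; linarith, by simp [ht]; linarith⟩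
  have htb : t < b := by simp [ht]; linarith
  have hSyt : 0 < Sy t := hSy t htΘ htb
  have hA := h1 t htΘ (by simp [ht]; linarith)
  have hB := h2 t htΘ (by simp [ht]; linarith)
  have hq0 : (0:ℝ) < q := by exact_mod_cast hq
  have hq'0 : (0:ℝ) < q' := by exact_mod_cast hq'
  have hcast : (p:ℝ) * q' ≤ (p':ℝ) * q := by exact_mod_cast hpq
  nlinarith [mul_pos hq'0 hA, mul_neg_of_pos_of_neg hq0 hB,
    mul_le_mul_of_nonneg_right hcast hSyt.le]

/-- Abstract continuity: if for each pair of positive naturals `p, q` there is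
a "sign change point" `τ p q` of `q·Sx + p·Sy`, strictly monotone in `p/q`,
then `-Sx/Sy` is continuous on `(a,b)`. -/
lemma ratio_cont_aux (Θ : Set ℝ) (hΘc : Θ.OrdConnected) (Sx Sy : ℝ → ℝ) (a b : ℝ)
    (haΘ : a ∈ Θ) (hbΘ : b ∈ Θ)
    (hSy : ∀ t ∈ Θ, t < b → 0 < Sy t)
    (hSx : ∀ t ∈ Θ, a < t → Sx t < 0)
    (τ : ℕ → ℕ → ℝ)
    (hτ3 : ∀ p q : ℕ, 0 < p → 0 < q → ∀ t ∈ Θ, t < τ p q →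
      0 < (q:ℝ) * Sx t + (p:ℝ) * Sy t)
    (hτ4 : ∀ p q : ℕ, 0 < p → 0 < q → ∀ t ∈ Θ, τ p q < t →
      (q:ℝ) * Sx t + (p:ℝ) * Sy t < 0)
    (hmono : ∀ p q p' q' : ℕ, 0 < p → 0 < q → 0 < p' → 0 < q' →
      p * q' < p' * q → τ p q < τ p' q') :
    ContinuousOn (fun t => -(Sx t) / Sy t) (Set.Ioo a b) := by
  intro t₀ ht₀
  have htΘ : t₀ ∈ Θ := hΘc.out haΘ hbΘ ⟨ht₀.1.le, ht₀.2.le⟩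
  have hSyt : 0 < Sy t₀ := hSy t₀ htΘ ht₀.2
  have hSxt : Sx t₀ < 0 := hSx t₀ htΘ ht₀.1
  set v := -(Sx t₀) / Sy t₀ with hv
  have hv0 : 0 < v := div_pos (by linarith) hSyt
  have hrat : ∀ r : ℚ, 0 < r → ∃ p q : ℕ, 0 < p ∧ 0 < q ∧ (p:ℝ)/(q:ℝ) = (r:ℝ) := by
    intro r hr
    have hnum : 0 < r.num := Rat.num_pos.mpr hr
    refine ⟨r.num.toNat, r.den, by omega, r.pos, ?_⟩
    rw [Rat.cast_def]
    congr 1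
    exact_mod_cast Int.toNat_of_nonneg hnum.le
  have hflt : ∀ (p q : ℕ), 0 < q → ∀ t ∈ Θ, t < b →
      0 < (q:ℝ) * Sx t + (p:ℝ) * Sy t → -(Sx t)/Sy t < (p:ℝ)/(q:ℝ) := by
    intro p q hq t htm htb h
    have hS := hSy t htm htb
    rw [div_lt_div_iff₀ hS (by exact_mod_cast hq)]
    nlinarith
  have hfgt : ∀ (p q : ℕ), 0 < q → ∀ t ∈ Θ, t < b →
      (q:ℝ) * Sx t + (p:ℝ) * Sy t < 0 → (p:ℝ)/(q:ℝ) < -(Sx t)/Sy t := by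
    intro p q hq t htm htb h
    have hS := hSy t htm htb
    rw [div_lt_div_iff₀ (by exact_mod_cast hq) hS]
    nlinarith
  rw [Metric.continuousWithinAt_iff]
  intro ε hε
  obtain ⟨r2, hr2a, hr2b⟩ :=
    exists_rat_btwn (show max (v-ε) 0 < v from max_lt (by linarith) hv0)
  obtain ⟨r1, hr1a, hr1b⟩ := exists_rat_btwn hr2a
  obtain ⟨r4, hr4a, hr4b⟩ := exists_rat_btwn (show v < v + ε by linarith)
  obtain ⟨r3, hr3a, hr3b⟩ := exists_rat_btwn hr4a
  have hr1pos : (0:ℝ) < r1 := lt_of_le_of_lt (le_max_right _ _) hr1a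
  have hr2pos : (0:ℝ) < r2 := hr1pos.trans hr1b
  have hr3pos : (0:ℝ) < r3 := hv0.trans hr3a
  have hr4pos : (0:ℝ) < r4 := hr3pos.trans hr3b
  have hr1e : v - ε < r1 := lt_of_le_of_lt (le_max_left _ _) hr1a
  obtain ⟨p1,q1,hp1,hq1,hc1⟩ := hrat r1 (by exact_mod_cast hr1pos)
  obtain ⟨p2,q2,hp2,hq2,hc2⟩ := hrat r2 (by exact_mod_cast hr2pos)
  obtain ⟨p3,q3,hp3,hq3,hc3⟩ := hrat r3 (by exact_mod_cast hr3pos)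
  obtain ⟨p4,q4,hp4,hq4,hc4⟩ := hrat r4 (by exact_mod_cast hr4pos)
  have hcmp : ∀ pa qa pb qb : ℕ, 0 < qa → 0 < qb → (pa:ℝ)/(qa:ℝ) < (pb:ℝ)/(qb:ℝ) →
      pa * qb < pb * qa := by
    intro pa qa pb qb hqa hqb h
    rw [div_lt_div_iff₀ (by exact_mod_cast hqa) (by exact_mod_cast hqb)] at h
    exact_mod_cast h
  have h12 := hcmp p1 q1 p2 q2 hq1 hq2 (by rw [hc1, hc2]; exact_mod_cast hr1b)
  have h34 := hcmp p3 q3 p4 q4 hq3 hq4 (by rw [hc3, hc4]; exact_mod_cast hr3b)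
  have hα12 := hmono p1 q1 p2 q2 hp1 hq1 hp2 hq2 h12
  have hα34 := hmono p3 q3 p4 q4 hp3 hq3 hp4 hq4 h34
  have hα2t : τ p2 q2 ≤ t₀ := by
    by_contra hcon
    have h := hτ3 p2 q2 hp2 hq2 t₀ htΘ (not_le.mp hcon)
    have h' := hflt p2 q2 hq2 t₀ htΘ ht₀.2 h
    rw [hc2] at h'
    rw [← hv] at h'
    linarith
  have hα3t : t₀ ≤ τ p3 q3 := by
    by_contra hcon
    have h := hτ4 p3 q3 hp3 hq3 t₀ htΘ (not_le.mp hcon)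
    have h' := hfgt p3 q3 hq3 t₀ htΘ ht₀.2 h
    rw [hc3] at h'
    rw [← hv] at h'
    linarith
  refine ⟨min (t₀ - τ p1 q1) (τ p4 q4 - t₀), lt_min (by linarith) (by linarith), ?_⟩
  intro u hu hud
  have huΘ : u ∈ Θ := hΘc.out haΘ hbΘ ⟨hu.1.le, hu.2.le⟩
  rw [Real.dist_eq] at hud
  have habs := abs_lt.mp hud
  have hm1 := min_le_left (t₀ - τ p1 q1) (τ p4 q4 - t₀)
  have hm2 := min_le_right (t₀ - τ p1 q1) (τ p4 q4 - t₀)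
  have h1u : τ p1 q1 < u := by linarith
  have h4u : u < τ p4 q4 := by linarith
  have hfu1 : (r1:ℝ) < -(Sx u)/Sy u := by
    have h := hτ4 p1 q1 hp1 hq1 u huΘ h1u
    have h' := hfgt p1 q1 hq1 u huΘ hu.2 h
    rwa [hc1] at h'
  have hfu4 : -(Sx u)/Sy u < (r4:ℝ) := by
    have h := hτ3 p4 q4 hp4 hq4 u huΘ h4u
    have h' := hflt p4 q4 hq4 u huΘ hu.2 h
    rwa [hc4] at h'
  show dist (-(Sx u)/Sy u) (-(Sx t₀)/Sy t₀) < ε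
  rw [Real.dist_eq, ← hv, abs_lt]
  constructor <;> [linarith; linarith]

/-- Step 2 (continuity): for a strictly internal estimator family with
`ϑ_k(x) < ϑ_ℓ(y)`, the ratio `f_{x,y}` is continuous on `(ϑ_k(x), ϑ_ℓ(y))`. -/
theorem ratio_continuous_inside {X : Type*} [Nonempty X] (Θ : Set ℝ)
    (hΘo : IsOpen Θ) (hΘc : Θ.OrdConnected) (hΘnd : ∃ s ∈ Θ, ∃ t ∈ Θ, s < t)
    (ψ : X → ℝ → ℝ) (hψ : PsiClass Θ ψ)
    (ϑ : ∀ n : ℕ, (Fin n → X) → ℝ)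
    (hϑ : ∀ n : ℕ, 0 < n → IsThetaEst Θ ψ n (ϑ n))
    (hSI : ∀ n m : ℕ, 0 < n → 0 < m → ∀ (x : Fin n → X) (y : Fin m → X),
      (min (ϑ n x) (ϑ m y) ≤ ϑ (n + m) (Fin.append x y) ∧
        ϑ (n + m) (Fin.append x y) ≤ max (ϑ n x) (ϑ m y)) ∧
      (ϑ n x ≠ ϑ m y →
        min (ϑ n x) (ϑ m y) < ϑ (n + m) (Fin.append x y) ∧
        ϑ (n + m) (Fin.append x y) < max (ϑ n x) (ϑ m y)))
    (k l : ℕ) (hk : 0 < k) (hl : 0 < l)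
    (x : Fin k → X) (y : Fin l → X) (hxy : ϑ k x < ϑ l y) :
    ContinuousOn (fun t => -(∑ i, ψ (x i) t) / (∑ j, ψ (y j) t))
      (Set.Ioo (ϑ k x) (ϑ l y)) := by
  -- repeated samples have the same estimator and scaled sum
  have hrep : ∀ (q : ℕ), 0 < q → ∀ (n : ℕ) (z : Fin n → X), 0 < n →
      ∃ m, ∃ w : Fin m → X, 0 < m ∧
        (∀ t, ∑ i, ψ (w i) t = (q : ℝ) * ∑ i, ψ (z i) t) ∧ ϑ m w = ϑ n z := by
    intro q
    induction q with
    | zero => intro h; exact absurd h (lt_irrefl 0)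
    | succ q ih =>
      intro _ n z hn
      rcases Nat.eq_zero_or_pos q with rfl | hq
      · exact ⟨n, z, hn, fun t => by push_cast; ring, rfl⟩
      · obtain ⟨m, w, hm, hsum, hest⟩ := ih hq n z hn
        refine ⟨m + n, Fin.append w z, by omega, fun t => ?_, ?_⟩
        · rw [psi_sum_append, hsum]; push_cast; ring
        · have h := (hSI m n hm hn w z).1
          rw [hest, min_self, max_self] at h
          exact le_antisymm h.2 h.1
  -- mixed samples realizing the coefficients (q, p)
  have hgood : ∀ (p q : ℕ), 0 < p → 0 < q →
      ∃ n, ∃ z : Fin n → X, 0 < n ∧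
        (∀ t, ∑ i, ψ (z i) t =
          (q : ℝ) * (∑ i, ψ (x i) t) + (p : ℝ) * ∑ j, ψ (y j) t) ∧
        ϑ k x < ϑ n z ∧ ϑ n z < ϑ l y := by
    intro p q hp hq
    obtain ⟨m1, z1, hm1, hs1, he1⟩ := hrep q hq k x hk
    obtain ⟨m2, z2, hm2, hs2, he2⟩ := hrep p hp l y hl
    refine ⟨m1 + m2, Fin.append z1 z2, by omega,
      fun t => by rw [psi_sum_append, hs1, hs2], ?_⟩
    have h := (hSI m1 m2 hm1 hm2 z1 z2).2 (by rw [he1, he2]; exact ne_of_lt hxy)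
    rw [he1, he2, min_eq_left hxy.le, max_eq_right hxy.le] at h
    exact h
  -- sign conditions from a sample with a given sum decomposition
  have hsign : ∀ (p q n : ℕ) (z : Fin n → X), 0 < n →
      (∀ t, ∑ i, ψ (z i) t = (q:ℝ) * (∑ i, ψ (x i) t) + (p:ℝ) * ∑ j, ψ (y j) t) →
      (∀ t ∈ Θ, t < ϑ n z → 0 < (q:ℝ) * (∑ i, ψ (x i) t) + (p:ℝ) * ∑ j, ψ (y j) t) ∧
      (∀ t ∈ Θ, ϑ n z < t → (q:ℝ) * (∑ i, ψ (x i) t) + (p:ℝ) * ∑ j, ψ (y j) t < 0) := by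
    intro p q n z hn hsum
    obtain ⟨_, h1, h2⟩ := hϑ n hn z
    exact ⟨fun t ht hlt => hsum t ▸ h1 t ht hlt, fun t ht hlt => hsum t ▸ h2 t ht hlt⟩
  have hSy : ∀ t ∈ Θ, t < ϑ l y → 0 < ∑ j, ψ (y j) t := (hϑ l hl y).2.1
  have hSx : ∀ t ∈ Θ, ϑ k x < t → ∑ i, ψ (x i) t < 0 := (hϑ k hk x).2.2
  -- strict monotonicity between estimators of good samples
  have hstrict : ∀ (p q : ℕ), 0 < p → 0 < q → ∀ (p' q' : ℕ), 0 < p' → 0 < q' →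
      p * q' < p' * q →
      ∀ (n : ℕ) (z : Fin n → X), 0 < n →
      (∀ t, ∑ i, ψ (z i) t = (q:ℝ) * (∑ i, ψ (x i) t) + (p:ℝ) * ∑ j, ψ (y j) t) →
      ϑ n z < ϑ l y →
      ∀ (n' : ℕ) (z' : Fin n' → X), 0 < n' →
      (∀ t, ∑ i, ψ (z' i) t = (q':ℝ) * (∑ i, ψ (x i) t) + (p':ℝ) * ∑ j, ψ (y j) t) →
      ϑ n' z' < ϑ l y →
      ϑ n z < ϑ n' z' := by
    intro p q hp hq p' q' hp' hq' hlt n z hn hsz hzb n' z' hn' hsz' hz'b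
    obtain ⟨m1, w1, hm1, hsw1, hew1⟩ := hrep q' hq' n z hn
    set m0 := p' * q - p * q' with hm0def
    have hm0 : 0 < m0 := by omega
    obtain ⟨m2, w2, hm2, hsw2, hew2⟩ := hrep m0 hm0 l y hl
    have hne : ϑ m1 w1 ≠ ϑ m2 w2 := by rw [hew1, hew2]; exact ne_of_lt hzb
    have h := (hSI m1 m2 hm1 hm2 w1 w2).2 hne
    rw [hew1, hew2, min_eq_left hzb.le, max_eq_right hzb.le] at h
    have hm0cast : (m0:ℝ) = (p':ℝ) * q - (p:ℝ) * q' := by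
      rw [hm0def]
      push_cast [Nat.cast_sub hlt.le]
      ring
    have hsumγ : ∀ t, ∑ i, ψ (Fin.append w1 w2 i) t =
        ((q * q' : ℕ):ℝ) * (∑ i, ψ (x i) t) + ((p' * q : ℕ):ℝ) * ∑ j, ψ (y j) t := by
      intro t
      rw [psi_sum_append, hsw1, hsw2, hsz t, hm0cast]
      push_cast
      ring
    have hγpos : 0 < m1 + m2 := by omega
    have hγΘ : ϑ (m1 + m2) (Fin.append w1 w2) ∈ Θ := (hϑ _ hγpos _).1
    have hz'Θ : ϑ n' z' ∈ Θ := (hϑ n' hn' z').1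
    have hsγ := hsign (p' * q) (q * q') (m1 + m2) (Fin.append w1 w2) hγpos hsumγ
    have hsz'' := hsign p' q' n' z' hn' hsz'
    have hratio : p' * q * q' = p' * (q * q') := by ring
    have hγz' : ϑ (m1 + m2) (Fin.append w1 w2) = ϑ n' z' := by
      apply le_antisymm
      · exact sign_le_aux Θ hΘc _ _ (ϑ l y) hSy (p' * q) (q * q') p' q' _ _
          (by positivity) hq' hγΘ hz'Θ h.2.le hsγ.1 hsz''.2 (le_of_eq hratio)
      · exact sign_le_aux Θ hΘc _ _ (ϑ l y) hSy p' q' (p' * q) (q * q') _ _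
          hq' (by positivity) hz'Θ hγΘ hz'b.le hsz''.1 hsγ.2 (ge_of_eq hratio)
    rw [← hγz']
    exact h.1
  -- choose the sign-change points τ p q
  have hτex : ∀ p q : ℕ, ∃ c : ℝ, 0 < p → 0 < q →
      ∃ n, ∃ z : Fin n → X, 0 < n ∧
        (∀ t, ∑ i, ψ (z i) t =
          (q : ℝ) * (∑ i, ψ (x i) t) + (p : ℝ) * ∑ j, ψ (y j) t) ∧
        ϑ n z = c ∧ ϑ k x < c ∧ c < ϑ l y := by
    intro p q
    by_cases hp : 0 < p
    · by_cases hq : 0 < q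
      · obtain ⟨n, z, hn, hs, h1, h2⟩ := hgood p q hp hq
        exact ⟨ϑ n z, fun _ _ => ⟨n, z, hn, hs, rfl, h1, h2⟩⟩
      · exact ⟨0, fun _ h => absurd h hq⟩
    · exact ⟨0, fun h _ => absurd h hp⟩
  choose τ hτ using hτex
  have haΘ : ϑ k x ∈ Θ := (hϑ k hk x).1
  have hbΘ : ϑ l y ∈ Θ := (hϑ l hl y).1
  refine ratio_cont_aux Θ hΘc (fun t => ∑ i, ψ (x i) t) (fun t => ∑ j, ψ (y j) t)
    (ϑ k x) (ϑ l y) haΘ hbΘ hSy hSx τ ?_ ?_ ?_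
  · intro p q hp hq t ht hlt
    obtain ⟨n, z, hn, hs, hez, _, _⟩ := hτ p q hp hq
    exact (hsign p q n z hn hs).1 t ht (by rwa [hez])
  · intro p q hp hq t ht hlt
    obtain ⟨n, z, hn, hs, hez, _, _⟩ := hτ p q hp hq
    exact (hsign p q n z hn hs).2 t ht (by rwa [hez])
  · intro p q p' q' hp hq hp' hq' hlt
    obtain ⟨n, z, hn, hs, hez, _, hzb⟩ := hτ p q hp hq
    obtain ⟨n', z', hn', hs', hez', _, hz'b⟩ := hτ p' q' hp' hq'
    rw [← hez, ← hez']
    exact hstrict p q hp hq p' q' hp' hq' hlt n z hn hs (hez ▸ hzb)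
      n' z' hn' hs' (hez' ▸ hz'b)
end

section
/- Let X be a nonempty set, Θ a nondegenerate open interval of ℝ, and ψ ∈ Ψ(X,Θ) with property [T] such that the estimator family (ϑ_{n,ψ})_{n∈ℕ} is strictly internal and satisfies inf ϑ_{1,ψ}(X) = inf Θ and sup ϑ_{1,ψ}(X) = sup Θ. Let k, ℓ ∈ ℕ, x = (x₁,…,x_k) ∈ X^k and y = (y₁,…,y_ℓ) ∈ X^ℓ with ϑ_{k,ψ}(x) < ϑ_{ℓ,ψ}(y), and define f_{x,y}(t) := −(ψ(x₁,t) + ⋯ + ψ(x_k,t)) / (ψ(y₁,t) + ⋯ + ψ(y_ℓ,t)) for t ∈ Θ \ {ϑ_{ℓ,ψ}(y)}. Then f_{x,y} is continuous on its entire domain Θ \ {ϑ_{ℓ,ψ}(y)}. -/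
open Filter Topology

section Helpers

lemma helperQ {a b : ℝ} (ha : 0 ≤ a) (hab : a < b) :
    ∃ p q : ℕ, 0 < p ∧ 0 < q ∧ a < (p : ℝ) / q ∧ (p : ℝ) / q < b := by
  obtain ⟨r, hr1, hr2⟩ := exists_rat_btwn hab
  have hrpos : 0 < r := by exact_mod_cast lt_of_le_of_lt ha hr1
  have hnum : 0 < r.num := Rat.num_pos.mpr hrpos
  have hcast : ((r.num.toNat : ℕ) : ℝ) / (r.den : ℝ) = (r : ℝ) := by
    rw [Rat.cast_def]; congr 1; exact_mod_cast Int.toNat_of_nonneg hnum.le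
  exact ⟨r.num.toNat, r.den, by omega, r.pos, by rw [hcast]; exact hr1,
    by rw [hcast]; exact hr2⟩


lemma sumapp {X : Type*} (ψ : X → ℝ → ℝ) {n m : ℕ} (a : Fin n → X) (b : Fin m → X) (t : ℝ) :
    ∑ i : Fin (n + m), ψ (Fin.append a b i) t
      = (∑ i, ψ (a i) t) + ∑ i, ψ (b i) t := by
  rw [Fin.sum_univ_add]
  simp [Fin.append_left, Fin.append_right]


section
variable {X : Type*} {Θ : Set ℝ} {ψ : X → ℝ → ℝ} {ϑ : ∀ n : ℕ, (Fin n → X) → ℝ}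


lemma repS
    (hSI : ∀ n m : ℕ, 0 < n → 0 < m → ∀ (x : Fin n → X) (y : Fin m → X),
      (min (ϑ n x) (ϑ m y) ≤ ϑ (n + m) (Fin.append x y) ∧
        ϑ (n + m) (Fin.append x y) ≤ max (ϑ n x) (ϑ m y)) ∧
      (ϑ n x ≠ ϑ m y →
        min (ϑ n x) (ϑ m y) < ϑ (n + m) (Fin.append x y) ∧
        ϑ (n + m) (Fin.append x y) < max (ϑ n x) (ϑ m y)))
    (q : ℕ) (hq : 0 < q) {n : ℕ} (hn : 0 < n) (a : Fin n → X) :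
    ∃ N, ∃ _ : 0 < N, ∃ b : Fin N → X, ϑ N b = ϑ n a ∧
      ∀ t, (∑ i, ψ (b i) t) = q * ∑ i, ψ (a i) t := by
  induction q with
  | zero => omega
  | succ q ih =>
    rcases Nat.eq_zero_or_pos q with h0 | hq'
    · subst h0; exact ⟨n, hn, a, rfl, by simp⟩
    · obtain ⟨N, hN, b, hb1, hb2⟩ := ih hq'
      refine ⟨N + n, by omega, Fin.append b a, ?_, ?_⟩
      · have h := (hSI N n hN hn b a).1
        rw [hb1, min_self, max_self] at h
        linarith [h.1, h.2]
      · intro t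
        rw [sumapp ψ b a t, hb2 t]
        push_cast
        ring


lemma zbelow (hΘo : IsOpen Θ)
    (hinf : sInf (Set.range fun x : X => (ϑ 1 (fun _ => x) : EReal))
        = sInf (Real.toEReal '' Θ))
    {t0 : ℝ} (ht0 : t0 ∈ Θ) : ∃ z : X, ϑ 1 (fun _ => z) < t0 := by
  obtain ⟨ε, hε, hball⟩ := Metric.isOpen_iff.mp hΘo t0 ht0
  have ht' : t0 - ε / 2 ∈ Θ := hball (by
    simp only [Metric.mem_ball, Real.dist_eq]
    rw [abs_of_nonpos (by linarith)] <;> linarith)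
  have h1 : sInf (Set.range fun x : X => (ϑ 1 (fun _ => x) : EReal)) < (t0 : EReal) := by
    rw [hinf]
    refine lt_of_le_of_lt (sInf_le ⟨t0 - ε / 2, ht', rfl⟩) ?_
    exact EReal.coe_lt_coe_iff.mpr (by linarith)
  obtain ⟨e, ⟨z, rfl⟩, hz⟩ := sInf_lt_iff.mp h1
  exact ⟨z, EReal.coe_lt_coe_iff.mp hz⟩


lemma zabove (hΘo : IsOpen Θ)
    (hsup : sSup (Set.range fun x : X => (ϑ 1 (fun _ => x) : EReal))
        = sSup (Real.toEReal '' Θ))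
    {t0 : ℝ} (ht0 : t0 ∈ Θ) : ∃ z : X, t0 < ϑ 1 (fun _ => z) := by
  obtain ⟨ε, hε, hball⟩ := Metric.isOpen_iff.mp hΘo t0 ht0
  have ht' : t0 + ε / 2 ∈ Θ := hball (by
    simp only [Metric.mem_ball, Real.dist_eq]
    rw [abs_of_nonneg (by linarith)] <;> linarith)
  have h1 : (t0 : EReal) < sSup (Set.range fun x : X => (ϑ 1 (fun _ => x) : EReal)) := by
    rw [hsup]
    refine lt_of_lt_of_le ?_ (le_sSup ⟨t0 + ε / 2, ht', rfl⟩)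
    exact EReal.coe_lt_coe_iff.mpr (by linarith)
  obtain ⟨e, ⟨z, rfl⟩, hz⟩ := lt_sSup_iff.mp h1
  exact ⟨z, EReal.coe_lt_coe_iff.mp hz⟩


lemma zeroA (hΘo : IsOpen Θ)
    (hϑ : ∀ n : ℕ, 0 < n → ∀ x : Fin n → X, ϑ n x ∈ Θ ∧
      (∀ t ∈ Θ, t < ϑ n x → 0 < ∑ i, ψ (x i) t) ∧
      (∀ t ∈ Θ, ϑ n x < t → ∑ i, ψ (x i) t < 0))
    (hSI : ∀ n m : ℕ, 0 < n → 0 < m → ∀ (x : Fin n → X) (y : Fin m → X),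
      (min (ϑ n x) (ϑ m y) ≤ ϑ (n + m) (Fin.append x y) ∧
        ϑ (n + m) (Fin.append x y) ≤ max (ϑ n x) (ϑ m y)) ∧
      (ϑ n x ≠ ϑ m y →
        min (ϑ n x) (ϑ m y) < ϑ (n + m) (Fin.append x y) ∧
        ϑ (n + m) (Fin.append x y) < max (ϑ n x) (ϑ m y)))
    (hinf : sInf (Set.range fun x : X => (ϑ 1 (fun _ => x) : EReal))
        = sInf (Real.toEReal '' Θ))
    (hsup : sSup (Set.range fun x : X => (ϑ 1 (fun _ => x) : EReal))
        = sSup (Real.toEReal '' Θ))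
    {n : ℕ} (hn : 0 < n) (a : Fin n → X) :
    (∑ i, ψ (a i) (ϑ n a)) = 0 := by
  set θ := ϑ n a with hθdef
  have hθΘ : θ ∈ Θ := (hϑ n hn a).1
  by_contra hne
  rcases lt_or_gt_of_ne hne with hS | hS
  · -- sum < 0 : use z above
    obtain ⟨z, hz⟩ := zabove (ϑ := ϑ) hΘo hsup hθΘ
    obtain ⟨q0, hq0⟩ := exists_nat_gt (ψ z θ / (-(∑ i, ψ (a i) θ)))
    set q := q0 + 1 with hqdef
    obtain ⟨N, hN, b, hb1, hb2⟩ := repS (ψ := ψ) hSI q (by omega) hn a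
    have hne' : ϑ N b ≠ ϑ 1 (fun _ => z) := by rw [hb1]; exact ne_of_lt hz
    have hstrict := ((hSI N 1 hN one_pos b (fun _ => z)).2 hne').1
    rw [hb1, min_eq_left hz.le] at hstrict
    have hpos := (hϑ (N + 1) (by omega) (Fin.append b fun _ => z)).2.1 θ hθΘ hstrict
    rw [sumapp ψ b (fun _ => z) θ, hb2 θ] at hpos
    simp only [Fin.sum_univ_one] at hpos
    have hq0' : ψ z θ < q0 * (-(∑ i, ψ (a i) θ)) :=
      (div_lt_iff₀ (by linarith)).mp hq0
    have : (q : ℝ) = (q0 : ℝ) + 1 := by rw [hqdef]; push_cast; ring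
    nlinarith [hpos, hq0', hS]
  · -- sum > 0 : use z below
    obtain ⟨z, hz⟩ := zbelow (ϑ := ϑ) hΘo hinf hθΘ
    obtain ⟨q0, hq0⟩ := exists_nat_gt ((-(ψ z θ)) / (∑ i, ψ (a i) θ))
    set q := q0 + 1 with hqdef
    obtain ⟨N, hN, b, hb1, hb2⟩ := repS (ψ := ψ) hSI q (by omega) hn a
    have hne' : ϑ N b ≠ ϑ 1 (fun _ => z) := by rw [hb1]; exact (ne_of_lt hz).symm
    have hstrict := ((hSI N 1 hN one_pos b (fun _ => z)).2 hne').2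
    rw [hb1, max_eq_left hz.le] at hstrict
    have hneg := (hϑ (N + 1) (by omega) (Fin.append b fun _ => z)).2.2 θ hθΘ hstrict
    rw [sumapp ψ b (fun _ => z) θ, hb2 θ] at hneg
    simp only [Fin.sum_univ_one] at hneg
    have hq0' : -(ψ z θ) < q0 * (∑ i, ψ (a i) θ) :=
      (div_lt_iff₀ (by linarith)).mp hq0
    have : (q : ℝ) = (q0 : ℝ) + 1 := by rw [hqdef]; push_cast; ring
    nlinarith [hneg, hq0', hS]


lemma combC (hΘo : IsOpen Θ)
    (hϑ : ∀ n : ℕ, 0 < n → ∀ x : Fin n → X, ϑ n x ∈ Θ ∧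
      (∀ t ∈ Θ, t < ϑ n x → 0 < ∑ i, ψ (x i) t) ∧
      (∀ t ∈ Θ, ϑ n x < t → ∑ i, ψ (x i) t < 0))
    (hSI : ∀ n m : ℕ, 0 < n → 0 < m → ∀ (x : Fin n → X) (y : Fin m → X),
      (min (ϑ n x) (ϑ m y) ≤ ϑ (n + m) (Fin.append x y) ∧
        ϑ (n + m) (Fin.append x y) ≤ max (ϑ n x) (ϑ m y)) ∧
      (ϑ n x ≠ ϑ m y →
        min (ϑ n x) (ϑ m y) < ϑ (n + m) (Fin.append x y) ∧
        ϑ (n + m) (Fin.append x y) < max (ϑ n x) (ϑ m y)))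
    (hinf : sInf (Set.range fun x : X => (ϑ 1 (fun _ => x) : EReal))
        = sInf (Real.toEReal '' Θ))
    (hsup : sSup (Set.range fun x : X => (ϑ 1 (fun _ => x) : EReal))
        = sSup (Real.toEReal '' Θ))
    {n m : ℕ} (hn : 0 < n) (hm : 0 < m) (a : Fin n → X) (b : Fin m → X)
    (hab : ϑ n a < ϑ m b) (q p : ℕ) (hq : 0 < q) (hp : 0 < p) :
    ∃ τ ∈ Θ, ϑ n a < τ ∧ τ < ϑ m b ∧
      (∀ t ∈ Θ, t < τ → 0 < q * (∑ i, ψ (a i) t) + p * ∑ i, ψ (b i) t) ∧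
      (∀ t ∈ Θ, τ < t → q * (∑ i, ψ (a i) t) + p * (∑ i, ψ (b i) t) < 0) ∧
      q * (∑ i, ψ (a i) τ) + p * (∑ i, ψ (b i) τ) = 0 := by
  obtain ⟨N1, hN1, a', ha1, ha2⟩ := repS (ψ := ψ) hSI q hq hn a
  obtain ⟨N2, hN2, b', hb1, hb2⟩ := repS (ψ := ψ) hSI p hp hm b
  have hne' : ϑ N1 a' ≠ ϑ N2 b' := by rw [ha1, hb1]; exact ne_of_lt hab
  have hstrict := (hSI N1 N2 hN1 hN2 a' b').2 hne'
  rw [ha1, hb1, min_eq_left hab.le, max_eq_right hab.le] at hstrict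
  set τ := ϑ (N1 + N2) (Fin.append a' b') with hτ
  have hw := hϑ (N1 + N2) (by omega) (Fin.append a' b')
  have hsum : ∀ t, (∑ i, ψ (Fin.append a' b' i) t)
      = q * (∑ i, ψ (a i) t) + p * ∑ i, ψ (b i) t := by
    intro t; rw [sumapp ψ a' b' t, ha2 t, hb2 t]
  refine ⟨τ, hw.1, hstrict.1, hstrict.2, ?_, ?_, ?_⟩
  · intro t ht hlt
    have := hw.2.1 t ht hlt
    rwa [hsum t] at this
  · intro t ht hlt
    have := hw.2.2 t ht hlt
    rwa [hsum t] at this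
  · have := zeroA hΘo hϑ hSI hinf hsup (n := N1 + N2) (by omega) (Fin.append a' b')
    rwa [hsum τ] at this


end


lemma intCont' {Θ : Set ℝ} {Sa Sb : ℝ → ℝ} {θa θb : ℝ}
    (hsub : Set.Icc θa θb ⊆ Θ)
    (hSaneg : ∀ t ∈ Θ, θa < t → Sa t < 0)
    (hSbpos : ∀ t ∈ Θ, t < θb → 0 < Sb t)
    (hcomb : ∀ q p : ℕ, 0 < q → 0 < p → ∃ τ ∈ Θ, θa < τ ∧ τ < θb ∧
        (∀ t ∈ Θ, t < τ → 0 < q * Sa t + p * Sb t) ∧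
        (∀ t ∈ Θ, τ < t → q * Sa t + p * Sb t < 0) ∧
        q * Sa τ + p * Sb τ = 0)
    {t0 : ℝ} (h1 : θa < t0) (h2 : t0 < θb) :
    ContinuousAt (fun t => -Sa t / Sb t) t0 := by
  have ht0Θ : t0 ∈ Θ := hsub ⟨h1.le, h2.le⟩
  have hSb0 : 0 < Sb t0 := hSbpos t0 ht0Θ h2
  have hSa0 : Sa t0 < 0 := hSaneg t0 ht0Θ h1
  set c0 := -Sa t0 / Sb t0 with hc0
  have hc0pos : 0 < c0 := div_pos (by linarith) hSb0
  rw [Metric.continuousAt_iff]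
  intro ε hε
  obtain ⟨p1, q1, hp1, hq1, hl1, hl1'⟩ :=
    helperQ (le_max_right (c0 - ε) 0) (max_lt (by linarith) hc0pos)
  obtain ⟨p2, q2, hp2, hq2, hl2, hl2'⟩ := helperQ hc0pos.le (lt_add_of_pos_right c0 hε)
  obtain ⟨τ1, hτ1Θ, hτ1a, hτ1b, hpos1, hneg1, hzero1⟩ := hcomb q1 p1 hq1 hp1
  obtain ⟨τ2, hτ2Θ, hτ2a, hτ2b, hpos2, hneg2, hzero2⟩ := hcomb q2 p2 hq2 hp2
  have hq1R : (0:ℝ) < q1 := by exact_mod_cast hq1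
  have hq2R : (0:ℝ) < q2 := by exact_mod_cast hq2
  -- combined value at t0 for pair 1 is negative
  have hcomb1 : q1 * Sa t0 + p1 * Sb t0 < 0 := by
    have h := (div_lt_div_iff₀ hq1R hSb0).mp hl1'
    linarith
  have hτ1lt : τ1 < t0 := by
    rcases lt_trichotomy τ1 t0 with h | h | h
    · exact h
    · exfalso; rw [← h] at hcomb1; linarith [hzero1]
    · exfalso; linarith [hpos1 t0 ht0Θ h]
  have hcomb2 : 0 < q2 * Sa t0 + p2 * Sb t0 := by
    have h := (div_lt_div_iff₀ hSb0 hq2R).mp hl2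
    linarith
  have hτ2gt : t0 < τ2 := by
    rcases lt_trichotomy t0 τ2 with h | h | h
    · exact h
    · exfalso; rw [h] at hcomb2; linarith [hzero2]
    · exfalso; linarith [hneg2 t0 ht0Θ h]
  refine ⟨min (t0 - τ1) (τ2 - t0), lt_min (by linarith) (by linarith), ?_⟩
  intro t ht
  rw [Real.dist_eq] at ht
  have habs := abs_lt.mp ht
  have ht1 : τ1 < t := by
    have := min_le_left (t0 - τ1) (τ2 - t0); linarith [habs.1]
  have ht2 : t < τ2 := by
    have := min_le_right (t0 - τ1) (τ2 - t0); linarith [habs.2]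
  have htΘ : t ∈ Θ := hsub ⟨by linarith, by linarith⟩
  have hSbt : 0 < Sb t := hSbpos t htΘ (by linarith)
  have hlow : q1 * Sa t + p1 * Sb t < 0 := hneg1 t htΘ ht1
  have hhigh : 0 < q2 * Sa t + p2 * Sb t := hpos2 t htΘ ht2
  have hF1 : (p1 : ℝ) / q1 < -Sa t / Sb t := by
    rw [div_lt_div_iff₀ hq1R hSbt]; linarith
  have hF2 : -Sa t / Sb t < (p2 : ℝ) / q2 := by
    rw [div_lt_div_iff₀ hSbt hq2R]; linarith
  rw [Real.dist_eq, abs_lt]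
  have hmax : c0 - ε ≤ max (c0 - ε) 0 := le_max_left _ _
  constructor
  · linarith [hl1, hF1]
  · linarith [hl2', hF2]


lemma edgeCont' {Θ : Set ℝ} {Sc Sa Sb : ℝ → ℝ} {θc θa θb : ℝ}
    (hsub : Set.Icc θc θb ⊆ Θ)
    (hca : θc < θa) (hab : θa < θb)
    (hScneg : ∀ t ∈ Θ, θc < t → Sc t < 0)
    (hSapos : ∀ t ∈ Θ, t < θa → 0 < Sa t)
    (hSaneg : ∀ t ∈ Θ, θa < t → Sa t < 0)
    (hSbpos : ∀ t ∈ Θ, t < θb → 0 < Sb t)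
    (hSa0 : Sa θa = 0)
    (hcombCB : ∀ q p : ℕ, 0 < q → 0 < p → ∃ τ ∈ Θ, θc < τ ∧ τ < θb ∧
        (∀ t ∈ Θ, t < τ → 0 < q * Sc t + p * Sb t) ∧
        (∀ t ∈ Θ, τ < t → q * Sc t + p * Sb t < 0) ∧
        q * Sc τ + p * Sb τ = 0)
    (hcombCA : ∀ q p : ℕ, 0 < q → 0 < p → ∃ τ ∈ Θ, θc < τ ∧ τ < θa ∧
        (∀ t ∈ Θ, t < τ → 0 < q * Sc t + p * Sa t) ∧
        (∀ t ∈ Θ, τ < t → q * Sc t + p * Sa t < 0) ∧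
        q * Sc τ + p * Sa τ = 0)
    (hcombAB : ∀ q p : ℕ, 0 < q → 0 < p → ∃ τ ∈ Θ, θa < τ ∧ τ < θb ∧
        (∀ t ∈ Θ, t < τ → 0 < q * Sa t + p * Sb t) ∧
        (∀ t ∈ Θ, τ < t → q * Sa t + p * Sb t < 0) ∧
        q * Sa τ + p * Sb τ = 0) :
    ContinuousAt (fun t => -Sa t / Sb t) θa := by
  have hθaΘ : θa ∈ Θ := hsub ⟨hca.le, hab.le⟩
  have hSbθa : 0 < Sb θa := hSbpos θa hθaΘ hab
  have hScθa : Sc θa < 0 := hScneg θa hθaΘ hca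
  have hF0 : -Sa θa / Sb θa = 0 := by rw [hSa0, neg_zero, zero_div]
  set v := -Sc θa / Sb θa with hv
  rw [Metric.continuousAt_iff]
  intro ε hε
  -- a rational level λ' = p'/q' above v
  obtain ⟨p', q', hp', hq', hl', _⟩ :=
    helperQ (le_max_right v 0) (lt_add_one (max v 0))
  have hp'R : (0:ℝ) < p' := by exact_mod_cast hp'
  have hq'R : (0:ℝ) < q' := by exact_mod_cast hq'
  have hlampos : 0 < (p' : ℝ) / q' := div_pos hp'R hq'R
  obtain ⟨τ', hτ'Θ, hτ'c, hτ'b, hpos', hneg', hzero'⟩ := hcombCB q' p' hq' hp'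
  -- τ' is above θa
  have hθaτ' : θa < τ' := by
    have hval : 0 < q' * Sc θa + p' * Sb θa := by
      have h1 : v < (p' : ℝ) / q' := lt_of_le_of_lt (le_max_left v 0) hl'
      rw [hv, div_lt_div_iff₀ hSbθa hq'R] at h1
      linarith
    rcases lt_trichotomy τ' θa with h | h | h
    · exfalso; linarith [hneg' θa hθaΘ h]
    · exfalso; rw [h] at hzero'; linarith
    · exact h
  -- a small rational level μ = P/Q with μ * λ' < ε
  obtain ⟨P, Q, hP, hQ, _, hPQ⟩ :=
    helperQ (le_refl (0:ℝ)) (div_pos hε hlampos)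
  have hPR : (0:ℝ) < P := by exact_mod_cast hP
  have hQR : (0:ℝ) < Q := by exact_mod_cast hQ
  obtain ⟨τμ, hτμΘ, hτμc, hτμa, hposμ, hnegμ, hzeroμ⟩ := hcombCA P Q hP hQ
  -- a small rational level λ2 < ε for the right side
  obtain ⟨p2, q2, hp2, hq2, _, hl2'⟩ := helperQ (le_refl (0:ℝ)) hε
  have hq2R : (0:ℝ) < q2 := by exact_mod_cast hq2
  obtain ⟨τ2, hτ2Θ, hτ2a, hτ2b, hpos2, hneg2, hzero2⟩ := hcombAB q2 p2 hq2 hp2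
  refine ⟨min (θa - τμ) (τ2 - θa), lt_min (by linarith) (by linarith), ?_⟩
  intro t ht
  rw [Real.dist_eq] at ht
  have habs := abs_lt.mp ht
  have ht1 : τμ < t := by
    have := min_le_left (θa - τμ) (τ2 - θa); linarith [habs.1]
  have ht2 : t < τ2 := by
    have := min_le_right (θa - τμ) (τ2 - θa); linarith [habs.2]
  have htΘ : t ∈ Θ := hsub ⟨by linarith, by linarith⟩
  have hSbt : 0 < Sb t := hSbpos t htΘ (by linarith)
  show |(-Sa t / Sb t) - (-Sa θa / Sb θa)| < ε
  rw [hF0, sub_zero, abs_lt]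
  rcases lt_trichotomy t θa with h | h | h
  · -- left of θa
    have hSat : 0 < Sa t := hSapos t htΘ h
    have hSct : Sc t < 0 := hScneg t htΘ (by linarith)
    have h1 : P * Sc t + Q * Sa t < 0 := hnegμ t htΘ ht1
    have h2 : 0 < q' * Sc t + p' * Sb t := hpos' t htΘ (by linarith)
    have hεq : (P : ℝ) / Q < ε * q' / p' := by rwa [div_div_eq_mul_div] at hPQ
    have hcross : (P : ℝ) * p' < ε * q' * Q := (div_lt_div_iff₀ hQR hp'R).mp hεq
    have s1 : (Q : ℝ) * Sa t < P * (-Sc t) := by linarith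
    have s2 : (q' : ℝ) * (-Sc t) < p' * Sb t := by linarith
    have s3 := mul_lt_mul_of_pos_left s1 hq'R
    have s4 := mul_lt_mul_of_pos_left s2 hPR
    have s5 := mul_lt_mul_of_pos_right hcross hSbt
    clear hcombCB hcombCA hcombAB hposμ hnegμ hpos' hneg' hpos2 hneg2
    have hqQ : (0:ℝ) < (q' : ℝ) * Q := mul_pos hq'R hQR
    have c2 : ((q' : ℝ) * Q) * Sa t < ((q' : ℝ) * Q) * (ε * Sb t) := by
      ring_nf at s3 s4 s5 ⊢
      linarith
    have key : Sa t < ε * Sb t := (mul_lt_mul_iff_right₀ hqQ).mp c2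
    constructor
    · rw [lt_div_iff₀ hSbt]; linarith
    · rw [div_lt_iff₀ hSbt]
      have := mul_pos hε hSbt
      linarith
  · subst h; rw [hF0]; constructor <;> linarith
  · -- right of θa
    have hSat : Sa t < 0 := hSaneg t htΘ h
    have h2 : 0 < q2 * Sa t + p2 * Sb t := hpos2 t htΘ ht2
    constructor
    · have : 0 < -Sa t / Sb t := div_pos (by linarith) hSbt
      linarith
    · rw [div_lt_iff₀ hSbt]
      have hcr : (p2 : ℝ) < ε * q2 := by
        have := (div_lt_iff₀ hq2R).mp hl2'; linarith
      clear hcombCB hcombCA hcombAB hposμ hnegμ hpos' hneg' hpos2 hneg2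
      have c1 := mul_lt_mul_of_pos_right hcr hSbt
      have hq2Sb : (0:ℝ) < (q2 : ℝ) := hq2R
      have c2 : ((q2 : ℝ)) * (-Sa t) < (q2 : ℝ) * (ε * Sb t) := by
        ring_nf at c1 ⊢
        linarith
      have := (mul_lt_mul_iff_right₀ hq2R).mp c2
      linarith

end Helpers

/-- Step 4: for a strictly internal estimator family with the range conditions
`inf ϑ₁(X) = inf Θ`, `sup ϑ₁(X) = sup Θ` and `ϑ_k(x) < ϑ_ℓ(y)`, the ratio
`f_{x,y}` is continuous on its whole domain `Θ \ {ϑ_ℓ(y)}`. -/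
theorem ratio_continuous_domain {X : Type*} [Nonempty X] (Θ : Set ℝ)
    (hΘo : IsOpen Θ) (hΘc : Θ.OrdConnected) (hΘnd : ∃ s ∈ Θ, ∃ t ∈ Θ, s < t)
    (ψ : X → ℝ → ℝ) (hψ : PsiClass Θ ψ)
    (ϑ : ∀ n : ℕ, (Fin n → X) → ℝ)
    (hϑ : ∀ n : ℕ, 0 < n → IsThetaEst Θ ψ n (ϑ n))
    (hSI : ∀ n m : ℕ, 0 < n → 0 < m → ∀ (x : Fin n → X) (y : Fin m → X),
      (min (ϑ n x) (ϑ m y) ≤ ϑ (n + m) (Fin.append x y) ∧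
        ϑ (n + m) (Fin.append x y) ≤ max (ϑ n x) (ϑ m y)) ∧
      (ϑ n x ≠ ϑ m y →
        min (ϑ n x) (ϑ m y) < ϑ (n + m) (Fin.append x y) ∧
        ϑ (n + m) (Fin.append x y) < max (ϑ n x) (ϑ m y)))
    (hinf : sInf (Set.range fun x : X => (ϑ 1 (fun _ => x) : EReal))
        = sInf (Real.toEReal '' Θ))
    (hsup : sSup (Set.range fun x : X => (ϑ 1 (fun _ => x) : EReal))
        = sSup (Real.toEReal '' Θ))
    (k l : ℕ) (hk : 0 < k) (hl : 0 < l)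
    (x : Fin k → X) (y : Fin l → X) (hxy : ϑ k x < ϑ l y) :
    ContinuousOn (fun t => -(∑ i, ψ (x i) t) / (∑ j, ψ (y j) t))
      (Θ \ {ϑ l y}) := by
  have hϑ' : ∀ n : ℕ, 0 < n → ∀ a : Fin n → X, ϑ n a ∈ Θ ∧
      (∀ t ∈ Θ, t < ϑ n a → 0 < ∑ i, ψ (a i) t) ∧
      (∀ t ∈ Θ, ϑ n a < t → ∑ i, ψ (a i) t < 0) := fun n hn => hϑ n hn
  have hθxΘ : ϑ k x ∈ Θ := (hϑ' k hk x).1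
  have hθyΘ : ϑ l y ∈ Θ := (hϑ' l hl y).1
  have hC : ∀ {n m : ℕ}, 0 < n → 0 < m → ∀ (a : Fin n → X) (b : Fin m → X),
      ϑ n a < ϑ m b → ∀ q p : ℕ, 0 < q → 0 < p →
      ∃ τ ∈ Θ, ϑ n a < τ ∧ τ < ϑ m b ∧
        (∀ t ∈ Θ, t < τ → 0 < q * (∑ i, ψ (a i) t) + p * ∑ i, ψ (b i) t) ∧
        (∀ t ∈ Θ, τ < t → q * (∑ i, ψ (a i) t) + p * (∑ i, ψ (b i) t) < 0) ∧
        q * (∑ i, ψ (a i) τ) + p * (∑ i, ψ (b i) τ) = 0 :=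
    fun hn hm a b hab q p hq hp =>
      combC hΘo hϑ' hSI hinf hsup hn hm a b hab q p hq hp
  intro t0 ht0
  have ht0Θ : t0 ∈ Θ := ht0.1
  have ht0ne : t0 ≠ ϑ l y := ht0.2
  apply ContinuousAt.continuousWithinAt
  rcases lt_trichotomy t0 (ϑ k x) with h1 | h1 | h1
  · -- t0 below ϑ k x : use an auxiliary point below t0
    obtain ⟨z, hz⟩ := zbelow (ϑ := ϑ) hΘo hinf ht0Θ
    set c : Fin 1 → X := fun _ => z with hc
    have hθcΘ : ϑ 1 c ∈ Θ := (hϑ' 1 one_pos c).1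
    have hcy : ϑ 1 c < ϑ l y := by
      calc ϑ 1 c < t0 := hz
        _ < ϑ k x := h1
        _ < ϑ l y := hxy
    have hcx : ϑ 1 c < ϑ k x := hz.trans h1
    have H1 : ContinuousAt (fun t => -(∑ i, ψ (c i) t) / ∑ j, ψ (y j) t) t0 :=
      intCont' (hΘc.out hθcΘ hθyΘ) (hϑ' 1 one_pos c).2.2 (hϑ' l hl y).2.1
        (hC one_pos hl c y hcy) hz (h1.trans hxy)
    have H2 : ContinuousAt (fun t => -(∑ i, ψ (c i) t) / ∑ i, ψ (x i) t) t0 :=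
      intCont' (hΘc.out hθcΘ hθxΘ) (hϑ' 1 one_pos c).2.2 (hϑ' k hk x).2.1
        (hC one_pos hk c x hcx) hz h1
    have hSc0 : (∑ i, ψ (c i) t0) < 0 := (hϑ' 1 one_pos c).2.2 t0 ht0Θ hz
    have hSx0 : 0 < (∑ i, ψ (x i) t0) := (hϑ' k hk x).2.1 t0 ht0Θ h1
    have hden : -(∑ i, ψ (c i) t0) / (∑ i, ψ (x i) t0) ≠ 0 :=
      ne_of_gt (div_pos (by linarith) hSx0)
    have H3 := (H1.div H2 hden).neg
    apply H3.congr
    refine Filter.eventuallyEq_of_mem (isOpen_Ioo.mem_nhds ⟨hz, h1⟩) ?_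
    intro t htI
    have htΘ : t ∈ Θ := hΘc.out hθcΘ hθxΘ ⟨htI.1.le, htI.2.le⟩
    have hSc : (∑ i, ψ (c i) t) < 0 := (hϑ' 1 one_pos c).2.2 t htΘ htI.1
    have hSx : 0 < (∑ i, ψ (x i) t) := (hϑ' k hk x).2.1 t htΘ htI.2
    have hSy : 0 < (∑ j, ψ (y j) t) := (hϑ' l hl y).2.1 t htΘ (htI.2.trans hxy)
    have hc0 : (∑ i, ψ (c i) t) ≠ 0 := ne_of_lt hSc
    have hx0 : (∑ i, ψ (x i) t) ≠ 0 := ne_of_gt hSx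
    have hy0 : (∑ j, ψ (y j) t) ≠ 0 := ne_of_gt hSy
    show -((-(∑ i, ψ (c i) t) / ∑ j, ψ (y j) t) / (-(∑ i, ψ (c i) t) / ∑ i, ψ (x i) t))
        = -(∑ i, ψ (x i) t) / ∑ j, ψ (y j) t
    have hc0' : ψ (c 0) t ≠ 0 := by simpa using hc0
    field_simp
  · -- t0 = ϑ k x : edge case
    obtain ⟨z, hz⟩ := zbelow (ϑ := ϑ) hΘo hinf hθxΘ
    set c : Fin 1 → X := fun _ => z with hc
    have hθcΘ : ϑ 1 c ∈ Θ := (hϑ' 1 one_pos c).1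
    have hcy : ϑ 1 c < ϑ l y := hz.trans hxy
    rw [h1]
    exact edgeCont' (hΘc.out hθcΘ hθyΘ) hz hxy (hϑ' 1 one_pos c).2.2
      (hϑ' k hk x).2.1 (hϑ' k hk x).2.2 (hϑ' l hl y).2.1
      (zeroA hΘo hϑ' hSI hinf hsup hk x)
      (hC one_pos hl c y hcy) (hC one_pos hk c x hz) (hC hk hl x y hxy)
  · rcases lt_trichotomy t0 (ϑ l y) with h2 | h2 | h2
    · -- interior case
      exact intCont' (hΘc.out hθxΘ hθyΘ) (hϑ' k hk x).2.2 (hϑ' l hl y).2.1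
        (hC hk hl x y hxy) h1 h2
    · exact absurd h2 ht0ne
    · -- t0 above ϑ l y : auxiliary point above t0
      obtain ⟨z, hz⟩ := zabove (ϑ := ϑ) hΘo hsup ht0Θ
      set c : Fin 1 → X := fun _ => z with hc
      have hθcΘ : ϑ 1 c ∈ Θ := (hϑ' 1 one_pos c).1
      have hxc : ϑ k x < ϑ 1 c := h1.trans hz
      have hyc : ϑ l y < ϑ 1 c := h2.trans hz
      have H1 : ContinuousAt (fun t => -(∑ i, ψ (x i) t) / ∑ i, ψ (c i) t) t0 :=
        intCont' (hΘc.out hθxΘ hθcΘ) (hϑ' k hk x).2.2 (hϑ' 1 one_pos c).2.1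
          (hC hk one_pos x c hxc) h1 hz
      have H2 : ContinuousAt (fun t => -(∑ j, ψ (y j) t) / ∑ i, ψ (c i) t) t0 :=
        intCont' (hΘc.out hθyΘ hθcΘ) (hϑ' l hl y).2.2 (hϑ' 1 one_pos c).2.1
          (hC hl one_pos y c hyc) h2 hz
      have hSy0 : (∑ j, ψ (y j) t0) < 0 := (hϑ' l hl y).2.2 t0 ht0Θ h2
      have hSc0 : 0 < (∑ i, ψ (c i) t0) := (hϑ' 1 one_pos c).2.1 t0 ht0Θ hz
      have hden : -(∑ j, ψ (y j) t0) / (∑ i, ψ (c i) t0) ≠ 0 :=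
        ne_of_gt (div_pos (by linarith) hSc0)
      have H3 := (H1.div H2 hden).neg
      apply H3.congr
      refine Filter.eventuallyEq_of_mem (isOpen_Ioo.mem_nhds ⟨h2, hz⟩) ?_
      intro t htI
      have htΘ : t ∈ Θ := hΘc.out hθyΘ hθcΘ ⟨htI.1.le, htI.2.le⟩
      have hSy : (∑ j, ψ (y j) t) < 0 := (hϑ' l hl y).2.2 t htΘ htI.1
      have hSc : 0 < (∑ i, ψ (c i) t) := (hϑ' 1 one_pos c).2.1 t htΘ htI.2
      have hSx : (∑ i, ψ (x i) t) < 0 :=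
        (hϑ' k hk x).2.2 t htΘ (hxy.trans htI.1)
      have hc0 : (∑ i, ψ (c i) t) ≠ 0 := ne_of_gt hSc
      have hx0 : (∑ i, ψ (x i) t) ≠ 0 := ne_of_lt hSx
      have hy0 : (∑ j, ψ (y j) t) ≠ 0 := ne_of_lt hSy
      show -((-(∑ i, ψ (x i) t) / ∑ i, ψ (c i) t) / (-(∑ j, ψ (y j) t) / ∑ i, ψ (c i) t))
          = -(∑ i, ψ (x i) t) / ∑ j, ψ (y j) t
      have hc0' : ψ (c 0) t ≠ 0 := by simpa using hc0
      field_simp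
end

section
/- Let X be a nonempty set, Θ a nondegenerate open interval of ℝ, and ψ ∈ Ψ(X,Θ) with property [T] such that the estimator family (ϑ_{n,ψ})_{n∈ℕ} is strictly internal and satisfies inf ϑ_{1,ψ}(X) = inf Θ and sup ϑ_{1,ψ}(X) = sup Θ. Let k, ℓ ∈ ℕ, x = (x₁,…,x_k) ∈ X^k and y = (y₁,…,y_ℓ) ∈ X^ℓ with ϑ_{ℓ,ψ}(y) < ϑ_{k,ψ}(x), and define f_{x,y}(t) := −(ψ(x₁,t) + ⋯ + ψ(x_k,t)) / (ψ(y₁,t) + ⋯ + ψ(y_ℓ,t)) for t ∈ Θ \ {ϑ_{ℓ,ψ}(y)}. Then f_{x,y} is positive and decreasing on the open interval (ϑ_{ℓ,ψ}(y), ϑ_{k,ψ}(x)), and f_{x,y} is continuous on Θ \ {ϑ_{ℓ,ψ}(y), ϑ_{k,ψ}(x)}. -/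
open Filter Topology

private lemma ratio_lt_iff {a b : ℝ} (hb : b < 0) {p q : ℝ} (hq : 0 < q) :
    -a / b < p / q ↔ q * a + p * b < 0 := by
  have hb' : 0 < -b := by linarith
  rw [show -a / b = a / -b by rw [div_neg, neg_div], div_lt_div_iff₀ hb' hq]
  constructor <;> intro h <;> nlinarith

private lemma lt_ratio_iff {a b : ℝ} (hb : b < 0) {p q : ℝ} (hq : 0 < q) :
    p / q < -a / b ↔ 0 < q * a + p * b := by
  have hb' : 0 < -b := by linarith
  rw [show -a / b = a / -b by rw [div_neg, neg_div], div_lt_div_iff₀ hq hb']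
  constructor <;> intro h <;> nlinarith

private lemma nat_btwn {a b : ℝ} (ha : 0 ≤ a) (hab : a < b) :
    ∃ m n : ℕ, 0 < n ∧ a < (m:ℝ) / n ∧ (m:ℝ) / n < b ∧ 1 / (n:ℝ) < b - a := by
  obtain ⟨n, hn⟩ := exists_nat_gt (1 / (b - a))
  have hba : (0:ℝ) < b - a := by linarith
  have hn0 : (0:ℝ) < n := lt_trans (by positivity) hn
  have hnn : 0 < n := by exact_mod_cast hn0
  rw [div_lt_iff₀ hba] at hn
  have h1n : 1 / (n:ℝ) < b - a := by
    rw [div_lt_iff₀ hn0]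
    nlinarith
  refine ⟨⌊(n:ℝ) * a⌋₊ + 1, n, hnn, ?_, ?_, h1n⟩
  · rw [lt_div_iff₀ hn0]
    push_cast
    calc a * n = n * a := by ring
    _ < _ := Nat.lt_floor_add_one _
  · rw [div_lt_iff₀ hn0]
    have h2 : (⌊(n:ℝ) * a⌋₊ : ℝ) ≤ n * a := Nat.floor_le (by positivity)
    push_cast
    nlinarith

private lemma nat_btwn' {a ε : ℝ} (ha : 0 < a) (hε : 0 < ε) :
    ∃ m n : ℕ, 0 < n ∧ (m:ℝ) / n < a ∧ a - ε < (m:ℝ) / (n + 1) := by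
  obtain ⟨n, hn⟩ := exists_nat_gt ((a + 1) / ε)
  have hn0 : (0:ℝ) < n := lt_trans (by positivity) hn
  have hnn : 0 < n := by exact_mod_cast hn0
  have hna : (0:ℝ) < (n:ℝ) * a := by positivity
  have hceil : 1 ≤ ⌈(n:ℝ) * a⌉₊ := Nat.ceil_pos.2 hna
  have hcast : ((⌈(n:ℝ) * a⌉₊ - 1 : ℕ) : ℝ) = (⌈(n:ℝ) * a⌉₊ : ℝ) - 1 := by
    rw [Nat.cast_sub hceil, Nat.cast_one]
  rw [div_lt_iff₀ hε] at hn
  refine ⟨⌈(n:ℝ) * a⌉₊ - 1, n, hnn, ?_, ?_⟩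
  · rw [div_lt_iff₀ hn0, hcast]
    have := Nat.ceil_lt_add_one (le_of_lt hna)
    nlinarith
  · rw [lt_div_iff₀ (by positivity : (0:ℝ) < (n:ℝ) + 1), hcast]
    have h2 : (n:ℝ) * a ≤ ⌈(n:ℝ) * a⌉₊ := Nat.le_ceil _
    nlinarith

private def repTup {X : Type*} (n k : ℕ) (x : Fin k → X) : Fin (n * k) → X :=
  fun i => x (finProdFinEquiv.symm i).2

private lemma sum_repTup {X : Type*} (g : X → ℝ → ℝ) (n k : ℕ) (x : Fin k → X) (t : ℝ) :
    ∑ i, g (repTup n k x i) t = n * ∑ i, g (x i) t := by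
  unfold repTup
  rw [show (∑ i, g (x (finProdFinEquiv.symm i).2) t) = ∑ p : Fin n × Fin k, g (x p.2) t from
    Fintype.sum_equiv finProdFinEquiv.symm _ _ (fun i => rfl)]
  simp [Fintype.sum_prod_type, Finset.sum_const, Finset.card_univ]

private lemma sum_append {X : Type*} {p q : ℕ} (g : X → ℝ → ℝ) (u : Fin p → X) (v : Fin q → X) (t : ℝ) :
    ∑ i, g (Fin.append u v i) t = (∑ i, g (u i) t) + ∑ i, g (v i) t := by
  rw [Fin.sum_univ_add (f := fun i => g (Fin.append u v i) t)]
  simp [Fin.append_left, Fin.append_right]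

private theorem ratio_on_Ioo (Θ : Set ℝ) (hΘc : Θ.OrdConnected)
    (Fx Fy : ℝ → ℝ) (a b : ℝ) (hab : a < b) (ha : a ∈ Θ) (hb : b ∈ Θ)
    (hFxp : ∀ t ∈ Θ, t < b → 0 < Fx t)
    (hFyn : ∀ t ∈ Θ, a < t → Fy t < 0)
    (H : ∀ n m : ℕ, 0 < n → ∃ θ θ₁ θ₂ : ℝ,
      (∀ t ∈ Θ, t < θ → 0 < (n:ℝ) * Fx t + (m:ℝ) * Fy t) ∧
      (∀ t ∈ Θ, θ < t → (n:ℝ) * Fx t + (m:ℝ) * Fy t < 0) ∧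
      (∀ t ∈ Θ, t < θ₁ → 0 < (n:ℝ) * Fx t + ((m:ℝ) + 1) * Fy t) ∧
      (∀ t ∈ Θ, θ₁ < t → (n:ℝ) * Fx t + ((m:ℝ) + 1) * Fy t < 0) ∧
      (∀ t ∈ Θ, t < θ₂ → 0 < ((n:ℝ) + 1) * Fx t + (m:ℝ) * Fy t) ∧
      (∀ t ∈ Θ, θ₂ < t → ((n:ℝ) + 1) * Fx t + (m:ℝ) * Fy t < 0) ∧
      (θ ≠ a → θ₁ < max θ a) ∧ (θ ≠ b → min θ b < θ₂)) :
    (∀ t ∈ Set.Ioo a b, 0 < -Fx t / Fy t) ∧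
    AntitoneOn (fun t => -Fx t / Fy t) (Set.Ioo a b) ∧
    ContinuousOn (fun t => -Fx t / Fy t) (Set.Ioo a b) := by
  have hsub : Set.Ioo a b ⊆ Θ := fun t ht => hΘc.out ha hb ⟨ht.1.le, ht.2.le⟩
  have hxp : ∀ t ∈ Set.Ioo a b, 0 < Fx t := fun t ht => hFxp t (hsub ht) ht.2
  have hyn : ∀ t ∈ Set.Ioo a b, Fy t < 0 := fun t ht => hFyn t (hsub ht) ht.1
  have hpos : ∀ t ∈ Set.Ioo a b, 0 < -Fx t / Fy t := by
    intro t ht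
    rw [show -Fx t / Fy t = Fx t / -Fy t by rw [div_neg, neg_div]]
    exact div_pos (hxp t ht) (by linarith [hyn t ht])
  have keyLT : ∀ (m n : ℕ), 0 < n → ∀ s ∈ Set.Ioo a b,
      -Fx s / Fy s < (m:ℝ) / n → (n:ℝ) * Fx s + (m:ℝ) * Fy s < 0 :=
    fun m n hn s hs h => (ratio_lt_iff (hyn s hs) (by exact_mod_cast hn)).1 h
  have keyGT : ∀ (m n : ℕ), 0 < n → ∀ s ∈ Set.Ioo a b,
      (m:ℝ) / n < -Fx s / Fy s → 0 < (n:ℝ) * Fx s + (m:ℝ) * Fy s :=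
    fun m n hn s hs h => (lt_ratio_iff (hyn s hs) (by exact_mod_cast hn)).1 h
  have hanti : AntitoneOn (fun t => -Fx t / Fy t) (Set.Ioo a b) := by
    intro s hs t ht hst
    by_contra hcon
    push_neg at hcon
    obtain ⟨m, n, hn, h1, h2, _⟩ := nat_btwn (hpos s hs).le hcon
    obtain ⟨θ, _, _, hθp, hθn, _⟩ := H n m hn
    have hgt : 0 < (n:ℝ) * Fx t + (m:ℝ) * Fy t := keyGT m n hn t ht h2
    have hgs : (n:ℝ) * Fx s + (m:ℝ) * Fy s < 0 := keyLT m n hn s hs h1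
    have h4 : t ≤ θ := by
      by_contra h; push_neg at h
      exact absurd (hθn t (hsub ht) h) (by linarith)
    have h5 : θ ≤ s := by
      by_contra h; push_neg at h
      exact absurd (hθp s (hsub hs) h) (by linarith)
    have : s = t := le_antisymm hst (h4.trans h5)
    rw [this] at hcon
    exact lt_irrefl _ hcon
  refine ⟨hpos, hanti, ?_⟩
  have claim1 : ∀ c ∈ Set.Ioo a b, ∀ ε : ℝ, 0 < ε →
      ∃ u ∈ Set.Ioo a c, -Fx u / Fy u < -Fx c / Fy c + ε := by
    intro c hc ε hε
    by_contra hcon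
    push_neg at hcon
    obtain ⟨m, n, hn, h1, h2, h3⟩ :=
      nat_btwn (hpos c hc).le (by linarith : -Fx c / Fy c < -Fx c / Fy c + ε / 2)
    obtain ⟨θ, θ₁, _, hθp, hθn, hθ1p, hθ1n, _, _, hs1, _⟩ := H n m hn
    have hgc : (n:ℝ) * Fx c + (m:ℝ) * Fy c < 0 := keyLT m n hn c hc h1
    have hθc : θ ≤ c := by
      by_contra h; push_neg at h
      exact absurd (hθp c (hsub hc) h) (by linarith)
    have hθc' : c ≤ θ := by
      by_contra h; push_neg at h
      obtain ⟨u, hu1, hu2⟩ := exists_between (max_lt hc.1 h)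
      have huI : u ∈ Set.Ioo a b := ⟨(le_max_left _ _).trans_lt hu1, hu2.trans hc.2⟩
      have hfu := hcon u ⟨huI.1, hu2⟩
      have hgu := keyGT m n hn u huI (by linarith)
      exact absurd (hθn u (hsub huI) ((le_max_right _ _).trans_lt hu1)) (by linarith)
    have hθeq : θ = c := le_antisymm hθc hθc'
    have hθ1lt : θ₁ < c := by
      have := hs1 (by rw [hθeq]; exact ne_of_gt hc.1)
      rwa [hθeq, max_eq_left hc.1.le] at this
    obtain ⟨u, hu1, hu2⟩ := exists_between (max_lt hc.1 hθ1lt)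
    have huI : u ∈ Set.Ioo a b := ⟨(le_max_left _ _).trans_lt hu1, hu2.trans hc.2⟩
    have hfu := hcon u ⟨huI.1, hu2⟩
    have hgu := keyGT (m + 1) n hn u huI (by push_cast; rw [add_div]; linarith)
    have hneg := hθ1n u (hsub huI) ((le_max_right _ _).trans_lt hu1)
    push_cast at hgu
    linarith
  have claim2 : ∀ c ∈ Set.Ioo a b, ∀ ε : ℝ, 0 < ε →
      ∃ v ∈ Set.Ioo c b, -Fx c / Fy c - ε < -Fx v / Fy v := by
    intro c hc ε hε
    by_contra hcon
    push_neg at hcon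
    obtain ⟨v₀, hv₀1, hv₀2⟩ := exists_between hc.2
    have hv₀I : v₀ ∈ Set.Ioo a b := ⟨hc.1.trans hv₀1, hv₀2⟩
    have hεc : ε < -Fx c / Fy c := by
      have := hcon v₀ ⟨hv₀1, hv₀2⟩
      have := hpos v₀ hv₀I
      linarith
    obtain ⟨m, n, hn, h1, h2⟩ := nat_btwn' (by linarith : (0:ℝ) < -Fx c / Fy c) hε
    have hnR : (0:ℝ) < n := by exact_mod_cast hn
    have hmn : (m:ℝ) / (n + 1) ≤ (m:ℝ) / n := by
      apply div_le_div_of_nonneg_left (by positivity) hnR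
      linarith
    obtain ⟨θ, _, θ₂, hθp, hθn, _, _, hθ2p, hθ2n, _, hs2⟩ := H n m hn
    have hgc : 0 < (n:ℝ) * Fx c + (m:ℝ) * Fy c := keyGT m n hn c hc h1
    have hθc : c ≤ θ := by
      by_contra h; push_neg at h
      exact absurd (hθn c (hsub hc) h) (by linarith)
    have hθc' : θ ≤ c := by
      by_contra h; push_neg at h
      obtain ⟨v, hv1, hv2⟩ := exists_between (lt_min hc.2 h)
      have hvI : v ∈ Set.Ioo a b := ⟨hc.1.trans hv1, hv2.trans_le (min_le_left _ _)⟩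
      have hfv := hcon v ⟨hv1, hvI.2⟩
      have hgv := keyLT m n hn v hvI (by linarith)
      exact absurd (hθp v (hsub hvI) (hv2.trans_le (min_le_right _ _))) (by linarith)
    have hθeq : θ = c := le_antisymm hθc' hθc
    have hθ2gt : c < θ₂ := by
      have := hs2 (by rw [hθeq]; exact ne_of_lt hc.2)
      rwa [hθeq, min_eq_left hc.2.le] at this
    obtain ⟨v, hv1, hv2⟩ := exists_between (lt_min hc.2 hθ2gt)
    have hvI : v ∈ Set.Ioo a b := ⟨hc.1.trans hv1, hv2.trans_le (min_le_left _ _)⟩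
    have hfv := hcon v ⟨hv1, hvI.2⟩
    have hgv := keyLT m (n + 1) (by omega) v hvI (by push_cast; linarith)
    have hposv := hθ2p v (hsub hvI) (hv2.trans_le (min_le_right _ _))
    push_cast at hgv
    linarith
  intro c hc
  apply ContinuousAt.continuousWithinAt
  rw [Metric.continuousAt_iff]
  intro ε hε
  obtain ⟨u, hu, hfu⟩ := claim1 c hc ε hε
  obtain ⟨v, hv, hfv⟩ := claim2 c hc ε hε
  refine ⟨min (c - u) (v - c), lt_min (by linarith [hu.2]) (by linarith [hv.1]), ?_⟩
  intro w hw
  rw [Real.dist_eq] at hw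
  rw [Real.dist_eq]
  have hw1 := abs_lt.1 (lt_of_lt_of_le hw (min_le_left _ _))
  have hw2 := abs_lt.1 (lt_of_lt_of_le hw (min_le_right _ _))
  have huw : u < w := by linarith [hw1.1]
  have hwv : w < v := by linarith [hw2.2]
  have hwI : w ∈ Set.Ioo a b := ⟨hu.1.trans huw, hwv.trans hv.2⟩
  have huI : u ∈ Set.Ioo a b := ⟨hu.1, hu.2.trans hc.2⟩
  have hvI : v ∈ Set.Ioo a b := ⟨hc.1.trans hv.1, hv.2⟩
  show |(-Fx w / Fy w) - (-Fx c / Fy c)| < ε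
  rcases le_total w c with h | h
  · have e1 : -Fx c / Fy c ≤ -Fx w / Fy w := hanti hwI hc h
    have e2 : -Fx w / Fy w ≤ -Fx u / Fy u := hanti huI hwI huw.le
    rw [abs_lt]; constructor <;> linarith
  · have e1 : -Fx w / Fy w ≤ -Fx c / Fy c := hanti hc hwI h
    have e2 : -Fx v / Fy v ≤ -Fx w / Fy w := hanti hwI hvI hwv.le
    rw [abs_lt]; constructor <;> linarith

private theorem ratio_on_Ioo_sum {X : Type*} (Θ : Set ℝ) (hΘc : Θ.OrdConnected)
    (ψ : X → ℝ → ℝ) (ϑ : ∀ n : ℕ, (Fin n → X) → ℝ)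
    (hϑ : ∀ n : ℕ, 0 < n → IsThetaEst Θ ψ n (ϑ n))
    (hSI : ∀ n m : ℕ, 0 < n → 0 < m → ∀ (x : Fin n → X) (y : Fin m → X),
      (min (ϑ n x) (ϑ m y) ≤ ϑ (n + m) (Fin.append x y) ∧
        ϑ (n + m) (Fin.append x y) ≤ max (ϑ n x) (ϑ m y)) ∧
      (ϑ n x ≠ ϑ m y →
        min (ϑ n x) (ϑ m y) < ϑ (n + m) (Fin.append x y) ∧
        ϑ (n + m) (Fin.append x y) < max (ϑ n x) (ϑ m y)))
    (k l : ℕ) (hk : 0 < k) (hl : 0 < l)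
    (x : Fin k → X) (y : Fin l → X) (hyx : ϑ l y < ϑ k x) :
    (∀ t ∈ Set.Ioo (ϑ l y) (ϑ k x),
      0 < -(∑ i, ψ (x i) t) / (∑ j, ψ (y j) t)) ∧
    AntitoneOn (fun t => -(∑ i, ψ (x i) t) / (∑ j, ψ (y j) t))
      (Set.Ioo (ϑ l y) (ϑ k x)) ∧
    ContinuousOn (fun t => -(∑ i, ψ (x i) t) / (∑ j, ψ (y j) t))
      (Set.Ioo (ϑ l y) (ϑ k x)) := by
  refine ratio_on_Ioo Θ hΘc (fun t => ∑ i, ψ (x i) t) (fun t => ∑ j, ψ (y j) t)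
    (ϑ l y) (ϑ k x) hyx (hϑ l hl y).1 (hϑ k hk x).1
    (fun t ht h => (hϑ k hk x).2.1 t ht h)
    (fun t ht h => (hϑ l hl y).2.2 t ht h) ?_
  intro n m hn
  have hNpos : 0 < n * k + m * l := Nat.add_pos_left (Nat.mul_pos hn hk) _
  set Z : Fin (n * k + m * l) → X := Fin.append (repTup n k x) (repTup m l y) with hZdef
  have hZsum : ∀ t, ∑ i, ψ (Z i) t
      = (n:ℝ) * (∑ i, ψ (x i) t) + (m:ℝ) * (∑ j, ψ (y j) t) := by
    intro t
    rw [hZdef, sum_append, sum_repTup, sum_repTup]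
  have hZYsum : ∀ t, ∑ i, ψ (Fin.append Z y i) t
      = (n:ℝ) * (∑ i, ψ (x i) t) + ((m:ℝ) + 1) * (∑ j, ψ (y j) t) := by
    intro t
    rw [sum_append, hZsum]
    ring
  have hZXsum : ∀ t, ∑ i, ψ (Fin.append Z x i) t
      = ((n:ℝ) + 1) * (∑ i, ψ (x i) t) + (m:ℝ) * (∑ j, ψ (y j) t) := by
    intro t
    rw [sum_append, hZsum]
    ring
  refine ⟨ϑ (n * k + m * l) Z, ϑ (n * k + m * l + l) (Fin.append Z y),
    ϑ (n * k + m * l + k) (Fin.append Z x), ?_, ?_, ?_, ?_, ?_, ?_, ?_, ?_⟩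
  · intro t ht h
    have := (hϑ _ hNpos Z).2.1 t ht h
    rw [hZsum t] at this
    exact this
  · intro t ht h
    have := (hϑ _ hNpos Z).2.2 t ht h
    rw [hZsum t] at this
    exact this
  · intro t ht h
    have := (hϑ _ (by omega) (Fin.append Z y)).2.1 t ht h
    rw [hZYsum t] at this
    exact this
  · intro t ht h
    have := (hϑ _ (by omega) (Fin.append Z y)).2.2 t ht h
    rw [hZYsum t] at this
    exact this
  · intro t ht h
    have := (hϑ _ (by omega) (Fin.append Z x)).2.1 t ht h
    rw [hZXsum t] at this
    exact this
  · intro t ht h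
    have := (hϑ _ (by omega) (Fin.append Z x)).2.2 t ht h
    rw [hZXsum t] at this
    exact this
  · intro hne
    exact ((hSI _ l hNpos hl Z y).2 hne).2
  · intro hne
    exact ((hSI _ k hNpos hk Z x).2 hne).1

/-- Steps 3 and 5: for a strictly internal estimator family with the range
conditions and `ϑ_ℓ(y) < ϑ_k(x)`, the ratio `f_{x,y}` is positive and
decreasing on `(ϑ_ℓ(y), ϑ_k(x))`, and continuous on `Θ \ {ϑ_ℓ(y), ϑ_k(x)}`. -/
theorem ratio_pos_antitone_continuous {X : Type*} [Nonempty X] (Θ : Set ℝ)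
    (hΘo : IsOpen Θ) (hΘc : Θ.OrdConnected) (hΘnd : ∃ s ∈ Θ, ∃ t ∈ Θ, s < t)
    (ψ : X → ℝ → ℝ) (hψ : PsiClass Θ ψ)
    (ϑ : ∀ n : ℕ, (Fin n → X) → ℝ)
    (hϑ : ∀ n : ℕ, 0 < n → IsThetaEst Θ ψ n (ϑ n))
    (hSI : ∀ n m : ℕ, 0 < n → 0 < m → ∀ (x : Fin n → X) (y : Fin m → X),
      (min (ϑ n x) (ϑ m y) ≤ ϑ (n + m) (Fin.append x y) ∧
        ϑ (n + m) (Fin.append x y) ≤ max (ϑ n x) (ϑ m y)) ∧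
      (ϑ n x ≠ ϑ m y →
        min (ϑ n x) (ϑ m y) < ϑ (n + m) (Fin.append x y) ∧
        ϑ (n + m) (Fin.append x y) < max (ϑ n x) (ϑ m y)))
    (hinf : sInf (Set.range fun x : X => (ϑ 1 (fun _ => x) : EReal))
        = sInf (Real.toEReal '' Θ))
    (hsup : sSup (Set.range fun x : X => (ϑ 1 (fun _ => x) : EReal))
        = sSup (Real.toEReal '' Θ))
    (k l : ℕ) (hk : 0 < k) (hl : 0 < l)
    (x : Fin k → X) (y : Fin l → X) (hyx : ϑ l y < ϑ k x) :
    (∀ t ∈ Set.Ioo (ϑ l y) (ϑ k x),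
      0 < -(∑ i, ψ (x i) t) / (∑ j, ψ (y j) t)) ∧
    AntitoneOn (fun t => -(∑ i, ψ (x i) t) / (∑ j, ψ (y j) t))
      (Set.Ioo (ϑ l y) (ϑ k x)) ∧
    ContinuousOn (fun t => -(∑ i, ψ (x i) t) / (∑ j, ψ (y j) t))
      (Θ \ {ϑ l y, ϑ k x}) := by
  obtain ⟨hpos, hanti, hcont⟩ := ratio_on_Ioo_sum Θ hΘc ψ ϑ hϑ hSI k l hk hl x y hyx
  refine ⟨hpos, hanti, ?_⟩
  intro c hc
  obtain ⟨hcΘ, hcne⟩ := hc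
  simp only [Set.mem_insert_iff, Set.mem_singleton_iff, not_or] at hcne
  obtain ⟨hne1, hne2⟩ := hcne
  rcases lt_trichotomy c (ϑ l y) with hclt | hceq | hcgt
  · -- c < ϑ l y : use a point x0 with ϑ 1 (const x0) < c
    obtain ⟨δ, hδ, hball⟩ := Metric.isOpen_iff.1 hΘo c hcΘ
    have hc' : c - δ / 2 ∈ Θ := hball (by
      rw [Metric.mem_ball, Real.dist_eq, abs_of_nonpos (by linarith)]
      linarith)
    have h1 : sInf (Set.range fun x0 : X => ((ϑ 1 fun _ => x0 : ℝ) : EReal)) < (c : EReal) := by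
      rw [hinf]
      refine lt_of_le_of_lt (sInf_le ⟨c - δ / 2, hc', rfl⟩) ?_
      exact_mod_cast (by linarith : c - δ / 2 < c)
    obtain ⟨e, ⟨x0, hx0⟩, hec⟩ := sInf_lt_iff.1 h1
    rw [← hx0] at hec
    have hθ0c : ϑ 1 (fun _ => x0) < c := EReal.coe_lt_coe_iff.1 hec
    have hθ0y : ϑ 1 (fun _ => x0) < ϑ l y := hθ0c.trans hclt
    have hθ0x : ϑ 1 (fun _ => x0) < ϑ k x := hθ0y.trans hyx
    obtain ⟨hApos, _, hAcont⟩ :=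
      ratio_on_Ioo_sum Θ hΘc ψ ϑ hϑ hSI k 1 hk Nat.one_pos x (fun _ => x0) hθ0x
    obtain ⟨hBpos, _, hBcont⟩ :=
      ratio_on_Ioo_sum Θ hΘc ψ ϑ hϑ hSI l 1 hl Nat.one_pos y (fun _ => x0) hθ0y
    have hcA : ContinuousAt
        (fun t => -(∑ i, ψ (x i) t) / (∑ j, ψ ((fun _ : Fin 1 => x0) j) t)) c :=
      hAcont.continuousAt (Ioo_mem_nhds hθ0c (hclt.trans hyx))
    have hcB : ContinuousAt
        (fun t => -(∑ i, ψ (y i) t) / (∑ j, ψ ((fun _ : Fin 1 => x0) j) t)) c :=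
      hBcont.continuousAt (Ioo_mem_nhds hθ0c hclt)
    have hBne : -(∑ i, ψ (y i) c) / (∑ j, ψ ((fun _ : Fin 1 => x0) j) c) ≠ 0 :=
      ne_of_gt (hBpos c ⟨hθ0c, hclt⟩)
    have hmem : (Θ ∩ Set.Ioo (ϑ 1 fun _ => x0) (ϑ l y)) ∈ 𝓝 c :=
      (hΘo.inter isOpen_Ioo).mem_nhds ⟨hcΘ, hθ0c, hclt⟩
    have heq : (fun t => -(-(∑ i, ψ (x i) t) / (∑ j, ψ ((fun _ : Fin 1 => x0) j) t) /
          (-(∑ i, ψ (y i) t) / (∑ j, ψ ((fun _ : Fin 1 => x0) j) t))))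
        =ᶠ[𝓝 c] (fun t => -(∑ i, ψ (x i) t) / (∑ j, ψ (y j) t)) := by
      filter_upwards [hmem] with t ht
      have h0 : ∑ j, ψ ((fun _ : Fin 1 => x0) j) t < 0 :=
        (hϑ 1 Nat.one_pos (fun _ => x0)).2.2 t ht.1 ht.2.1
      have hy' : 0 < ∑ j, ψ (y j) t := (hϑ l hl y).2.1 t ht.1 ht.2.2
      have h0' : (∑ j, ψ ((fun _ : Fin 1 => x0) j) t) ≠ 0 := ne_of_lt h0
      show -(-(∑ i, ψ (x i) t) / (∑ j, ψ ((fun _ : Fin 1 => x0) j) t) /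
          (-(∑ i, ψ (y i) t) / (∑ j, ψ ((fun _ : Fin 1 => x0) j) t)))
          = -(∑ i, ψ (x i) t) / (∑ j, ψ (y j) t)
      rw [div_div_div_comm, div_self h0', div_one, neg_div_neg_eq, ← neg_div]
    exact (ContinuousAt.congr ((hcA.div hcB hBne).neg) heq).continuousWithinAt
  · exact absurd hceq hne1
  · rcases lt_trichotomy c (ϑ k x) with hclt2 | hceq2 | hcgt2
    · exact (hcont.continuousAt (Ioo_mem_nhds hcgt hclt2)).continuousWithinAt
    · exact absurd hceq2 hne2
    · -- ϑ k x < c : use a point x0 with c < ϑ 1 (const x0)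
      obtain ⟨δ, hδ, hball⟩ := Metric.isOpen_iff.1 hΘo c hcΘ
      have hc' : c + δ / 2 ∈ Θ := hball (by
        rw [Metric.mem_ball, Real.dist_eq, abs_of_nonneg (by linarith)]
        linarith)
      have h1 : (c : EReal) < sSup (Set.range fun x0 : X => ((ϑ 1 fun _ => x0 : ℝ) : EReal)) := by
        rw [hsup]
        refine lt_of_lt_of_le ?_ (le_sSup ⟨c + δ / 2, hc', rfl⟩)
        exact_mod_cast (by linarith : c < c + δ / 2)
      obtain ⟨e, ⟨x0, hx0⟩, hec⟩ := lt_sSup_iff.1 h1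
      rw [← hx0] at hec
      have hθ0c : c < ϑ 1 (fun _ => x0) := EReal.coe_lt_coe_iff.1 hec
      have hxθ0 : ϑ k x < ϑ 1 (fun _ => x0) := hcgt2.trans hθ0c
      have hyθ0 : ϑ l y < ϑ 1 (fun _ => x0) := hyx.trans hxθ0
      obtain ⟨hApos, _, hAcont⟩ :=
        ratio_on_Ioo_sum Θ hΘc ψ ϑ hϑ hSI 1 k Nat.one_pos hk (fun _ => x0) x hxθ0
      obtain ⟨hBpos, _, hBcont⟩ :=
        ratio_on_Ioo_sum Θ hΘc ψ ϑ hϑ hSI 1 l Nat.one_pos hl (fun _ => x0) y hyθ0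
      have hcA : ContinuousAt
          (fun t => -(∑ j, ψ ((fun _ : Fin 1 => x0) j) t) / (∑ i, ψ (x i) t)) c :=
        hAcont.continuousAt (Ioo_mem_nhds hcgt2 hθ0c)
      have hcB : ContinuousAt
          (fun t => -(∑ j, ψ ((fun _ : Fin 1 => x0) j) t) / (∑ i, ψ (y i) t)) c :=
        hBcont.continuousAt (Ioo_mem_nhds (hyx.trans hcgt2) hθ0c)
      have hAne : -(∑ j, ψ ((fun _ : Fin 1 => x0) j) c) / (∑ i, ψ (x i) c) ≠ 0 :=
        ne_of_gt (hApos c ⟨hcgt2, hθ0c⟩)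
      have hmem : (Θ ∩ Set.Ioo (ϑ k x) (ϑ 1 fun _ => x0)) ∈ 𝓝 c :=
        (hΘo.inter isOpen_Ioo).mem_nhds ⟨hcΘ, hcgt2, hθ0c⟩
      have heq : (fun t => -(-(∑ j, ψ ((fun _ : Fin 1 => x0) j) t) / (∑ i, ψ (y i) t) /
            (-(∑ j, ψ ((fun _ : Fin 1 => x0) j) t) / (∑ i, ψ (x i) t))))
          =ᶠ[𝓝 c] (fun t => -(∑ i, ψ (x i) t) / (∑ j, ψ (y j) t)) := by
        filter_upwards [hmem] with t ht
        have h0 : 0 < ∑ j, ψ ((fun _ : Fin 1 => x0) j) t :=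
          (hϑ 1 Nat.one_pos (fun _ => x0)).2.1 t ht.1 ht.2.2
        have hx' : ∑ i, ψ (x i) t < 0 := (hϑ k hk x).2.2 t ht.1 ht.2.1
        have hy' : ∑ i, ψ (y i) t < 0 := (hϑ l hl y).2.2 t ht.1 (hyx.trans ht.2.1)
        have h0' : (∑ j, ψ ((fun _ : Fin 1 => x0) j) t) ≠ 0 := ne_of_gt h0
        show -(-(∑ j, ψ ((fun _ : Fin 1 => x0) j) t) / (∑ i, ψ (y i) t) /
            (-(∑ j, ψ ((fun _ : Fin 1 => x0) j) t) / (∑ i, ψ (x i) t)))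
            = -(∑ i, ψ (x i) t) / (∑ j, ψ (y j) t)
        rw [div_div_div_comm, div_self (neg_ne_zero.2 h0'), one_div_div, ← neg_div]
      exact (ContinuousAt.congr ((hcB.div hcA hAne).neg) heq).continuousWithinAt
end

section
/- Let X be a nonempty set, Θ a nondegenerate open interval of ℝ, and ψ ∈ Ψ(X,Θ) with property [T] such that the estimator family (ϑ_{n,ψ})_{n∈ℕ} is strictly internal and satisfies inf ϑ_{1,ψ}(X) = inf Θ and sup ϑ_{1,ψ}(X) = sup Θ. Then ψ has property [Z]: for every k ∈ ℕ and x = (x₁,…,x_k) ∈ X^k, Σᵢ₌₁^k ψ(xᵢ, ϑ_{k,ψ}(x)) = 0. -/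
open Filter Topology

/-- If the estimator family of a `T`-function `ψ` is strictly internal and
satisfies the range conditions, then `ψ` has property [Z]. -/
theorem strict_internal_implies_Z {X : Type*} [Nonempty X] (Θ : Set ℝ)
    (hΘo : IsOpen Θ) (hΘc : Θ.OrdConnected) (hΘnd : ∃ s ∈ Θ, ∃ t ∈ Θ, s < t)
    (ψ : X → ℝ → ℝ) (hψ : PsiClass Θ ψ)
    (ϑ : ∀ n : ℕ, (Fin n → X) → ℝ)
    (hϑ : ∀ n : ℕ, 0 < n → IsThetaEst Θ ψ n (ϑ n))
    (hSI : ∀ n m : ℕ, 0 < n → 0 < m → ∀ (x : Fin n → X) (y : Fin m → X),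
      (min (ϑ n x) (ϑ m y) ≤ ϑ (n + m) (Fin.append x y) ∧
        ϑ (n + m) (Fin.append x y) ≤ max (ϑ n x) (ϑ m y)) ∧
      (ϑ n x ≠ ϑ m y →
        min (ϑ n x) (ϑ m y) < ϑ (n + m) (Fin.append x y) ∧
        ϑ (n + m) (Fin.append x y) < max (ϑ n x) (ϑ m y)))
    (hinf : sInf (Set.range fun x : X => (ϑ 1 (fun _ => x) : EReal))
        = sInf (Real.toEReal '' Θ))
    (hsup : sSup (Set.range fun x : X => (ϑ 1 (fun _ => x) : EReal))
        = sSup (Real.toEReal '' Θ))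
    : ∀ k : ℕ, 0 < k → ∀ x : Fin k → X, ∑ i, ψ (x i) (ϑ k x) = 0 := by

  intro k hk x
  set S := ∑ i, ψ (x i) (ϑ k x) with hS
  set θ := ϑ k x with hθ
  have hθΘ : θ ∈ Θ := ((hϑ k hk) x).1
  rcases lt_trichotomy S 0 with hS0 | hS0 | hS0
  · -- S < 0 : pick y with θ < ϑ 1 (const y)
    obtain ⟨ε, hε, hball⟩ := Metric.isOpen_iff.1 hΘo θ hθΘ
    have htΘ : θ + ε / 2 ∈ Θ := by
      apply hball
      rw [Metric.mem_ball, Real.dist_eq, show θ + ε / 2 - θ = ε / 2 by ring,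
        abs_of_pos (by positivity)]
      linarith
    have hlt : (θ : EReal) < sSup (Set.range fun x : X => (ϑ 1 (fun _ => x) : EReal)) := by
      rw [hsup]
      refine lt_of_lt_of_le ?_ (le_sSup ⟨θ + ε / 2, htΘ, rfl⟩)
      exact_mod_cast (by linarith : θ < θ + ε / 2)
    obtain ⟨b, ⟨y, rfl⟩, hby⟩ := lt_sSup_iff.1 hlt
    have hy : θ < ϑ 1 (fun _ => y) := by exact_mod_cast show (θ : EReal) < ((ϑ 1 fun _ => y : ℝ) : EReal) from hby
    have key : ∀ m : ℕ, ∃ n : ℕ, ∃ w : Fin n → X, 0 < n ∧ θ < ϑ n w ∧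
        ∑ i, ψ (w i) θ = ψ y θ + (m : ℝ) * S := by
      intro m
      induction m with
      | zero => exact ⟨1, fun _ => y, one_pos, hy, by simp⟩
      | succ m ih =>
        obtain ⟨n, w, hn, hw, hsum⟩ := ih
        refine ⟨n + k, Fin.append w x, by positivity, ?_, ?_⟩
        · have h := ((hSI n k hn hk w x).2 (by exact ne_of_gt (hθ ▸ hw))).1
          calc θ = min (ϑ n w) (ϑ k x) := by rw [min_eq_right (le_of_lt (hθ ▸ hw)), ← hθ]
            _ < _ := h
        · rw [Fin.sum_univ_add]
          simp only [Fin.append_left, Fin.append_right]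
          rw [hsum, ← hS]
          push_cast
          ring
    obtain ⟨m, hm⟩ := Archimedean.arch (ψ y θ) (by linarith : (0:ℝ) < -S)
    obtain ⟨n, w, hn, hw, hsum⟩ := key m
    have hpos : 0 < ∑ i, ψ (w i) θ := ((hϑ n hn) w).2.1 θ hθΘ hw
    rw [hsum] at hpos
    rw [nsmul_eq_mul] at hm
    nlinarith
  · exact hS0
  · -- 0 < S : pick y with ϑ 1 (const y) < θ
    obtain ⟨ε, hε, hball⟩ := Metric.isOpen_iff.1 hΘo θ hθΘ
    have htΘ : θ - ε / 2 ∈ Θ := by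
      apply hball
      rw [Metric.mem_ball, Real.dist_eq, show θ - ε / 2 - θ = -(ε / 2) by ring,
        abs_neg, abs_of_pos (by positivity)]
      linarith
    have hlt : sInf (Set.range fun x : X => (ϑ 1 (fun _ => x) : EReal)) < (θ : EReal) := by
      rw [hinf]
      refine lt_of_le_of_lt (sInf_le ⟨θ - ε / 2, htΘ, rfl⟩) ?_
      exact_mod_cast (by linarith : θ - ε / 2 < θ)
    obtain ⟨b, ⟨y, rfl⟩, hby⟩ := sInf_lt_iff.1 hlt
    have hy : ϑ 1 (fun _ => y) < θ := by exact_mod_cast show ((ϑ 1 fun _ => y : ℝ) : EReal) < (θ : EReal) from hby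
    have key : ∀ m : ℕ, ∃ n : ℕ, ∃ w : Fin n → X, 0 < n ∧ ϑ n w < θ ∧
        ∑ i, ψ (w i) θ = ψ y θ + (m : ℝ) * S := by
      intro m
      induction m with
      | zero => exact ⟨1, fun _ => y, one_pos, hy, by simp⟩
      | succ m ih =>
        obtain ⟨n, w, hn, hw, hsum⟩ := ih
        refine ⟨n + k, Fin.append w x, by positivity, ?_, ?_⟩
        · have h := ((hSI n k hn hk w x).2 (by exact ne_of_lt (hθ ▸ hw))).2
          calc ϑ (n + k) (Fin.append w x) < max (ϑ n w) (ϑ k x) := h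
            _ = θ := by rw [max_eq_right (le_of_lt (hθ ▸ hw)), ← hθ]
        · rw [Fin.sum_univ_add]
          simp only [Fin.append_left, Fin.append_right]
          rw [hsum, ← hS]
          push_cast
          ring
    obtain ⟨m, hm⟩ := Archimedean.arch (-ψ y θ) hS0
    obtain ⟨n, w, hn, hw, hsum⟩ := key m
    have hneg : ∑ i, ψ (w i) θ < 0 := ((hϑ n hn) w).2.2 θ hθΘ hw
    rw [hsum] at hneg
    rw [nsmul_eq_mul] at hm
    nlinarith
end

section
/- Let X be a nonempty set, Θ a nondegenerate open interval of ℝ, and ψ* ∈ Ψ(X,Θ) with property [T]. Let u, v ∈ X with ϑ_{1,ψ*}(u) ≠ ϑ_{1,ψ*}(v), and define ψ : X × Θ → ℝ by ψ(x,t) := ψ*(x,t) / (|ψ*(u,t)| + |ψ*(v,t)|). Then ψ is well defined (the denominator is positive for every t ∈ Θ), ψ ∈ Ψ(X,Θ) has property [T], and ϑ_{n,ψ}(x₁,…,xₙ) = ϑ_{n,ψ*}(x₁,…,xₙ) for all n ∈ ℕ and x₁,…,xₙ ∈ X. -/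
open Filter Topology

/-- Step 6/7: normalizing a `T`-function `ψ*` by `|ψ*(u,·)| + |ψ*(v,·)|` for
`u, v` with `ϑ₁(u) ≠ ϑ₁(v)` gives a well-defined function in `Ψ(X,Θ)` with
property [T] and the same estimators. -/
theorem normalized_psi_estimator {X : Type*} [Nonempty X] (Θ : Set ℝ)
    (hΘo : IsOpen Θ) (hΘc : Θ.OrdConnected) (hΘnd : ∃ s ∈ Θ, ∃ t ∈ Θ, s < t)
    (ψs : X → ℝ → ℝ) (hψs : PsiClass Θ ψs)
    (ϑ : ∀ n : ℕ, (Fin n → X) → ℝ)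
    (hϑ : ∀ n : ℕ, 0 < n → IsThetaEst Θ ψs n (ϑ n))
    (u v : X) (huv : ϑ 1 (fun _ => u) ≠ ϑ 1 (fun _ => v)) :
    (∀ t ∈ Θ, 0 < |ψs u t| + |ψs v t|) ∧
    PsiClass Θ (fun x t => ψs x t / (|ψs u t| + |ψs v t|)) ∧
    (∀ n : ℕ, 0 < n →
      IsThetaEst Θ (fun x t => ψs x t / (|ψs u t| + |ψs v t|)) n (ϑ n)) := by
  have key : ∀ t ∈ Θ, 0 < |ψs u t| + |ψs v t| := by
    intro t ht
    by_contra h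
    push_neg at h
    have h1 := abs_nonneg (ψs u t)
    have h2 := abs_nonneg (ψs v t)
    have hu0 : ψs u t = 0 := by
      have : |ψs u t| = 0 := by linarith
      simpa [abs_eq_zero] using this
    have hv0 : ψs v t = 0 := by
      have : |ψs v t| = 0 := by linarith
      simpa [abs_eq_zero] using this
    obtain ⟨hmu, hlu, hgu⟩ := hϑ 1 one_pos (fun _ => u)
    obtain ⟨hmv, hlv, hgv⟩ := hϑ 1 one_pos (fun _ => v)
    have htu : t = ϑ 1 (fun _ => u) := by
      rcases lt_trichotomy t (ϑ 1 (fun _ => u)) with h' | h' | h'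
      · have := hlu t ht h'
        simp [Fin.sum_univ_one, hu0] at this
      · exact h'
      · have := hgu t ht h'
        simp [Fin.sum_univ_one, hu0] at this
    have htv : t = ϑ 1 (fun _ => v) := by
      rcases lt_trichotomy t (ϑ 1 (fun _ => v)) with h' | h' | h'
      · have := hlv t ht h'
        simp [Fin.sum_univ_one, hv0] at this
      · exact h'
      · have := hgv t ht h'
        simp [Fin.sum_univ_one, hv0] at this
    exact huv (htu ▸ htv)
  refine ⟨key, ?_, ?_⟩
  · intro x
    obtain ⟨tp, htp, tm, htm, hlt, hpos, hneg⟩ := hψs x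
    exact ⟨tp, htp, tm, htm, hlt, div_pos hpos (key tp htp),
      div_neg_of_neg_of_pos hneg (key tm htm)⟩
  · intro n hn x
    obtain ⟨hm, hl, hg⟩ := hϑ n hn x
    refine ⟨hm, ?_, ?_⟩
    · intro t ht hlt
      rw [← Finset.sum_div]
      exact div_pos (hl t ht hlt) (key t ht)
    · intro t ht hgt
      rw [← Finset.sum_div]
      exact div_neg_of_neg_of_pos (hg t ht hgt) (key t ht)
end

section
/- Let X be a nonempty set, Θ a nondegenerate open interval of ℝ, and M : ⋃_{n≥1} Xⁿ → Θ a function (with M_n its restriction to Xⁿ) that is symmetric, internal, and asymptotically idempotent, and satisfies inf M₁(X) = inf Θ and sup M₁(X) = sup Θ. Then there exists a function ψ ∈ Ψ(X,Θ) possessing property [T] such that ϑ_{n,ψ}(x₁,…,xₙ) = M_n(x₁,…,xₙ) for all n ∈ ℕ and x₁,…,xₙ ∈ X. -/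
open Filter Topology

namespace PsiAux

universe u
variable {X : Type u} (M : ∀ n : ℕ, (Fin n → X) → ℝ)

/-- `M` evaluated on a list. -/
def Ml (l : List X) : ℝ := M l.length l.get

lemma M_cast {n m : ℕ} (h : n = m) (f : Fin m → X) : M n (f ∘ Fin.cast h) = M m f := by
  subst h; rfl

lemma Ml_ofFn {n : ℕ} (f : Fin n → X) : Ml M (List.ofFn f) = M n f := by
  rw [Ml]
  have h : (List.ofFn f).length = n := List.length_ofFn
  rw [← M_cast M h f]
  congr 1
  funext i
  rw [List.get_ofFn]
  rfl

lemma Ml_append (l₁ l₂ : List X) :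
    Ml M (l₁ ++ l₂) = M (l₁.length + l₂.length) (Fin.append l₁.get l₂.get) := by
  have h : l₁.length + l₂.length = (l₁ ++ l₂).length := List.length_append.symm
  rw [Ml, ← M_cast M h]
  congr 1
  funext i
  induction i using Fin.addCases with
  | left j =>
      rw [Fin.append_left]
      simp only [Function.comp_apply, List.get_eq_getElem]
      exact List.getElem_append_left j.isLt
  | right j =>
      rw [Fin.append_right]
      simp only [Function.comp_apply, List.get_eq_getElem]
      rw [List.getElem_append_right (by simp [Fin.cast, Fin.natAdd] : l₁.length ≤ (Fin.cast h (Fin.natAdd l₁.length j)).val)]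
      simp [Fin.cast, Fin.natAdd]

variable (hsym : ∀ n : ℕ, 0 < n → ∀ (x : Fin n → X) (π : Equiv.Perm (Fin n)),
      M n (x ∘ π) = M n x)

include hsym in
lemma Ml_swap (r s : List X) (x y : X) :
    Ml M (r ++ x :: y :: s) = Ml M (r ++ y :: x :: s) := by
  have hlen : (r ++ y :: x :: s).length = (r ++ x :: y :: s).length := by simp
  have hpos : 0 < (r ++ x :: y :: s).length := by simp
  have h₀ : r.length < (r ++ x :: y :: s).length := by simp
  have h₁ : r.length + 1 < (r ++ x :: y :: s).length := by simp
  set i₀ : Fin (r ++ x :: y :: s).length := ⟨r.length, h₀⟩ with hi₀def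
  set i₁ : Fin (r ++ x :: y :: s).length := ⟨r.length + 1, h₁⟩ with hi₁def
  have key : (r ++ x :: y :: s).get ∘ (Equiv.swap i₀ i₁) = (r ++ y :: x :: s).get ∘ Fin.cast hlen.symm := by
    funext i
    simp only [Function.comp_apply, List.get_eq_getElem]
    by_cases hi0 : i = i₀
    · subst hi0
      rw [Equiv.swap_apply_left i₀ i₁]
      show (r ++ x :: y :: s)[(r.length+1 : ℕ)] = (r ++ y :: x :: s)[(r.length : ℕ)]'(by simp)
      rw [List.getElem_append_right (by omega), List.getElem_append_right (by omega)]
      simp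
    · by_cases hi1 : i = i₁
      · subst hi1
        rw [Equiv.swap_apply_right i₀ i₁]
        show (r ++ x :: y :: s)[(r.length : ℕ)] = (r ++ y :: x :: s)[(r.length+1 : ℕ)]'(by simp)
        rw [List.getElem_append_right (by omega), List.getElem_append_right (by omega)]
        simp
      · rw [Equiv.swap_apply_of_ne_of_ne hi0 hi1]
        show (r ++ x :: y :: s)[(i : ℕ)] = (r ++ y :: x :: s)[(i : ℕ)]'(by omega)
        have hne0 : (i : ℕ) ≠ r.length := fun h => hi0 (Fin.ext h)
        have hne1 : (i : ℕ) ≠ r.length + 1 := fun h => hi1 (Fin.ext h)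
        rcases lt_or_ge (i : ℕ) r.length with hlt | hge
        · rw [List.getElem_append_left hlt, List.getElem_append_left hlt]
        · have hge2 : r.length + 2 ≤ (i : ℕ) := by omega
          rw [List.getElem_append_right (by omega), List.getElem_append_right (by omega)]
          obtain ⟨m, hm⟩ : ∃ m, (i : ℕ) - r.length = m + 2 := ⟨(i : ℕ) - r.length - 2, by omega⟩
          apply Option.some.inj
          rw [← List.getElem?_eq_getElem, ← List.getElem?_eq_getElem, hm]
          simp
  calc Ml M (r ++ x :: y :: s) = M _ ((r ++ x :: y :: s).get ∘ (Equiv.swap i₀ i₁)) :=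
        (hsym _ hpos (r ++ x :: y :: s).get (Equiv.swap i₀ i₁)).symm
    _ = M _ ((r ++ y :: x :: s).get ∘ Fin.cast hlen.symm) := by rw [key]
    _ = M _ ((r ++ y :: x :: s).get) := M_cast M hlen.symm _
    _ = Ml M (r ++ y :: x :: s) := rfl

include hsym in
lemma Ml_perm {l₁ l₂ : List X} (h : l₁.Perm l₂) : Ml M l₁ = Ml M l₂ := by
  have main : ∀ r, Ml M (r ++ l₁) = Ml M (r ++ l₂) := by
    induction h with
    | nil => intro r; rfl
    | cons a hp ih =>
        rename_i t₁ t₂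
        intro r
        calc Ml M (r ++ a :: t₁) = Ml M (r ++ [a] ++ t₁) := by rw [List.append_assoc]; rfl
          _ = Ml M (r ++ [a] ++ t₂) := ih (r ++ [a])
          _ = Ml M (r ++ a :: t₂) := by rw [List.append_assoc]; rfl
    | swap x y l =>
        intro r
        exact Ml_swap M hsym r l y x
    | trans _ _ ih₁ ih₂ => intro r; exact (ih₁ r).trans (ih₂ r)
  simpa using main []


/-- pairing of a weight function with a list -/
def pw (w : X → ℝ) (l : List X) : ℝ := (l.map w).sum

lemma pw_eq_sum (w : X → ℝ) (l : List X) : pw w l = ∑ i : Fin l.length, w (l.get i) := by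
  conv_lhs => rw [pw, ← List.ofFn_get l]
  rw [List.map_ofFn, List.sum_ofFn]
  rfl

lemma pw_ofFn (w : X → ℝ) {n : ℕ} (f : Fin n → X) :
    pw w (List.ofFn f) = ∑ i : Fin n, w (f i) := by
  rw [pw, List.map_ofFn, List.sum_ofFn]; rfl

section internal
variable (hint : ∀ n k : ℕ, 0 < n → 0 < k → ∀ (x : Fin n → X) (y : Fin k → X),
      min (M n x) (M k y) ≤ M (n + k) (Fin.append x y) ∧
      M (n + k) (Fin.append x y) ≤ max (M n x) (M k y))

include hint in
lemma Ml_internal {l₁ l₂ : List X} (h₁ : l₁ ≠ []) (h₂ : l₂ ≠ []) :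
    min (Ml M l₁) (Ml M l₂) ≤ Ml M (l₁ ++ l₂) ∧
      Ml M (l₁ ++ l₂) ≤ max (Ml M l₁) (Ml M l₂) := by
  rw [Ml_append M]
  exact hint _ _ (List.length_pos_iff.mpr h₁) (List.length_pos_iff.mpr h₂) l₁.get l₂.get

include hint in
lemma Ml_flatten_mem {s : Set ℝ} (hs : s.OrdConnected) :
    ∀ ls : List (List X), ls ≠ [] → (∀ l ∈ ls, l ≠ [] ∧ Ml M l ∈ s) →
      Ml M ls.flatten ∈ s := by
  intro ls
  induction ls with
  | nil => intro h; exact absurd rfl h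
  | cons l ls ih =>
      intro _ hmem
      by_cases hls : ls = []
      · subst hls
        simpa using (hmem l (by simp)).2
      · have h1 := hmem l (by simp)
        have h2 : Ml M ls.flatten ∈ s := ih hls (fun l' hl' => hmem l' (by simp [hl']))
        have hfne : ls.flatten ≠ [] := by
          intro hc
          rw [List.flatten_eq_nil_iff] at hc
          rcases List.exists_mem_of_ne_nil ls hls with ⟨l', hl'⟩
          exact (hmem l' (by simp [hl'])).1 (hc l' hl')
        have hflat : (l :: ls).flatten = l ++ ls.flatten := by simp
        rw [hflat]
        have hi := Ml_internal M hint h1.1 hfne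
        have hmin : min (Ml M l) (Ml M ls.flatten) ∈ s := by
          rcases min_cases (Ml M l) (Ml M ls.flatten) with ⟨he, _⟩ | ⟨he, _⟩ <;> rw [he]
          exacts [h1.2, h2]
        have hmax : max (Ml M l) (Ml M ls.flatten) ∈ s := by
          rcases max_cases (Ml M l) (Ml M ls.flatten) with ⟨he, _⟩ | ⟨he, _⟩ <;> rw [he]
          exacts [h1.2, h2]
        exact hs.out hmin hmax ⟨hi.1, hi.2⟩

end internal

lemma sum_repBlock {k : ℕ} (n : ℕ) (f : Fin k → X) (g : X → ℝ) :
    ∑ i : Fin (k * n), g (repBlock n f i) = n • ∑ j : Fin k, g (f j) := by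
  rcases Nat.eq_zero_or_pos n with hn | hn
  · subst hn
    simp
  · have key : ∑ i : Fin (k * n), g (repBlock n f i)
        = ∑ p : Fin k × Fin n, g (f p.1) := by
      refine Finset.sum_nbij' (fun (i : Fin (k * n)) => ((⟨(i : ℕ) / n, by
          have := i.isLt; exact (Nat.div_lt_iff_lt_mul hn).mpr this⟩ : Fin k), (⟨(i : ℕ) % n, Nat.mod_lt _ hn⟩ : Fin n)))
        (fun (p : Fin k × Fin n) => (⟨(p.1 : ℕ) * n + (p.2 : ℕ), by
          calc (p.1 : ℕ) * n + (p.2 : ℕ) < (p.1 : ℕ) * n + n := by omega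
            _ = ((p.1 : ℕ) + 1) * n := by ring
            _ ≤ k * n := Nat.mul_le_mul_right n p.1.isLt⟩ : Fin (k * n))) ?_ ?_ ?_ ?_ ?_
      · intro i _; exact Finset.mem_univ _
      · intro p _; exact Finset.mem_univ _
      · intro i _
        ext
        simp only []
        rw [Nat.div_add_mod']
      · intro p _
        have e1 : ((p.1 : ℕ) * n + (p.2 : ℕ)) / n = (p.1 : ℕ) := by
          rw [Nat.mul_comm, Nat.mul_add_div hn, Nat.div_eq_of_lt p.2.isLt, Nat.add_zero]
        have e2 : ((p.1 : ℕ) * n + (p.2 : ℕ)) % n = (p.2 : ℕ) := by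
          rw [Nat.mul_comm, Nat.mul_add_mod]
          exact Nat.mod_eq_of_lt p.2.isLt
        ext
        · exact e1
        · exact e2
      · intro i _
        rw [repBlock]
    rw [key, Fintype.sum_prod_type]
    rw [Finset.smul_sum]
    congr 1
    funext j
    simp [Finset.sum_const]


theorem gordan : ∀ (d : ℕ) {ι : Type u} [Fintype ι] (v : ι → Fin d → ℚ),
    (∃ w : Fin d → ℚ, ∀ i, 0 < ∑ j, v i j * w j) ∨
    (∃ lam : ι → ℚ, (∀ i, 0 ≤ lam i) ∧ (∃ i, lam i ≠ 0) ∧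
      ∀ j, ∑ i, lam i * v i j = 0) := by
  intro d
  induction d with
  | zero =>
      intro ι _ v
      rcases isEmpty_or_nonempty ι with h | h
      · exact Or.inl ⟨0, fun i => (h.false i).elim⟩
      · exact Or.inr ⟨fun _ => 1, fun i => zero_le_one, ⟨h.some, one_ne_zero⟩,
          fun j => j.elim0⟩
  | succ d ih =>
      intro ι _ v
      classical
      set a : ι → Fin d → ℚ := fun i j => v i j.castSucc with ha
      set c : ι → ℚ := fun i => v i (Fin.last d) with hc
      set v' : ({i // c i = 0} ⊕ ({p // 0 < c p} × {q // c q < 0})) → Fin d → ℚ :=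
        Sum.elim (fun i0 => a i0.1)
          (fun pq j => c pq.1.1 * a pq.2.1 j - c pq.2.1 * a pq.1.1 j) with hv'
      rcases ih v' with ⟨w', hw'⟩ | ⟨lam', h0, hne, hsum⟩
      · -- solvable case
        left
        set A : ι → ℚ := fun i => ∑ j, a i j * w' j with hA
        have hzero : ∀ i, c i = 0 → 0 < A i := fun i h => hw' (Sum.inl ⟨i, h⟩)
        have hpair : ∀ (p q : ι), 0 < c p → c q < 0 →
            0 < c p * A q - c q * A p := by
          intro p q hp hq
          have h1 := hw' (Sum.inr (⟨p, hp⟩, ⟨q, hq⟩))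
          have expand : ∑ j, v' (Sum.inr (⟨p, hp⟩, ⟨q, hq⟩)) j * w' j
              = c p * A q - c q * A p := by
            simp only [hv', Sum.elim_inr, hA]
            rw [Finset.mul_sum, Finset.mul_sum, ← Finset.sum_sub_distrib]
            refine Finset.sum_congr rfl fun j _ => ?_
            ring
          rw [expand] at h1
          exact h1
        have hkey : ∀ (p q : ι), 0 < c p → c q < 0 →
            -A p / c p < -A q / c q := by
          intro p q hp hq
          have h1 := hpair p q hp hq
          have hq' : (0:ℚ) < -c q := by linarith
          have e : -A q / c q = A q / (-c q) := by
            rw [div_neg, neg_div]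
          rw [e, div_lt_div_iff₀ hp hq', neg_mul]
          nlinarith
        set Slo : Finset ℚ := (Finset.univ.filter (fun i => 0 < c i)).image
          (fun i => -A i / c i) with hSlo
        set Shi : Finset ℚ := (Finset.univ.filter (fun i => c i < 0)).image
          (fun i => -A i / c i) with hShi
        have hlohi : ∀ lo ∈ Slo, ∀ hi ∈ Shi, lo < hi := by
          intro lo hlo hi hhi
          simp only [hSlo, hShi, Finset.mem_image, Finset.mem_filter] at hlo hhi
          obtain ⟨p, ⟨_, hp⟩, rfl⟩ := hlo
          obtain ⟨q, ⟨_, hq⟩, rfl⟩ := hhi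
          exact hkey p q hp hq
        obtain ⟨θ, hθlo, hθhi⟩ : ∃ θ : ℚ, (∀ lo ∈ Slo, lo < θ) ∧ (∀ hi ∈ Shi, θ < hi) := by
          by_cases h1 : Slo.Nonempty
          · by_cases h2 : Shi.Nonempty
            · refine ⟨(Slo.max' h1 + Shi.min' h2) / 2, ?_, ?_⟩
              · intro lo hlo
                have h3 := Slo.le_max' lo hlo
                have h4 := hlohi _ (Slo.max'_mem h1) _ (Shi.min'_mem h2)
                linarith
              · intro hi hhi
                have h3 := Shi.min'_le hi hhi
                have h4 := hlohi _ (Slo.max'_mem h1) _ (Shi.min'_mem h2)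
                linarith
            · refine ⟨Slo.max' h1 + 1, fun lo hlo => ?_, fun hi hhi => ?_⟩
              · have := Slo.le_max' lo hlo; linarith
              · exact absurd ⟨hi, hhi⟩ h2
          · by_cases h2 : Shi.Nonempty
            · refine ⟨Shi.min' h2 - 1, fun lo hlo => absurd ⟨lo, hlo⟩ h1, fun hi hhi => ?_⟩
              have := Shi.min'_le hi hhi; linarith
            · exact ⟨0, fun lo hlo => absurd ⟨lo, hlo⟩ h1, fun hi hhi => absurd ⟨hi, hhi⟩ h2⟩
        refine ⟨Fin.snoc w' θ, fun i => ?_⟩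
        have hexp : ∑ j, v i j * (Fin.snoc w' θ : Fin (d+1) → ℚ) j = A i + c i * θ := by
          rw [Fin.sum_univ_castSucc]
          simp only [Fin.snoc_castSucc, Fin.snoc_last, hA, ha, hc]
        rw [hexp]
        rcases lt_trichotomy (c i) 0 with hci | hci | hci
        · have hmem : -A i / c i ∈ Shi := by
            simp only [hShi, Finset.mem_image, Finset.mem_filter]
            exact ⟨i, ⟨Finset.mem_univ _, hci⟩, rfl⟩
          have hθ := hθhi _ hmem
          have h2 : -A i / c i * c i = -A i := div_mul_cancel₀ _ (ne_of_lt hci)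
          nlinarith
        · rw [hci]
          simpa using hzero i hci
        · have hmem : -A i / c i ∈ Slo := by
            simp only [hSlo, Finset.mem_image, Finset.mem_filter]
            exact ⟨i, ⟨Finset.mem_univ _, hci⟩, rfl⟩
          have hθ := hθlo _ hmem
          have h2 : -A i / c i * c i = -A i := div_mul_cancel₀ _ (ne_of_gt hci)
          nlinarith
      · -- certificate case
        right
        set coeff : ({i // c i = 0} ⊕ ({p // 0 < c p} × {q // c q < 0})) → ι → ℚ :=
          fun i' i => Sum.elim
            (fun i0 : {i // c i = 0} => if i = i0.1 then (1:ℚ) else 0)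
            (fun pq : ({p // 0 < c p} × {q // c q < 0}) =>
              (if i = pq.1.1 then -c pq.2.1 else 0) + (if i = pq.2.1 then c pq.1.1 else 0)) i'
          with hcoeff
        have hcoeff_nonneg : ∀ i' i, 0 ≤ coeff i' i := by
          intro i' i
          rcases i' with i0 | pq
          · simp only [hcoeff, Sum.elim_inl]
            split
            · norm_num
            · exact le_refl 0
          · simp only [hcoeff, Sum.elim_inr]
            have h1 : (0:ℚ) ≤ (if i = pq.1.1 then -c pq.2.1 else 0) := by
              split
              · linarith [pq.2.2]
              · exact le_refl 0
            have h2 : (0:ℚ) ≤ (if i = pq.2.1 then c pq.1.1 else 0) := by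
              split
              · exact le_of_lt pq.1.2
              · exact le_refl 0
            linarith
        refine ⟨fun i => ∑ i', lam' i' * coeff i' i, ?_, ?_, ?_⟩
        · intro i
          exact Finset.sum_nonneg fun i' _ => mul_nonneg (h0 i') (hcoeff_nonneg i' i)
        · obtain ⟨i', hi'⟩ := hne
          have hpos : 0 < lam' i' := lt_of_le_of_ne (h0 i') (Ne.symm hi')
          rcases i' with i0 | pq
          · refine ⟨i0.1, ne_of_gt ?_⟩
            refine Finset.sum_pos' (fun i'' _ => mul_nonneg (h0 i'') (hcoeff_nonneg i'' i0.1)) ?_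
            refine ⟨Sum.inl i0, Finset.mem_univ _, ?_⟩
            have : coeff (Sum.inl i0) i0.1 = 1 := by simp [hcoeff]
            rw [this, mul_one]
            exact hpos
          · refine ⟨pq.2.1, ne_of_gt ?_⟩
            refine Finset.sum_pos' (fun i'' _ => mul_nonneg (h0 i'') (hcoeff_nonneg i'' pq.2.1)) ?_
            refine ⟨Sum.inr pq, Finset.mem_univ _, ?_⟩
            have hcpos : 0 < coeff (Sum.inr pq) pq.2.1 := by
              have he : coeff (Sum.inr pq) pq.2.1
                  = (if pq.2.1 = pq.1.1 then -c pq.2.1 else 0) + c pq.1.1 := by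
                simp only [hcoeff, Sum.elim_inr, if_pos rfl, if_true]
              rw [he]
              have h1 : (0:ℚ) ≤ (if pq.2.1 = pq.1.1 then -c pq.2.1 else 0) := by
                split
                · linarith [pq.2.2]
                · exact le_refl 0
              linarith [pq.1.2]
            exact mul_pos hpos hcpos
        · -- the balancing identity
          have hinner : ∀ i' j, ∑ i, coeff i' i * v i j =
              Sum.elim (fun i0 : {i // c i = 0} => v i0.1 j)
                (fun pq : ({p // 0 < c p} × {q // c q < 0}) =>
                  -c pq.2.1 * v pq.1.1 j + c pq.1.1 * v pq.2.1 j) i' := by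
            intro i' j
            rcases i' with i0 | pq
            · simp only [hcoeff, Sum.elim_inl, ite_mul, one_mul, zero_mul]
              rw [Finset.sum_ite_eq' Finset.univ i0.1 (fun i => v i j)]
              simp
            · simp only [hcoeff, Sum.elim_inr, add_mul, ite_mul, zero_mul]
              rw [Finset.sum_add_distrib,
                Finset.sum_ite_eq' Finset.univ pq.1.1 (fun i => -c pq.2.1 * v i j),
                Finset.sum_ite_eq' Finset.univ pq.2.1 (fun i => c pq.1.1 * v i j)]
              simp
          have hswap : ∀ j, ∑ i, (∑ i', lam' i' * coeff i' i) * v i j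
              = ∑ i', lam' i' * (∑ i, coeff i' i * v i j) := by
            intro j
            simp only [Finset.sum_mul]
            rw [Finset.sum_comm]
            refine Finset.sum_congr rfl fun i' _ => ?_
            rw [Finset.mul_sum]
            refine Finset.sum_congr rfl fun i _ => ?_
            ring
          intro j
          rw [hswap j]
          induction j using Fin.lastCases with
          | last =>
              refine Finset.sum_eq_zero fun i' _ => ?_
              rw [hinner]
              rcases i' with i0 | pq
              · simp only [Sum.elim_inl]
                have : v i0.1 (Fin.last d) = c i0.1 := rfl
                rw [this, i0.2, mul_zero]
              · simp only [Sum.elim_inr]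
                have e1 : v pq.1.1 (Fin.last d) = c pq.1.1 := rfl
                have e2 : v pq.2.1 (Fin.last d) = c pq.2.1 := rfl
                rw [e1, e2]
                ring
          | cast j' =>
              have : ∀ i', lam' i' * (∑ i, coeff i' i * v i j'.castSucc)
                  = lam' i' * v' i' j' := by
                intro i'
                rw [hinner]
                rcases i' with i0 | pq
                · rfl
                · simp only [Sum.elim_inr, hv']
                  have e1 : v pq.1.1 j'.castSucc = a pq.1.1 j' := rfl
                  have e2 : v pq.2.1 j'.castSucc = a pq.2.1 j' := rfl
                  rw [e1, e2]
                  ring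
              rw [Finset.sum_congr rfl fun i' _ => this i']
              exact hsum j'


variable (t : ℝ)

lemma pw_eq_count_sum [DecidableEq X] (w : X → ℝ) (l : List X) (vars : Finset X)
    (hsub : l.toFinset ⊆ vars) :
    pw w l = ∑ x ∈ vars, (l.count x : ℝ) * w x := by
  rw [pw, Finset.sum_list_map_count, Finset.sum_subset hsub]
  · exact Finset.sum_congr rfl fun x _ => by simp [nsmul_eq_mul]
  · intro x _ hx
    have : l.count x = 0 := by
      rw [List.count_eq_zero]
      exact fun hmem => hx (List.mem_toFinset.mpr hmem)
    rw [this]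
    simp

variable (t : ℝ)

theorem finite_solvable
    (hsym : ∀ n : ℕ, 0 < n → ∀ (x : Fin n → X) (π : Equiv.Perm (Fin n)),
      M n (x ∘ π) = M n x)
    (hint : ∀ n k : ℕ, 0 < n → 0 < k → ∀ (x : Fin n → X) (y : Fin k → X),
      min (M n x) (M k y) ≤ M (n + k) (Fin.append x y) ∧
      M (n + k) (Fin.append x y) ≤ max (M n x) (M k y))
    (F : Finset (List X)) (hF : ∀ l ∈ F, l ≠ []) :
    ∃ w : X → ℝ, ∀ l ∈ F, (t < Ml M l → 0 < pw w l) ∧ (Ml M l < t → pw w l < 0) := by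
  classical
  set vars : Finset X := F.biUnion (fun l => l.toFinset) with hvars
  set d := vars.card with hd
  set e : {x // x ∈ vars} ≃ Fin d := vars.equivFin with he
  set G : Finset (List X) := F.filter (fun l => Ml M l ≠ t) with hG
  have hGsub : ∀ i : {l // l ∈ G}, i.1 ∈ F := fun i => (Finset.mem_filter.mp i.2).1
  have hGne : ∀ i : {l // l ∈ G}, Ml M i.1 ≠ t := fun i => (Finset.mem_filter.mp i.2).2
  have hsubvars : ∀ l ∈ F, l.toFinset ⊆ vars := by
    intro l hl x hx
    exact Finset.mem_biUnion.mpr ⟨l, hl, hx⟩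
  set sgn : List X → ℚ := fun l => if t < Ml M l then 1 else -1 with hsgn
  set vv : {l // l ∈ G} → Fin d → ℚ :=
    fun i j => sgn i.1 * (i.1.count (e.symm j).1 : ℚ) with hvv
  rcases gordan d vv with ⟨w', hw'⟩ | ⟨lam, hnn, hex, hbal⟩
  · -- build the weight function
    refine ⟨fun x => if hx : x ∈ vars then ((w' (e ⟨x, hx⟩) : ℚ) : ℝ) else 0, ?_⟩
    intro l hl
    have hsub := hsubvars l hl
    have hpw : pw (fun x => if hx : x ∈ vars then ((w' (e ⟨x, hx⟩) : ℚ) : ℝ) else 0) l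
        = ((∑ j, (l.count (e.symm j).1 : ℚ) * w' j : ℚ) : ℝ) := by
      rw [pw_eq_count_sum _ l vars hsub, ← Finset.sum_coe_sort vars]
      push_cast
      refine Fintype.sum_equiv e _ _ ?_
      intro x
      rw [dif_pos x.2, Equiv.symm_apply_apply]
    constructor
    · intro hlt
      have hlG : l ∈ G := Finset.mem_filter.mpr ⟨hl, ne_of_gt hlt⟩
      have h1 := hw' ⟨l, hlG⟩
      have h2 : ∑ j, vv ⟨l, hlG⟩ j * w' j = ∑ j, (l.count (e.symm j).1 : ℚ) * w' j := by
        refine Finset.sum_congr rfl fun j _ => ?_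
        rw [hvv]
        simp only [hsgn, if_pos hlt]
        ring
      rw [h2] at h1
      rw [hpw]
      exact_mod_cast h1
    · intro hlt
      have hlG : l ∈ G := Finset.mem_filter.mpr ⟨hl, ne_of_lt hlt⟩
      have h1 := hw' ⟨l, hlG⟩
      have h2 : ∑ j, vv ⟨l, hlG⟩ j * w' j = -∑ j, (l.count (e.symm j).1 : ℚ) * w' j := by
        rw [← Finset.sum_neg_distrib]
        refine Finset.sum_congr rfl fun j _ => ?_
        rw [hvv]
        simp only [hsgn, if_neg (not_lt.mpr (le_of_lt hlt))]
        ring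
      rw [h2] at h1
      have h3 : (∑ j, (l.count (e.symm j).1 : ℚ) * w' j) < 0 := by linarith
      rw [hpw]
      exact_mod_cast h3
  · -- certificate: contradiction
    exfalso
    set D : ℕ := ∏ i : {l // l ∈ G}, (lam i).den with hD
    have hDpos : 0 < D := Finset.prod_pos fun i _ => (lam i).pos
    have hint' : ∀ i : {l // l ∈ G}, ∃ m : ℕ, ((m : ℚ)) = lam i * D := by
      intro i
      obtain ⟨m, hm⟩ := Finset.dvd_prod_of_mem (fun i => (lam i).den) (Finset.mem_univ i)
      refine ⟨((lam i).num.toNat * m), ?_⟩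
      have hmQ : ((D : ℕ) : ℚ) = ((lam i).den : ℚ) * (m : ℚ) := by exact_mod_cast hm
      have h1 : lam i * D = ((lam i).num : ℚ) * m := by
        rw [hmQ, ← mul_assoc, Rat.mul_den_eq_num]
      have hnum : 0 ≤ (lam i).num := Rat.num_nonneg.mpr (hnn i)
      have h2 : (((lam i).num.toNat : ℕ) : ℚ) = ((lam i).num : ℚ) := by
        exact_mod_cast Int.toNat_of_nonneg hnum
      rw [Nat.cast_mul, h2, h1]
    choose nn hnn2 using hint'
    have hnpos : ∀ i, lam i ≠ 0 → 0 < nn i := by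
      intro i hi
      have hlp : 0 < lam i := lt_of_le_of_ne (hnn i) (Ne.symm hi)
      have : (0:ℚ) < nn i := by
        rw [hnn2 i]
        positivity
      exact_mod_cast this
    -- count balance
    have hcount : ∀ x : X,
        ∑ i ∈ Finset.univ.filter (fun i : {l // l ∈ G} => t < Ml M i.1),
          nn i * (i.1.count x)
        = ∑ i ∈ Finset.univ.filter (fun i : {l // l ∈ G} => ¬ t < Ml M i.1),
          nn i * (i.1.count x) := by
      intro x
      by_cases hx : x ∈ vars
      · have hb := hbal (e ⟨x, hx⟩)
        have hb2 : ∑ i : {l // l ∈ G}, lam i * (sgn i.1 * (i.1.count x : ℚ)) = 0 := by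
          rw [← hb]
          refine Finset.sum_congr rfl fun i _ => ?_
          simp only [hvv, Equiv.symm_apply_apply]
        have hb3 : ∑ i : {l // l ∈ G}, (nn i : ℚ) * (sgn i.1 * (i.1.count x : ℚ)) = 0 := by
          have := congrArg (fun z : ℚ => z * D) hb2
          simp only [Finset.sum_mul, zero_mul] at this
          rw [← this]
          refine Finset.sum_congr rfl fun i _ => ?_
          rw [hnn2 i]
          ring
        rw [← Finset.sum_filter_add_sum_filter_not Finset.univ
          (fun i : {l // l ∈ G} => t < Ml M i.1)] at hb3
        have hb4 : ∑ i ∈ Finset.univ.filter (fun i : {l // l ∈ G} => t < Ml M i.1),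
            ((nn i : ℚ) * (i.1.count x : ℚ))
            = ∑ i ∈ Finset.univ.filter (fun i : {l // l ∈ G} => ¬ t < Ml M i.1),
            ((nn i : ℚ) * (i.1.count x : ℚ)) := by
          have e1 : ∑ i ∈ Finset.univ.filter (fun i : {l // l ∈ G} => t < Ml M i.1),
              (nn i : ℚ) * (sgn i.1 * (i.1.count x : ℚ))
              = ∑ i ∈ Finset.univ.filter (fun i : {l // l ∈ G} => t < Ml M i.1),
              ((nn i : ℚ) * (i.1.count x : ℚ)) := by
            refine Finset.sum_congr rfl fun i hi => ?_
            rw [hsgn]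
            simp only [if_pos (Finset.mem_filter.mp hi).2]
            ring
          have e2 : ∑ i ∈ Finset.univ.filter (fun i : {l // l ∈ G} => ¬ t < Ml M i.1),
              (nn i : ℚ) * (sgn i.1 * (i.1.count x : ℚ))
              = -∑ i ∈ Finset.univ.filter (fun i : {l // l ∈ G} => ¬ t < Ml M i.1),
              ((nn i : ℚ) * (i.1.count x : ℚ)) := by
            rw [← Finset.sum_neg_distrib]
            refine Finset.sum_congr rfl fun i hi => ?_
            rw [hsgn]
            simp only [if_neg (Finset.mem_filter.mp hi).2]
            ring
          rw [e1, e2] at hb3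
          linarith
        exact_mod_cast hb4
      · have hz : ∀ i : {l // l ∈ G}, i.1.count x = 0 := by
          intro i
          rw [List.count_eq_zero]
          intro hmem
          exact hx (hsubvars i.1 (hGsub i) (List.mem_toFinset.mpr hmem))
        have hz2 : ∀ (s : Finset {l // l ∈ G}), ∑ i ∈ s, nn i * (i.1.count x) = 0 := by
          intro s
          refine Finset.sum_eq_zero fun i _ => ?_
          rw [hz i, Nat.mul_zero]
        rw [hz2, hz2]
    -- build the two flattened lists
    set Lpos : List {l // l ∈ G} :=
      (Finset.univ.filter (fun i : {l // l ∈ G} => t < Ml M i.1)).toList with hLpos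
    set Lneg : List {l // l ∈ G} :=
      (Finset.univ.filter (fun i : {l // l ∈ G} => ¬ t < Ml M i.1)).toList with hLneg
    set LLp : List (List X) := Lpos.flatMap (fun i => List.replicate (nn i) i.1) with hLLp
    set LLn : List (List X) := Lneg.flatMap (fun i => List.replicate (nn i) i.1) with hLLn
    have hcnt : ∀ (L : List {l // l ∈ G}) (x : X),
        (L.flatMap (fun i => List.replicate (nn i) i.1)).flatten.count x
          = (L.map (fun i => nn i * i.1.count x)).sum := by
      intro L x
      induction L with
      | nil => rfl
      | cons a L ih =>
          rw [List.flatMap_cons, List.flatten_append, List.count_append, ih,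
            List.map_cons, List.sum_cons]
          congr 1
          rw [List.count_flatten, List.map_replicate, List.sum_replicate, smul_eq_mul]
    have hcpos : ∀ x, LLp.flatten.count x = ∑ i ∈ Finset.univ.filter
        (fun i : {l // l ∈ G} => t < Ml M i.1), nn i * (i.1.count x) := by
      intro x
      rw [hLLp, hcnt, hLpos, Finset.sum_map_toList]
    have hcneg : ∀ x, LLn.flatten.count x = ∑ i ∈ Finset.univ.filter
        (fun i : {l // l ∈ G} => ¬ t < Ml M i.1), nn i * (i.1.count x) := by
      intro x
      rw [hLLn, hcnt, hLneg, Finset.sum_map_toList]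
    have hperm : LLp.flatten.Perm LLn.flatten := by
      rw [List.perm_iff_count]
      intro x
      rw [hcpos, hcneg]
      exact hcount x
    -- nonemptiness
    obtain ⟨i₀, hi₀⟩ := hex
    have hmem0 : i₀.1 ∈ (if t < Ml M i₀.1 then LLp else LLn) := by
      by_cases hcase : t < Ml M i₀.1
      · rw [if_pos hcase]
        rw [hLLp]
        refine List.mem_flatMap.mpr ⟨i₀, ?_, ?_⟩
        · rw [hLpos, Finset.mem_toList, Finset.mem_filter]
          exact ⟨Finset.mem_univ _, hcase⟩
        · exact List.mem_replicate.mpr ⟨(hnpos i₀ hi₀).ne', rfl⟩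
      · rw [if_neg hcase]
        rw [hLLn]
        refine List.mem_flatMap.mpr ⟨i₀, ?_, ?_⟩
        · rw [hLneg, Finset.mem_toList, Finset.mem_filter]
          exact ⟨Finset.mem_univ _, hcase⟩
        · exact List.mem_replicate.mpr ⟨(hnpos i₀ hi₀).ne', rfl⟩
    have hne0 : i₀.1 ≠ [] := hF i₀.1 (hGsub i₀)
    have hpne : LLp.flatten ≠ [] := by
      by_cases hcase : t < Ml M i₀.1
      · rw [if_pos hcase] at hmem0
        intro hflat
        rw [List.flatten_eq_nil_iff] at hflat
        exact hne0 (hflat i₀.1 hmem0)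
      · -- i₀ is on the negative side; use the permutation
        rw [if_neg hcase] at hmem0
        intro hflat
        have h2 : LLn.flatten = [] := by
          have hp2 := hperm.symm
          rw [hflat] at hp2
          exact List.Perm.eq_nil hp2
        rw [List.flatten_eq_nil_iff] at h2
        exact hne0 (h2 i₀.1 hmem0)
    have hnne : LLn.flatten ≠ [] := by
      intro hflat
      have := hperm
      rw [hflat] at this
      exact hpne (List.Perm.eq_nil this)
    have hLLpne : LLp ≠ [] := by
      intro hc
      rw [hc] at hpne
      exact hpne rfl
    have hLLnne : LLn ≠ [] := by
      intro hc
      rw [hc] at hnne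
      exact hnne rfl
    -- closure
    have hpieces_p : ∀ l ∈ LLp, l ≠ [] ∧ Ml M l ∈ Set.Ioi t := by
      intro l hl
      rw [hLLp] at hl
      obtain ⟨i, hi, hrep⟩ := List.mem_flatMap.mp hl
      obtain ⟨-, rfl⟩ := List.mem_replicate.mp hrep
      rw [hLpos, Finset.mem_toList, Finset.mem_filter] at hi
      exact ⟨hF i.1 (hGsub i), hi.2⟩
    have hpieces_n : ∀ l ∈ LLn, l ≠ [] ∧ Ml M l ∈ Set.Iio t := by
      intro l hl
      rw [hLLn] at hl
      obtain ⟨i, hi, hrep⟩ := List.mem_flatMap.mp hl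
      obtain ⟨-, rfl⟩ := List.mem_replicate.mp hrep
      rw [hLneg, Finset.mem_toList, Finset.mem_filter] at hi
      exact ⟨hF i.1 (hGsub i), lt_of_le_of_ne (not_lt.mp hi.2) (hGne i)⟩
    have hMp : Ml M LLp.flatten ∈ Set.Ioi t :=
      Ml_flatten_mem M hint Set.ordConnected_Ioi LLp hLLpne hpieces_p
    have hMn : Ml M LLn.flatten ∈ Set.Iio t :=
      Ml_flatten_mem M hint Set.ordConnected_Iio LLn hLLnne hpieces_n
    have heq : Ml M LLp.flatten = Ml M LLn.flatten := Ml_perm M hsym hperm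
    rw [heq] at hMp
    exact absurd ((Set.mem_Ioi.mp hMp).trans (Set.mem_Iio.mp hMn)) (lt_irrefl t)


/-- the list consisting of `n` copies of `l` (interleaved) followed by `y`. -/
def repList (n : ℕ) (l : List X) (y : X) : List X :=
  List.ofFn (Fin.append (repBlock n l.get) (fun _ : Fin 1 => y))

lemma repList_ne_nil (n : ℕ) (l : List X) (y : X) : repList n l y ≠ [] := by
  intro h
  have := congrArg List.length h
  rw [repList, List.length_ofFn] at this
  simp at this

lemma Ml_singleton (z : X) : Ml M [z] = M 1 (fun _ => z) := by
  rw [Ml]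
  congr 1
  funext i
  obtain ⟨iv, hiv⟩ := i
  cases iv with
  | zero => rfl
  | succ n => simp at hiv

lemma pw_singleton (w : X → ℝ) (z : X) : pw w [z] = w z := by
  simp [pw]

lemma pw_repList (w : X → ℝ) (n : ℕ) (l : List X) (y : X) :
    pw w (repList n l y) = (n : ℝ) * pw w l + w y := by
  rw [repList, pw_ofFn, Fin.sum_univ_add]
  congr 1
  · calc ∑ i : Fin (l.length * n),
          w (Fin.append (repBlock n l.get) (fun _ : Fin 1 => y) (Fin.castAdd 1 i))
        = ∑ i : Fin (l.length * n), w (repBlock n l.get i) := by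
          refine Finset.sum_congr rfl fun i _ => ?_
          rw [Fin.append_left]
      _ = n • ∑ j, w (l.get j) := sum_repBlock n l.get w
      _ = (n : ℝ) * pw w l := by rw [pw_eq_sum, nsmul_eq_mul]
  · rw [Fin.sum_univ_one, Fin.append_right]

section withhyps
variable
    (hsym : ∀ n : ℕ, 0 < n → ∀ (x : Fin n → X) (π : Equiv.Perm (Fin n)),
      M n (x ∘ π) = M n x)
    (hint : ∀ n k : ℕ, 0 < n → 0 < k → ∀ (x : Fin n → X) (y : Fin k → X),
      min (M n x) (M k y) ≤ M (n + k) (Fin.append x y) ∧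
      M (n + k) (Fin.append x y) ≤ max (M n x) (M k y))
    (hai : ∀ k : ℕ, 0 < k → ∀ (x : Fin k → X) (y : X),
      Tendsto (fun n : ℕ =>
          M (k * n + 1) (Fin.append (repBlock n x) (fun _ : Fin 1 => y)))
        atTop (𝓝 (M k x)))

include hai in
lemma Ml_repList_tendsto {l : List X} (hl : l ≠ []) (y : X) :
    Tendsto (fun n => Ml M (repList n l y)) atTop (𝓝 (Ml M l)) := by
  have h0 : 0 < l.length := List.length_pos_iff.mpr hl
  have h := hai l.length h0 l.get y
  have heq : (fun n => Ml M (repList n l y))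
      = fun n => M (l.length * n + 1)
          (Fin.append (repBlock n l.get) (fun _ : Fin 1 => y)) :=
    funext fun n => Ml_ofFn M _
  rw [heq]
  exact h

include hai in
lemma exists_rep_gt {t : ℝ} {l : List X} (hl : l ≠ []) (y : X) (hgt : t < Ml M l) :
    ∃ n : ℕ, 1 ≤ n ∧ t < Ml M (repList n l y) := by
  have h := Ml_repList_tendsto M hai hl y
  have h2 : ∀ᶠ n in atTop, Ml M (repList n l y) ∈ Set.Ioi t := h (Ioi_mem_nhds hgt)
  obtain ⟨n, hn1, hn2⟩ := (h2.and (eventually_ge_atTop 1)).exists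
  exact ⟨n, hn2, hn1⟩

include hai in
lemma exists_rep_lt {t : ℝ} {l : List X} (hl : l ≠ []) (y : X) (hlt : Ml M l < t) :
    ∃ n : ℕ, 1 ≤ n ∧ Ml M (repList n l y) < t := by
  have h := Ml_repList_tendsto M hai hl y
  have h2 : ∀ᶠ n in atTop, Ml M (repList n l y) ∈ Set.Iio t := h (Iio_mem_nhds hlt)
  obtain ⟨n, hn1, hn2⟩ := (h2.and (eventually_ge_atTop 1)).exists
  exact ⟨n, hn2, hn1⟩

include hsym hint hai in
theorem exists_weight (t : ℝ) (u v : X)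
    (hu : M 1 (fun _ => u) < t) (hv : t < M 1 (fun _ => v)) :
    ∃ w : X → ℝ, ∀ l : List X, l ≠ [] →
      (t < Ml M l → 0 < pw w l) ∧ (Ml M l < t → pw w l < 0) := by
  classical
  have huMl : Ml M [u] < t := by rw [Ml_singleton]; exact hu
  have hvMl : t < Ml M [v] := by rw [Ml_singleton]; exact hv
  -- normalized finite solutions
  have hfin2 : ∀ F : Finset (List X), ∃ w : X → ℝ, w u = -1 ∧
      ∀ l ∈ F, l ≠ [] → (t < Ml M l → 0 < pw w l) ∧ (Ml M l < t → pw w l < 0) := by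
    intro F
    obtain ⟨w0, hw0⟩ := finite_solvable M t hsym hint
      (insert [u] (F.filter (fun l => l ≠ []))) (by
        intro l hl
        rcases Finset.mem_insert.mp hl with h | h
        · subst h; simp
        · exact (Finset.mem_filter.mp h).2)
    have hwu0 : pw w0 [u] < 0 := (hw0 [u] (Finset.mem_insert_self _ _)).2 huMl
    rw [pw_singleton] at hwu0
    set c : ℝ := -1 / w0 u with hc
    have hcpos : 0 < c := by
      rw [hc]
      exact div_pos_of_neg_of_neg (by norm_num) hwu0
    have hpwc : ∀ l : List X, pw (fun x => c * w0 x) l = c * pw w0 l := by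
      intro l
      rw [pw, pw]
      induction l with
      | nil => simp
      | cons a l ih => simp only [List.map_cons, List.sum_cons, ih]; ring
    refine ⟨fun x => c * w0 x, ?_, ?_⟩
    · have hne : w0 u ≠ 0 := ne_of_lt hwu0
      rw [hc]
      field_simp
    · intro l hlF hlne
      have hmem : l ∈ insert [u] (F.filter (fun l => l ≠ [])) :=
        Finset.mem_insert_of_mem (Finset.mem_filter.mpr ⟨hlF, hlne⟩)
      constructor
      · intro hgt
        rw [hpwc]
        exact mul_pos hcpos ((hw0 l hmem).1 hgt)
      · intro hlt
        rw [hpwc]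
        exact mul_neg_of_pos_of_neg hcpos ((hw0 l hmem).2 hlt)
  choose sol hsolu hsolc using hfin2
  -- bounding data
  obtain ⟨nv, hnv1, hnv⟩ := exists_rep_lt M hai (l := [u]) (by simp) v huMl
  have hbu : ∀ x : X, ∃ n : ℕ, 1 ≤ n ∧ Ml M (repList n [u] x) < t :=
    fun x => exists_rep_lt M hai (by simp) x huMl
  have hbv : ∀ x : X, ∃ n : ℕ, 1 ≤ n ∧ t < Ml M (repList n [v] x) :=
    fun x => exists_rep_gt M hai (by simp) x hvMl
  choose nu hnu1 hnu using hbu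
  choose mv hmv1 hmv using hbv
  set B : X → ℝ := fun x => max ((nu x : ℝ)) ((mv x : ℝ) * (nv : ℝ)) with hB
  -- eventual bounds
  have hBnd : ∀ x : X, ∀ᶠ F in (atTop : Filter (Finset (List X))),
      sol F x ∈ Set.Icc (-(B x)) (B x) := by
    intro x
    refine eventually_atTop.mpr ⟨{repList (nu x) [u] x, repList (mv x) [v] x,
      repList nv [u] v}, fun F hF => ?_⟩
    have h1 : pw (sol F) (repList (nu x) [u] x) < 0 := by
      refine (hsolc F _ (hF (by simp)) (repList_ne_nil _ _ _)).2 (hnu x)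
    have h2 : 0 < pw (sol F) (repList (mv x) [v] x) := by
      refine (hsolc F _ (hF (by simp)) (repList_ne_nil _ _ _)).1 (hmv x)
    have h3 : pw (sol F) (repList nv [u] v) < 0 := by
      refine (hsolc F _ (hF (by simp)) (repList_ne_nil _ _ _)).2 hnv
    rw [pw_repList, pw_singleton, hsolu F] at h1 h3
    rw [pw_repList, pw_singleton] at h2
    -- h1 : nu x * (-1) + sol F x < 0;  h3 : nv * (-1) + sol F v < 0
    -- h2 : 0 < mv x * sol F v + sol F x
    have hx1 : sol F x < (nu x : ℝ) := by linarith
    have hv1 : sol F v < (nv : ℝ) := by linarith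
    have hmvpos : (0:ℝ) < (mv x : ℝ) := by exact_mod_cast hmv1 x
    have hx2 : -((mv x : ℝ) * (nv : ℝ)) < sol F x := by nlinarith
    constructor
    · refine le_trans ?_ (le_of_lt hx2)
      rw [hB]
      simp only [neg_le_neg_iff]
      exact le_max_right _ _
    · refine le_trans (le_of_lt hx1) ?_
      rw [hB]
      exact le_max_left _ _
  -- ultrafilter limit
  set U : Ultrafilter (Finset (List X)) := Ultrafilter.of atTop with hUdef
  have hUle : (U : Filter (Finset (List X))) ≤ atTop := Ultrafilter.of_le atTop
  have hlim : ∀ x : X, ∃ cx : ℝ, Tendsto (fun F => sol F x) (U : Filter (Finset (List X))) (𝓝 cx) := by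
    intro x
    obtain ⟨cx, _, hc2⟩ := (isCompact_Icc (a := -(B x)) (b := B x)).ultrafilter_le_nhds
      (U.map (fun F => sol F x)) (by
        rw [Ultrafilter.coe_map, le_principal_iff, mem_map]
        exact hUle (hBnd x))
    exact ⟨cx, hc2⟩
  choose w hw using hlim
  -- pw converges
  have hpwlim : ∀ l : List X,
      Tendsto (fun F => pw (sol F) l) (U : Filter (Finset (List X))) (𝓝 (pw w l)) := by
    intro l
    induction l with
    | nil =>
        simp only [pw, List.map_nil, List.sum_nil]
        exact tendsto_const_nhds
    | cons a l ih =>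
        have he : (fun F => pw (sol F) (a :: l)) = fun F => sol F a + pw (sol F) l :=
          funext fun F => by simp [pw]
        have he2 : pw w (a :: l) = w a + pw w l := by simp [pw]
        rw [he, he2]
        exact (hw a).add ih
  -- nonstrict limits of constraints
  have hnonneg : ∀ l : List X, l ≠ [] → t < Ml M l → 0 ≤ pw w l := by
    intro l hl hgt
    refine ge_of_tendsto (hpwlim l) ?_
    have hev : ∀ᶠ F in (atTop : Filter (Finset (List X))), l ∈ F :=
      eventually_atTop.mpr ⟨{l}, fun F hF => hF (Finset.mem_singleton_self l)⟩
    have hev2 : ∀ᶠ F in (U : Filter (Finset (List X))), l ∈ F := hUle hev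
    exact hev2.mono fun F hF => le_of_lt ((hsolc F l hF hl).1 hgt)
  have hnonpos : ∀ l : List X, l ≠ [] → Ml M l < t → pw w l ≤ 0 := by
    intro l hl hlt
    refine le_of_tendsto (hpwlim l) ?_
    have hev : ∀ᶠ F in (atTop : Filter (Finset (List X))), l ∈ F :=
      eventually_atTop.mpr ⟨{l}, fun F hF => hF (Finset.mem_singleton_self l)⟩
    have hev2 : ∀ᶠ F in (U : Filter (Finset (List X))), l ∈ F := hUle hev
    exact hev2.mono fun F hF => le_of_lt ((hsolc F l hF hl).2 hlt)
  -- w u = -1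
  have hwu : w u = -1 := by
    have hconst : (fun F => sol F u) = fun _ => (-1 : ℝ) := funext hsolu
    have : Tendsto (fun F => sol F u) (U : Filter (Finset (List X))) (𝓝 (-1)) := by
      rw [hconst]
      exact tendsto_const_nhds
    exact tendsto_nhds_unique (hw u) this
  -- w v > 0
  obtain ⟨kv, hkv1, hkv⟩ := exists_rep_gt M hai (l := [v]) (by simp) u hvMl
  have hwv : 0 < w v := by
    have h1 : 0 ≤ pw w (repList kv [v] u) := hnonneg _ (repList_ne_nil _ _ _) hkv
    rw [pw_repList, pw_singleton, hwu] at h1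
    have hkvpos : (0:ℝ) < (kv : ℝ) := by exact_mod_cast hkv1
    nlinarith
  -- conclusion
  refine ⟨w, fun l hl => ⟨?_, ?_⟩⟩
  · intro hgt
    obtain ⟨n, hn1, hn⟩ := exists_rep_gt M hai hl u hgt
    have h1 : 0 ≤ pw w (repList n l u) := hnonneg _ (repList_ne_nil _ _ _) hn
    rw [pw_repList, hwu] at h1
    have hnpos : (0:ℝ) < (n : ℝ) := by exact_mod_cast hn1
    nlinarith
  · intro hlt
    obtain ⟨m, hm1, hm⟩ := exists_rep_lt M hai hl v hlt
    have h1 : pw w (repList m l v) ≤ 0 := hnonpos _ (repList_ne_nil _ _ _) hm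
    rw [pw_repList] at h1
    have hmpos : (0:ℝ) < (m : ℝ) := by exact_mod_cast hm1
    nlinarith

end withhyps

end PsiAux

/-- Existence direction of the characterisation of generalized ψ-estimators:
a symmetric, internal, asymptotically idempotent `M` with the range conditions
is the estimator family of some `ψ ∈ Ψ(X,Θ)` with property [T]. -/
theorem exists_psi_of_symm_internal_asympIdem
    {X : Type*} [Nonempty X] (Θ : Set ℝ)
    (hΘo : IsOpen Θ) (hΘc : Θ.OrdConnected) (hΘnd : ∃ s ∈ Θ, ∃ t ∈ Θ, s < t)
    (M : ∀ n : ℕ, (Fin n → X) → ℝ)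
    (hMΘ : ∀ n : ℕ, 0 < n → ∀ x : Fin n → X, M n x ∈ Θ)
    (hinf : sInf (Set.range fun x : X => (M 1 (fun _ => x) : EReal))
        = sInf (Real.toEReal '' Θ))
    (hsup : sSup (Set.range fun x : X => (M 1 (fun _ => x) : EReal))
        = sSup (Real.toEReal '' Θ))
    (hsym : ∀ n : ℕ, 0 < n → ∀ (x : Fin n → X) (π : Equiv.Perm (Fin n)),
      M n (x ∘ π) = M n x)
    (hint : ∀ n k : ℕ, 0 < n → 0 < k → ∀ (x : Fin n → X) (y : Fin k → X),
      min (M n x) (M k y) ≤ M (n + k) (Fin.append x y) ∧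
      M (n + k) (Fin.append x y) ≤ max (M n x) (M k y))
    (hai : ∀ k : ℕ, 0 < k → ∀ (x : Fin k → X) (y : X),
      Tendsto (fun n : ℕ =>
          M (k * n + 1) (Fin.append (repBlock n x) (fun _ : Fin 1 => y)))
        atTop (𝓝 (M k x))) :
    ∃ ψ : X → ℝ → ℝ, PsiClass Θ ψ ∧ ∀ n : ℕ, 0 < n → IsThetaEst Θ ψ n (M n) := by
  classical
  have hlow : ∀ t ∈ Θ, ∃ u : X, M 1 (fun _ => u) < t := by
    intro t ht
    obtain ⟨ε, hε, hball⟩ := Metric.isOpen_iff.mp hΘo t ht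
    have ht' : t - ε/2 ∈ Θ := by
      apply hball
      rw [Metric.mem_ball, Real.dist_eq]
      have he : t - ε/2 - t = -(ε/2) := by ring
      rw [he, abs_neg, abs_of_pos (by linarith)]
      linarith
    have h1 : sInf (Real.toEReal '' Θ) ≤ ((t - ε/2 : ℝ) : EReal) :=
      sInf_le ⟨t - ε/2, ht', rfl⟩
    have h2 : sInf (Set.range fun x : X => (M 1 (fun _ => x) : EReal)) < (t : EReal) := by
      rw [hinf]
      refine lt_of_le_of_lt h1 ?_
      exact_mod_cast (by linarith : t - ε/2 < t)
    obtain ⟨a, ⟨x, rfl⟩, ha⟩ := sInf_lt_iff.mp h2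
    refine ⟨x, ?_⟩
    have ha2 : ((M 1 fun _ => x : ℝ) : EReal) < (t : EReal) := ha
    exact_mod_cast ha2
  have hhigh : ∀ t ∈ Θ, ∃ v : X, t < M 1 (fun _ => v) := by
    intro t ht
    obtain ⟨ε, hε, hball⟩ := Metric.isOpen_iff.mp hΘo t ht
    have ht' : t + ε/2 ∈ Θ := by
      apply hball
      rw [Metric.mem_ball, Real.dist_eq]
      have he : t + ε/2 - t = ε/2 := by ring
      rw [he, abs_of_pos (by linarith)]
      linarith
    have h1 : ((t + ε/2 : ℝ) : EReal) ≤ sSup (Real.toEReal '' Θ) :=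
      le_sSup ⟨t + ε/2, ht', rfl⟩
    have h2 : (t : EReal) < sSup (Set.range fun x : X => (M 1 (fun _ => x) : EReal)) := by
      rw [hsup]
      refine lt_of_lt_of_le ?_ h1
      exact_mod_cast (by linarith : t < t + ε/2)
    obtain ⟨a, ⟨x, rfl⟩, ha⟩ := lt_sSup_iff.mp h2
    refine ⟨x, ?_⟩
    have ha2 : (t : EReal) < ((M 1 fun _ => x : ℝ) : EReal) := ha
    exact_mod_cast ha2
  have main : ∀ t, t ∈ Θ → ∃ w : X → ℝ, ∀ l : List X, l ≠ [] →
      (t < PsiAux.Ml M l → 0 < PsiAux.pw w l) ∧ (PsiAux.Ml M l < t → PsiAux.pw w l < 0) := by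
    intro t ht
    obtain ⟨u, hu⟩ := hlow t ht
    obtain ⟨v, hv⟩ := hhigh t ht
    exact PsiAux.exists_weight M hsym hint hai t u v hu hv
  let W : ℝ → X → ℝ := fun t => if h : t ∈ Θ then (main t h).choose else 0
  have hWt : ∀ t (ht : t ∈ Θ), W t = (main t ht).choose := by
    intro t ht
    show (if h : t ∈ Θ then (main t h).choose else 0) = (main t ht).choose
    exact dif_pos ht
  refine ⟨fun x t => W t x, ?_, ?_⟩
  · -- PsiClass
    intro x
    have hm : M 1 (fun _ => x) ∈ Θ := hMΘ 1 Nat.one_pos _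
    obtain ⟨ε, hε, hball⟩ := Metric.isOpen_iff.mp hΘo _ hm
    have htp : M 1 (fun _ => x) - ε/2 ∈ Θ := by
      apply hball
      rw [Metric.mem_ball, Real.dist_eq]
      have he : M 1 (fun _ => x) - ε/2 - M 1 (fun _ => x) = -(ε/2) := by ring
      rw [he, abs_neg, abs_of_pos (by linarith)]
      linarith
    have htm : M 1 (fun _ => x) + ε/2 ∈ Θ := by
      apply hball
      rw [Metric.mem_ball, Real.dist_eq]
      have he : M 1 (fun _ => x) + ε/2 - M 1 (fun _ => x) = ε/2 := by ring
      rw [he, abs_of_pos (by linarith)]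
      linarith
    refine ⟨M 1 (fun _ => x) - ε/2, htp, M 1 (fun _ => x) + ε/2, htm, by linarith, ?_, ?_⟩
    · show 0 < W (M 1 (fun _ => x) - ε/2) x
      rw [hWt _ htp]
      have h2 := ((main _ htp).choose_spec [x] (by simp)).1 (by
        rw [PsiAux.Ml_singleton]
        linarith)
      rw [PsiAux.pw_singleton] at h2
      exact h2
    · show W (M 1 (fun _ => x) + ε/2) x < 0
      rw [hWt _ htm]
      have h2 := ((main _ htm).choose_spec [x] (by simp)).2 (by
        rw [PsiAux.Ml_singleton]
        linarith)
      rw [PsiAux.pw_singleton] at h2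
      exact h2
  · -- IsThetaEst
    intro n hn x
    have hne : List.ofFn x ≠ [] := by
      intro hc
      have := congrArg List.length hc
      rw [List.length_ofFn] at this
      simp at this
      omega
    refine ⟨hMΘ n hn x, ?_, ?_⟩
    · intro t ht hlt
      have h2 := ((main t ht).choose_spec (List.ofFn x) hne).1 (by
        rw [PsiAux.Ml_ofFn]; exact hlt)
      rw [PsiAux.pw_ofFn] at h2
      have he : ∑ i, (main t ht).choose (x i) = ∑ i, W t (x i) := by
        rw [hWt t ht]
      calc (0:ℝ) < ∑ i, (main t ht).choose (x i) := h2
        _ = ∑ i, W t (x i) := he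
    · intro t ht hlt
      have h2 := ((main t ht).choose_spec (List.ofFn x) hne).2 (by
        rw [PsiAux.Ml_ofFn]; exact hlt)
      rw [PsiAux.pw_ofFn] at h2
      have he : ∑ i, (main t ht).choose (x i) = ∑ i, W t (x i) := by
        rw [hWt t ht]
      calc ∑ i, W t (x i) = ∑ i, (main t ht).choose (x i) := he.symm
        _ < 0 := h2
end
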